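/- arXiv:2410.17998 — 9 statements merged into one kernel-verified Lean document; each statement's English description precedes it below -/
import Mathlib

section
/- Let ρ_X, ρ_W be probability measures, φ : X × W → ℝ square-integrable with respect to ρ_X ⊗ ρ_W, k(x,y) = ∫ φ(x,w)φ(y,w) dρ_W(w), and m(n) = ∫ ∏_{l=1}^{n} k(x_l,x_{l+1}) dρ_X(x_1)⋯dρ_X(x_n) with x_{n+1} = x_1. Let x_1,…,x_P be i.i.d. with law ρ_X and w_1,…,w_Q be i.i.d. with law ρ_W, all mutually independent, with n ≤ P and n ≤ Q, and define the estimator m̂(n) = (1/(C(P,n)·C(Q,n))) · Σ_{1 ≤ i_1 < ⋯ < i_n ≤ P} Σ_{1 ≤ α_1 < ⋯ < α_n ≤ Q} ∏_{l=1}^{n} φ(x_{i_l}, w_{α_l})·φ(x_{i_{l+1}}, w_{α_l}) with i_{n+1} = i_1, where C(·,·) denotes the binomial coefficient. Then E[ m̂(n) ] = m(n), i.e. m̂(n) is an unbiased estimator of the n-th spectral moment. -/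
open MeasureTheory

open scoped Classical in
/-- The moment estimator `m̂(n)`: the average of the cyclic products
`∏_l φ(x_{i_l}, w_{α_l}) φ(x_{i_{l+1}}, w_{α_l})` (with the cyclic convention
`i_{n+1} = i_1`, realized by addition in `Fin n`) over all strictly increasing
index tuples, normalized by `C(P,n) * C(Q,n)`. -/
noncomputable def momentEstimator {X W : Type*} (φ : X × W → ℝ) {P Q : ℕ} (n : ℕ) [NeZero n]
    (x : Fin P → X) (w : Fin Q → W) : ℝ :=
  ((P.choose n : ℝ) * (Q.choose n : ℝ))⁻¹ *
    ∑ i ∈ Finset.univ.filter fun i : Fin n → Fin P => StrictMono i,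
      ∑ a ∈ Finset.univ.filter fun a : Fin n → Fin Q => StrictMono a,
        ∏ l : Fin n, φ (x (i l), w (a l)) * φ (x (i (l + 1)), w (a l))

section Aux

open scoped ENNReal

variable {α : Type*} [MeasurableSpace α]

open scoped Classical in
/-- The number of strictly monotone maps `Fin n → Fin k` is `k.choose n`. -/
lemma card_strictMono_maps (n k : ℕ) :
    (Finset.univ.filter fun f : Fin n → Fin k => StrictMono f).card = k.choose n := by
  have hcard : ((Finset.univ : Finset (Fin k)).powersetCard n).card = k.choose n := by
    rw [Finset.card_powersetCard, Finset.card_univ, Fintype.card_fin]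
  rw [← hcard]
  refine Finset.card_bij' (fun f _ => Finset.image f Finset.univ)
    (fun s hs => ⇑(s.orderEmbOfFin (Finset.mem_powersetCard.1 hs).2)) ?_ ?_ ?_ ?_
  · intro f hf
    refine Finset.mem_powersetCard.2 ⟨Finset.subset_univ _, ?_⟩
    rw [Finset.card_image_of_injective _ ((Finset.mem_filter.1 hf).2).injective,
      Finset.card_univ, Fintype.card_fin]
  · intro s hs
    exact Finset.mem_filter.2 ⟨Finset.mem_univ _,
      (s.orderEmbOfFin (Finset.mem_powersetCard.1 hs).2).strictMono⟩
  · intro f hf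
    exact (Finset.orderEmbOfFin_unique _
      (fun x => Finset.mem_image_of_mem f (Finset.mem_univ x))
      (Finset.mem_filter.1 hf).2).symm
  · intro s hs
    apply Finset.coe_injective
    rw [Finset.coe_image, Finset.coe_univ, Set.image_univ, Finset.range_orderEmbOfFin]

/-- Precomposition with an injective map is measure preserving between iid product
measures. -/
lemma measurePreserving_comp_pi {ι ι' : Type*} [Fintype ι] [Fintype ι'] [DecidableEq ι]
    (μ : Measure α) [IsProbabilityMeasure μ] {i : ι' → ι} (hi : Function.Injective i) :
    MeasurePreserving (fun x : ι → α => x ∘ i)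
      (Measure.pi fun _ => μ) (Measure.pi fun _ => μ) := by
  have hmeas : Measurable fun x : ι → α => x ∘ i :=
    measurable_pi_lambda _ fun l => measurable_pi_apply (i l)
  refine ⟨hmeas, ?_⟩
  refine (Measure.pi_eq fun s hs => ?_).symm
  rw [Measure.map_apply hmeas (MeasurableSet.univ_pi hs)]
  have hpre : (fun x : ι → α => x ∘ i) ⁻¹' Set.pi Set.univ s
      = Set.pi Set.univ (fun j => ⋂ (l : ι') (_ : i l = j), s l) := by
    ext x
    simp only [Set.mem_preimage, Set.mem_pi, Set.mem_univ, forall_true_left, Set.mem_iInter,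
      Function.comp_apply]
    constructor
    · rintro h j l rfl; exact h l
    · intro h l; exact h (i l) l rfl
  rw [hpre, Measure.pi_pi]
  have ht : ∀ l : ι', (⋂ (l' : ι') (_ : i l' = i l), s l') = s l := by
    intro l
    ext z
    simp only [Set.mem_iInter]
    exact ⟨fun h => h l rfl, fun hz l' hl' => (hi hl').symm ▸ hz⟩
  calc ∏ j : ι, μ (⋂ (l : ι') (_ : i l = j), s l)
      = ∏ j ∈ Finset.univ.image i, μ (⋂ (l : ι') (_ : i l = j), s l) := by
        refine (Finset.prod_subset (Finset.subset_univ _) fun j _ hj => ?_).symm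
        have hj' : (⋂ (l : ι') (_ : i l = j), s l) = Set.univ := by
          ext z
          simp only [Set.mem_iInter, Set.mem_univ, iff_true]
          intro l hl
          exact absurd (Finset.mem_image.2 ⟨l, Finset.mem_univ l, hl⟩) hj
        rw [hj', measure_univ]
    _ = ∏ l : ι', μ (⋂ (l' : ι') (_ : i l' = i l), s l') :=
        Finset.prod_image fun a _ b _ h => hi h
    _ = ∏ l : ι', μ (s l) := Finset.prod_congr rfl fun l _ => by rw [ht l]

/-- Evaluation at a coordinate is measure preserving from the iid product measure. -/
lemma measurePreserving_eval_pi {ι : Type*} [Fintype ι]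
    (μ : Measure α) [IsProbabilityMeasure μ] (l : ι) :
    MeasurePreserving (fun x : ι → α => x l) (Measure.pi fun _ => μ) μ := by
  classical
  have h1 := measurePreserving_comp_pi (ι' := Fin 1) μ
    (i := fun _ => l) (fun a b _ => Subsingleton.elim a b)
  have h2 := measurePreserving_funUnique μ (Fin 1)
  exact h2.comp h1

/-- Tonelli for a product of functions of separate coordinates, `ℝ≥0∞` version. -/
lemma lintegral_pi_prod (μ : Measure α) [SigmaFinite μ] :
    ∀ {n : ℕ} {f : Fin n → α → ℝ≥0∞}, (∀ i, Measurable (f i)) →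
      ∫⁻ x : Fin n → α, ∏ i, f i (x i) ∂(Measure.pi fun _ => μ) = ∏ i, ∫⁻ y, f i y ∂μ := by
  intro n
  induction n with
  | zero =>
      intro f _
      simp only [Finset.univ_eq_empty, Finset.prod_empty]
      rw [lintegral_one, Measure.pi_univ]
      simp
  | succ n ih =>
      intro f hf
      rw [← ((measurePreserving_piFinSuccAbove (fun _ : Fin (n + 1) => μ) 0).symm).lintegral_comp_emb
        (MeasurableEquiv.measurableEmbedding _)]
      simp_rw [MeasurableEquiv.piFinSuccAbove_symm_apply]
      simp only [Fin.insertNthEquiv_apply]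
      simp_rw [Fin.prod_univ_succ, Fin.insertNth_zero', Fin.cons_zero, Fin.cons_succ]
      exact (lintegral_prod_mul (f := f 0) (g := fun v : Fin n → α => ∏ j : Fin n, f j.succ (v j))
        (hf 0).aemeasurable
        (Finset.measurable_prod _ fun j _ =>
          (hf j.succ).comp (measurable_pi_apply j)).aemeasurable).trans
        (by rw [ih fun j => hf j.succ])

end Aux

section Key

open scoped ENNReal

variable {X W : Type*} [MeasurableSpace X] [MeasurableSpace W]

open scoped Classical in
lemma momentEstimator_unbiased_of_measurable
    (ρX : Measure X) (ρW : Measure W)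
    [IsProbabilityMeasure ρX] [IsProbabilityMeasure ρW]
    (ψ : X × W → ℝ) (hm : Measurable ψ) (hψ : MemLp ψ 2 (ρX.prod ρW))
    (n : ℕ) [NeZero n] (P Q : ℕ) (hP : n ≤ P) (hQ : n ≤ Q) :
    ∫ p : (Fin P → X) × (Fin Q → W), momentEstimator ψ n p.1 p.2
        ∂((Measure.pi fun _ => ρX).prod (Measure.pi fun _ => ρW))
      = ∫ x : Fin n → X,
          ∏ l : Fin n, ∫ w, ψ (x l, w) * ψ (x (l + 1), w) ∂ρW
          ∂(Measure.pi fun _ => ρX) := by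
  set μn : Measure (Fin n → X) := Measure.pi fun _ => ρX with hμn
  set νn : Measure (Fin n → W) := Measure.pi fun _ => ρW with hνn
  set μP : Measure (Fin P → X) := Measure.pi fun _ => ρX with hμP
  set νQ : Measure (Fin Q → W) := Measure.pi fun _ => ρW with hνQ
  set H : (Fin n → X) × (Fin n → W) → ℝ :=
    fun p => ∏ l : Fin n, ψ (p.1 l, p.2 l) * ψ (p.1 (l + 1), p.2 l) with hH
  have hHm : Measurable H := by
    refine Finset.measurable_prod _ fun l _ => Measurable.mul ?_ ?_
    · exact hm.comp (((measurable_pi_apply l).comp measurable_fst).prodMk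
        ((measurable_pi_apply l).comp measurable_snd))
    · exact hm.comp (((measurable_pi_apply (l + 1)).comp measurable_fst).prodMk
        ((measurable_pi_apply l).comp measurable_snd))
  -- finiteness of the second moment
  have hB : ∫⁻ z, (‖ψ z‖₊ : ℝ≥0∞) ^ (2 : ℝ) ∂(ρX.prod ρW) < ⊤ := by
    have h2 := lintegral_rpow_enorm_lt_top_of_eLpNorm_lt_top (f := ψ) (μ := ρX.prod ρW)
      (p := 2) two_ne_zero (by norm_num) hψ.2
    exact (by simpa using h2 : ∫⁻ a, ‖ψ a‖ₑ ^ (2 : ℝ) ∂(ρX.prod ρW) < ⊤)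
  set G : X → ℝ≥0∞ := fun x0 => ∫⁻ w0, (‖ψ (x0, w0)‖₊ : ℝ≥0∞) ^ (2 : ℝ) ∂ρW with hG
  have hGm : Measurable G :=
    Measurable.lintegral_prod_right (hm.nnnorm.coe_nnreal_ennreal.pow_const _)
  have hGfin : ∫⁻ x0, G x0 ∂ρX < ⊤ := by
    rw [hG, ← lintegral_prod _ (hm.nnnorm.coe_nnreal_ennreal.pow_const _).aemeasurable]
    exact hB
  -- integrability of H
  have hHint : Integrable H (μn.prod νn) := by
    refine ⟨hHm.aestronglyMeasurable, ?_⟩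
    have hnorm : ∀ p : (Fin n → X) × (Fin n → W),
        (‖H p‖₊ : ℝ≥0∞)
          = ∏ l : Fin n, (‖ψ (p.1 l, p.2 l)‖₊ : ℝ≥0∞) * (‖ψ (p.1 (l + 1), p.2 l)‖₊ : ℝ≥0∞) := by
      intro p
      rw [hH]
      push_cast [nnnorm_prod, nnnorm_mul]
      rfl
    have hmeas' : Measurable fun p : (Fin n → X) × (Fin n → W) =>
        ∏ l : Fin n, (‖ψ (p.1 l, p.2 l)‖₊ : ℝ≥0∞) * (‖ψ (p.1 (l + 1), p.2 l)‖₊ : ℝ≥0∞) := by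
      refine Finset.measurable_prod _ fun l _ => Measurable.mul
        (f := fun p : (Fin n → X) × (Fin n → W) => (‖ψ (p.1 l, p.2 l)‖₊ : ℝ≥0∞))
        (g := fun p : (Fin n → X) × (Fin n → W) => (‖ψ (p.1 (l + 1), p.2 l)‖₊ : ℝ≥0∞)) ?_ ?_
      · exact (hm.comp (((measurable_pi_apply l).comp measurable_fst).prodMk
          ((measurable_pi_apply l).comp measurable_snd))).nnnorm.coe_nnreal_ennreal
      · exact (hm.comp (((measurable_pi_apply (l + 1)).comp measurable_fst).prodMk
          ((measurable_pi_apply l).comp measurable_snd))).nnnorm.coe_nnreal_ennreal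
    show ∫⁻ p, (‖H p‖₊ : ℝ≥0∞) ∂(μn.prod νn) < ⊤
    calc ∫⁻ p, (‖H p‖₊ : ℝ≥0∞) ∂(μn.prod νn)
        = ∫⁻ p, ∏ l : Fin n,
            (‖ψ (p.1 l, p.2 l)‖₊ : ℝ≥0∞) * (‖ψ (p.1 (l + 1), p.2 l)‖₊ : ℝ≥0∞)
            ∂(μn.prod νn) := lintegral_congr hnorm
      _ = ∫⁻ y, ∫⁻ v, ∏ l : Fin n,
            (‖ψ (y l, v l)‖₊ : ℝ≥0∞) * (‖ψ (y (l + 1), v l)‖₊ : ℝ≥0∞) ∂νn ∂μn :=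
          lintegral_prod _ hmeas'.aemeasurable
      _ ≤ ∫⁻ y, ∏ l : Fin n, G (y l) ∂μn := by
          refine lintegral_mono fun y => ?_
          have hev : ∀ l : Fin n, Measurable fun w0 => (‖ψ (y l, w0)‖₊ : ℝ≥0∞) :=
            fun l => (hm.comp measurable_prodMk_left).nnnorm.coe_nnreal_ennreal
          calc ∫⁻ v, ∏ l : Fin n,
                (‖ψ (y l, v l)‖₊ : ℝ≥0∞) * (‖ψ (y (l + 1), v l)‖₊ : ℝ≥0∞) ∂νn
              = ∏ l : Fin n, ∫⁻ w0,
                  (‖ψ (y l, w0)‖₊ : ℝ≥0∞) * (‖ψ (y (l + 1), w0)‖₊ : ℝ≥0∞) ∂ρW :=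
                lintegral_pi_prod ρW fun l => (hev l).mul (hev (l + 1))
            _ ≤ ∏ l : Fin n, G (y l) ^ (1 / 2 : ℝ) * G (y (l + 1)) ^ (1 / 2 : ℝ) := by
                refine Finset.prod_le_prod' fun l _ => ?_
                have hH2 := ENNReal.lintegral_mul_le_Lp_mul_Lq ρW
                  (p := 2) (q := 2) ⟨by norm_num, by norm_num, by norm_num⟩
                  (hev l).aemeasurable (hev (l + 1)).aemeasurable
                simpa [hG, Pi.mul_apply] using hH2
            _ = ∏ l : Fin n, G (y l) := by
                rw [Finset.prod_mul_distrib]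
                have h2 : ∏ l : Fin n, G (y (l + 1)) ^ (1 / 2 : ℝ)
                    = ∏ l : Fin n, G (y l) ^ (1 / 2 : ℝ) :=
                  Fintype.prod_equiv (Equiv.addRight (1 : Fin n)) _ _ fun l => rfl
                rw [h2, ← Finset.prod_mul_distrib]
                refine Finset.prod_congr rfl fun l _ => ?_
                rw [← ENNReal.rpow_add_of_nonneg _ _ (by norm_num) (by norm_num)]
                norm_num
      _ = ∏ _l : Fin n, ∫⁻ x0, G x0 ∂ρX := lintegral_pi_prod ρX fun _ => hGm
      _ < ⊤ := by
          rw [Finset.prod_const]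
          exact ENNReal.pow_lt_top hGfin
  -- pushforward along strictly monotone reindexings
  have hMP : ∀ (i : Fin n → Fin P) (a : Fin n → Fin Q), StrictMono i → StrictMono a →
      MeasurePreserving (fun p : (Fin P → X) × (Fin Q → W) => (p.1 ∘ i, p.2 ∘ a))
        (μP.prod νQ) (μn.prod νn) := fun i a hi ha =>
    (measurePreserving_comp_pi ρX hi.injective).prod
      (measurePreserving_comp_pi ρW ha.injective)
  have hintF : ∀ (i : Fin n → Fin P) (a : Fin n → Fin Q), StrictMono i → StrictMono a →
      Integrable (fun p : (Fin P → X) × (Fin Q → W) =>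
        ∏ l : Fin n, ψ (p.1 (i l), p.2 (a l)) * ψ (p.1 (i (l + 1)), p.2 (a l)))
        (μP.prod νQ) := by
    intro i a hi ha
    exact ((hMP i a hi ha).integrable_comp hHm.aestronglyMeasurable).2 hHint
  have hvalF : ∀ (i : Fin n → Fin P) (a : Fin n → Fin Q), StrictMono i → StrictMono a →
      ∫ p, (∏ l : Fin n, ψ (p.1 (i l), p.2 (a l)) * ψ (p.1 (i (l + 1)), p.2 (a l)))
          ∂(μP.prod νQ)
        = ∫ p, H p ∂(μn.prod νn) := by
    intro i a hi ha
    rw [← (hMP i a hi ha).map_eq,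
      integral_map (hMP i a hi ha).measurable.aemeasurable hHm.aestronglyMeasurable]
    rfl
  -- the value of the common integral
  have hHval : ∫ p, H p ∂(μn.prod νn)
      = ∫ y : Fin n → X, ∏ l : Fin n, ∫ w0, ψ (y l, w0) * ψ (y (l + 1), w0) ∂ρW ∂μn := by
    rw [integral_prod _ hHint]
    refine integral_congr_ae (Filter.Eventually.of_forall fun y => ?_)
    letI : MeasureSpace W := ⟨ρW⟩
    haveI : SigmaFinite (volume : Measure W) := inferInstanceAs (SigmaFinite ρW)
    exact integral_fintype_prod_eq_prod
      (fun l w0 => ψ (y l, w0) * ψ (y (l + 1), w0))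
  -- put everything together
  simp only [momentEstimator]
  rw [integral_const_mul]
  rw [integral_finset_sum _ fun i hi =>
    integrable_finset_sum _ fun a ha =>
      hintF i a (Finset.mem_filter.1 hi).2 (Finset.mem_filter.1 ha).2]
  have hsum : ∀ i ∈ Finset.univ.filter fun i : Fin n → Fin P => StrictMono i,
      ∫ p, (∑ a ∈ Finset.univ.filter fun a : Fin n → Fin Q => StrictMono a,
          ∏ l : Fin n, ψ (p.1 (i l), p.2 (a l)) * ψ (p.1 (i (l + 1)), p.2 (a l)))
          ∂(μP.prod νQ)
        = (Q.choose n : ℝ) *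
            (∫ y : Fin n → X, ∏ l : Fin n, ∫ w0, ψ (y l, w0) * ψ (y (l + 1), w0) ∂ρW ∂μn) := by
    intro i hi
    rw [integral_finset_sum _ fun a ha =>
      hintF i a (Finset.mem_filter.1 hi).2 (Finset.mem_filter.1 ha).2]
    have : ∀ a ∈ Finset.univ.filter fun a : Fin n → Fin Q => StrictMono a,
        ∫ p, (∏ l : Fin n, ψ (p.1 (i l), p.2 (a l)) * ψ (p.1 (i (l + 1)), p.2 (a l)))
            ∂(μP.prod νQ)
          = ∫ y : Fin n → X, ∏ l : Fin n, ∫ w0, ψ (y l, w0) * ψ (y (l + 1), w0) ∂ρW ∂μn := by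
      intro a ha
      rw [hvalF i a (Finset.mem_filter.1 hi).2 (Finset.mem_filter.1 ha).2, hHval]
    rw [Finset.sum_congr rfl this, Finset.sum_const, card_strictMono_maps, nsmul_eq_mul]
  rw [Finset.sum_congr rfl hsum, Finset.sum_const, card_strictMono_maps, nsmul_eq_mul]
  have hPc : (P.choose n : ℝ) ≠ 0 := by
    exact_mod_cast (Nat.choose_pos hP).ne'
  have hQc : (Q.choose n : ℝ) ≠ 0 := by
    exact_mod_cast (Nat.choose_pos hQ).ne'
  field_simp

end Key

/-- The estimator `m̂(n)` is an unbiased estimator of the `n`-th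
spectral moment `m(n) = ∫ ∏_l k(x_l, x_{l+1}) dρX⋯dρX` of the kernel integral
operator, where `k(x,y) = ∫ φ(x,w) φ(y,w) dρW`. -/
theorem momentEstimator_unbiased
    {X W : Type*} [MeasurableSpace X] [MeasurableSpace W]
    (ρX : Measure X) (ρW : Measure W)
    [IsProbabilityMeasure ρX] [IsProbabilityMeasure ρW]
    (φ : X × W → ℝ) (hφ : MemLp φ 2 (ρX.prod ρW))
    (n : ℕ) [NeZero n] (P Q : ℕ) (hP : n ≤ P) (hQ : n ≤ Q) :
    ∫ p : (Fin P → X) × (Fin Q → W), momentEstimator φ n p.1 p.2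
        ∂((Measure.pi fun _ => ρX).prod (Measure.pi fun _ => ρW))
      = ∫ x : Fin n → X,
          ∏ l : Fin n, ∫ w, φ (x l, w) * φ (x (l + 1), w) ∂ρW
          ∂(Measure.pi fun _ => ρX) := by
  have hsm := hφ.1
  set ψ : X × W → ℝ := hsm.mk φ with hψdef
  have hmeas : Measurable ψ := hsm.stronglyMeasurable_mk.measurable
  have hae : φ =ᵐ[ρX.prod ρW] ψ := hsm.ae_eq_mk
  have hψ : MemLp ψ 2 (ρX.prod ρW) := hφ.ae_eq hae
  have hL : ∫ p : (Fin P → X) × (Fin Q → W), momentEstimator φ n p.1 p.2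
        ∂((Measure.pi fun _ => ρX).prod (Measure.pi fun _ => ρW))
      = ∫ p : (Fin P → X) × (Fin Q → W), momentEstimator ψ n p.1 p.2
        ∂((Measure.pi fun _ => ρX).prod (Measure.pi fun _ => ρW)) := by
    have hev : ∀ (j : Fin P) (b : Fin Q),
        ∀ᵐ p : (Fin P → X) × (Fin Q → W)
          ∂((Measure.pi fun _ => ρX).prod (Measure.pi fun _ => ρW)),
          φ (p.1 j, p.2 b) = ψ (p.1 j, p.2 b) := by
      intro j b
      have hmp : MeasurePreserving
          (fun p : (Fin P → X) × (Fin Q → W) => (p.1 j, p.2 b))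
          ((Measure.pi fun _ => ρX).prod (Measure.pi fun _ => ρW)) (ρX.prod ρW) :=
        (measurePreserving_eval_pi ρX j).prod (measurePreserving_eval_pi ρW b)
      exact hmp.quasiMeasurePreserving.ae hae
    have hall : ∀ᵐ p : (Fin P → X) × (Fin Q → W)
        ∂((Measure.pi fun _ => ρX).prod (Measure.pi fun _ => ρW)),
        ∀ (j : Fin P) (b : Fin Q), φ (p.1 j, p.2 b) = ψ (p.1 j, p.2 b) := by
      rw [ae_all_iff]
      intro j
      rw [ae_all_iff]
      exact hev j
    refine integral_congr_ae (hall.mono fun p hp => ?_)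
    simp only [momentEstimator]
    congr 1
    refine Finset.sum_congr rfl fun i _ => Finset.sum_congr rfl fun a _ =>
      Finset.prod_congr rfl fun l _ => ?_
    rw [hp (i l) (a l), hp (i (l + 1)) (a l)]
  have hR : ∫ x : Fin n → X,
        ∏ l : Fin n, ∫ w, φ (x l, w) * φ (x (l + 1), w) ∂ρW
        ∂(Measure.pi fun _ => ρX)
      = ∫ x : Fin n → X,
        ∏ l : Fin n, ∫ w, ψ (x l, w) * ψ (x (l + 1), w) ∂ρW
        ∂(Measure.pi fun _ => ρX) := by
    have h1 : ∀ᵐ x0 ∂ρX, ∀ᵐ w ∂ρW, φ (x0, w) = ψ (x0, w) :=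
      Measure.ae_ae_of_ae_prod hae
    have h2 : ∀ᵐ x : Fin n → X ∂(Measure.pi fun _ => ρX),
        ∀ l : Fin n, ∀ᵐ w ∂ρW, φ (x l, w) = ψ (x l, w) := by
      rw [ae_all_iff]
      intro l
      exact (measurePreserving_eval_pi ρX l).quasiMeasurePreserving.ae h1
    refine integral_congr_ae (h2.mono fun x hx => ?_)
    refine Finset.prod_congr rfl fun l _ => ?_
    refine integral_congr_ae ?_
    filter_upwards [hx l, hx (l + 1)] with w e1 e2
    rw [e1, e2]
  rw [hL, hR]
  exact momentEstimator_unbiased_of_measurable ρX ρW ψ hmeas hψ n P Q hP hQ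
end

section
/- Suppose φ ∈ L⁴(ρ_X ⊗ ρ_W), and let m̂(n) be the estimator averaging cyclic products over strictly increasing index tuples constructed from P i.i.d. samples from ρ_X and Q i.i.d. samples from ρ_W (all mutually independent, n ≤ P, n ≤ Q), with m(n) the n-th spectral moment. Then for any δ ∈ (0,1), with probability at least 1 − δ, |m̂(n) − m(n)| ≤ sqrt( (f(n)/δ)·(1/P + 1/Q) ), where f(n) = n² · Var( ∏_{i=1}^{n} φ(x_i, w_i)·φ(x_{i+1}, w_i) ) with x_{n+1} = x_1 over independent samples. -/
open MeasureTheory ProbabilityTheory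

open scoped ENNReal NNReal Classical

section MP
variable {X : Type*} [MeasurableSpace X] (μ : Measure X) [IsProbabilityMeasure μ]

lemma mp_comp_inj {ι κ : Type*} [Fintype ι] [Fintype κ] {f : ι → κ}
    (hf : Function.Injective f) :
    MeasurePreserving (fun x : κ → X => x ∘ f)
      (Measure.pi fun _ => μ) (Measure.pi fun _ => μ) := by
  classical
  have hm : Measurable (fun x : κ → X => x ∘ f) :=
    measurable_pi_lambda _ fun i => measurable_pi_apply _
  refine ⟨hm, ?_⟩
  refine (Measure.pi_eq fun s hs => ?_).symm
  rw [Measure.map_apply hm (MeasurableSet.univ_pi hs)]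
  have hpre : (fun x : κ → X => x ∘ f) ⁻¹' Set.pi Set.univ s
      = Set.pi Set.univ (fun j => if h : ∃ i, f i = j then s h.choose else Set.univ) := by
    ext x
    simp only [Set.mem_preimage, Set.mem_pi, Set.mem_univ, forall_true_left, Function.comp]
    constructor
    · intro h j
      split_ifs with hj
      · have := h hj.choose
        rwa [hj.choose_spec] at this
      · trivial
    · intro h i
      have := h (f i)
      rw [dif_pos ⟨i, rfl⟩] at this
      have he : (⟨i, rfl⟩ : ∃ i', f i' = f i).choose = i :=
        hf (⟨i, rfl⟩ : ∃ i', f i' = f i).choose_spec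
      rwa [he] at this
  rw [hpre, Measure.pi_pi]
  have h1 : ∀ j ∉ Finset.image f Finset.univ,
      μ (if h : ∃ i, f i = j then s h.choose else Set.univ) = 1 := by
    intro j hj
    rw [dif_neg, measure_univ]
    rintro ⟨i, rfl⟩
    exact hj (Finset.mem_image_of_mem f (Finset.mem_univ i))
  rw [← Finset.prod_subset (Finset.subset_univ (Finset.image f Finset.univ))
    (fun j _ hj => h1 j hj), Finset.prod_image (fun a _ b _ h => hf h)]
  refine Finset.prod_congr rfl fun i _ => ?_
  rw [dif_pos ⟨i, rfl⟩]
  congr 1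
  exact congrArg s (hf (⟨i, rfl⟩ : ∃ i', f i' = f i).choose_spec)

lemma mp_eval {κ : Type*} [Fintype κ] (j : κ) :
    MeasurePreserving (fun x : κ → X => x j) (Measure.pi fun _ => μ) μ := by
  have h1 := mp_comp_inj μ (f := fun _ : Unit => j) (fun a b _ => rfl)
  have h2 := measurePreserving_funUnique μ Unit
  have : (fun x : κ → X => x j)
      = (MeasurableEquiv.funUnique Unit X) ∘ (fun x : κ → X => x ∘ (fun _ : Unit => j)) := rfl
  rw [this]
  exact h2.comp h1

lemma mp_pair_disjoint {ι κ : Type*} [Fintype ι] [Fintype κ] {f g : ι → κ}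
    (hf : Function.Injective f) (hg : Function.Injective g)
    (hdisj : ∀ i i', f i ≠ g i') :
    MeasurePreserving (fun x : κ → X => (x ∘ f, x ∘ g))
      (Measure.pi fun _ => μ) ((Measure.pi fun _ : ι => μ).prod (Measure.pi fun _ : ι => μ)) := by
  have hinj : Function.Injective (Sum.elim f g : ι ⊕ ι → κ) := by
    rintro (a | a) (b | b) h
    · exact congrArg Sum.inl (hf h)
    · exact absurd h (hdisj a b)
    · exact absurd h.symm (hdisj b a)
    · exact congrArg Sum.inr (hg h)
  have h1 := mp_comp_inj μ hinj
  have h2 := (measurePreserving_sumPiEquivProdPi_symm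
    (fun _ : ι ⊕ ι => μ)).symm ((MeasurableEquiv.sumPiEquivProdPi (fun _ : ι ⊕ ι => X)).symm)
  have : (fun x : κ → X => (x ∘ f, x ∘ g))
      = (MeasurableEquiv.sumPiEquivProdPi (fun _ : ι ⊕ ι => X))
        ∘ (fun x : κ → X => x ∘ Sum.elim f g) := rfl
  rw [this]
  exact h2.comp h1

end MP

section Helpers
variable {α : Type*} [MeasurableSpace α] {μ : Measure α}

lemma helper_int_mul {u v : α → ℝ} (hu : MemLp u 2 μ) (hv : MemLp v 2 μ) :
    Integrable (fun a => u a * v a) μ := by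
  refine ((hu.integrable_sq.add hv.integrable_sq).div_const 2).mono'
    (hu.aestronglyMeasurable.mul hv.aestronglyMeasurable) (Filter.Eventually.of_forall fun a => ?_)
  have h1 : ‖u a * v a‖ = |u a| * |v a| := by rw [Real.norm_eq_abs, abs_mul]
  rw [h1]
  have h2 : |u a| * |v a| * 2 ≤ u a ^ 2 + v a ^ 2 := by
    nlinarith [sq_nonneg (|u a| - |v a|), sq_abs (u a), sq_abs (v a)]
  simp only [Pi.add_apply]
  linarith

lemma helper_CS {u v : α → ℝ} (hu : MemLp u 2 μ) (hv : MemLp v 2 μ) :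
    ∫ a, u a * v a ∂μ ≤ Real.sqrt (∫ a, u a ^ 2 ∂μ) * Real.sqrt (∫ a, v a ^ 2 ∂μ) := by
  have hconj : Real.HolderConjugate 2 2 := ⟨by norm_num, by norm_num, by norm_num⟩
  have h2 : (ENNReal.ofReal (2 : ℝ)) = 2 := by
    rw [ENNReal.ofReal_ofNat]
  have hH := integral_mul_norm_le_Lp_mul_Lq (μ := μ) hconj (h2 ▸ hu) (h2 ▸ hv)
  have habs : ∫ a, u a * v a ∂μ ≤ ∫ a, ‖u a‖ * ‖v a‖ ∂μ := by
    calc ∫ a, u a * v a ∂μ ≤ ‖∫ a, u a * v a ∂μ‖ := le_abs_self _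
      _ ≤ ∫ a, ‖u a * v a‖ ∂μ := norm_integral_le_integral_norm _
      _ = ∫ a, ‖u a‖ * ‖v a‖ ∂μ :=
          integral_congr_ae (Filter.Eventually.of_forall fun a => norm_mul _ _)
  refine habs.trans (hH.trans (le_of_eq ?_))
  have hnu : ∀ x : ℝ, ‖x‖ ^ (2 : ℝ) = x ^ 2 := fun x => by
    rw [show ((2:ℝ)) = ((2:ℕ):ℝ) by norm_num, Real.rpow_natCast, Real.norm_eq_abs, sq_abs]
  simp_rw [hnu]
  rw [Real.sqrt_eq_rpow, Real.sqrt_eq_rpow]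

lemma variance_congr_ae {u v : α → ℝ} (h : u =ᵐ[μ] v) : variance u μ = variance v μ := by
  have hint : μ[u] = μ[v] := integral_congr_ae h
  rw [variance, variance, evariance, evariance, hint]
  congr 1
  apply lintegral_congr_ae
  filter_upwards [h] with a ha
  rw [ha]

end Helpers

section Comb
open Finset

lemma sm_card_pred {n P : ℕ} (Pr : Finset (Fin P) → Prop) :
    (univ.filter fun i : Fin n → Fin P => StrictMono i ∧ Pr (image i univ)).card
      = ((powersetCard n (univ : Finset (Fin P))).filter Pr).card := by
  refine Finset.card_bij (fun i _ => image i univ) ?_ ?_ ?_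
  · intro i hi
    rw [mem_filter] at hi ⊢
    refine ⟨mem_powersetCard_univ.mpr ?_, hi.2.2⟩
    rw [card_image_of_injective _ hi.2.1.injective, card_univ, Fintype.card_fin]
  · intro i hi i' hi' h
    rw [mem_filter] at hi hi'
    have hci : (image i univ).card = n := by
      rw [card_image_of_injective _ hi.2.1.injective, card_univ, Fintype.card_fin]
    have hci' : (image i' univ).card = n := by
      rw [card_image_of_injective _ hi'.2.1.injective, card_univ, Fintype.card_fin]
    have hs : image i univ = image i' univ := h
    have e1 : i = ⇑((image i univ).orderEmbOfFin hci) :=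
      Finset.orderEmbOfFin_unique hci (fun l => mem_image_of_mem i (mem_univ l)) hi.2.1
    have e2 : i' = ⇑((image i univ).orderEmbOfFin hci) :=
      Finset.orderEmbOfFin_unique hci
        (fun l => hs ▸ mem_image_of_mem i' (mem_univ l)) hi'.2.1
    exact e1.trans e2.symm
  · intro s hs
    rw [mem_filter, mem_powersetCard_univ] at hs
    refine ⟨s.orderEmbOfFin hs.1, ?_, ?_⟩
    · rw [mem_filter]
      have himg : image (s.orderEmbOfFin hs.1) univ = s := by
        ext a
        simp only [mem_image, mem_univ, true_and]
        constructor
        · rintro ⟨l, rfl⟩; exact Finset.orderEmbOfFin_mem s hs.1 l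
        · intro ha
          have : a ∈ Set.range (s.orderEmbOfFin hs.1) := by
            rw [Finset.range_orderEmbOfFin]; exact ha
          obtain ⟨l, hl⟩ := this
          exact ⟨l, hl⟩
      rw [himg]
      exact ⟨mem_univ _, (s.orderEmbOfFin hs.1).strictMono, hs.2⟩
    · ext a
      simp only [mem_image, mem_univ, true_and]
      constructor
      · rintro ⟨l, rfl⟩; exact Finset.orderEmbOfFin_mem s hs.1 l
      · intro ha
        have : a ∈ Set.range (s.orderEmbOfFin hs.1) := by
          rw [Finset.range_orderEmbOfFin]; exact ha
        obtain ⟨l, hl⟩ := this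
        exact ⟨l, hl⟩

lemma sm_card (n P : ℕ) :
    (univ.filter fun i : Fin n → Fin P => StrictMono i).card = P.choose n := by
  have := sm_card_pred (n := n) (P := P) (fun _ => True)
  simp only [and_true] at this
  rw [this, Finset.filter_true, card_powersetCard, card_univ, Fintype.card_fin]

lemma mem_card_uniform (n P : ℕ) (p q : Fin P) :
    ((powersetCard n (univ : Finset (Fin P))).filter (fun s => p ∈ s)).card
      = ((powersetCard n (univ : Finset (Fin P))).filter (fun s => q ∈ s)).card := by
  refine Finset.card_bij (fun s _ => s.image (Equiv.swap p q)) ?_ ?_ ?_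
  · intro s hs
    rw [mem_filter, mem_powersetCard_univ] at hs ⊢
    refine ⟨by rw [card_image_of_injective _ (Equiv.swap p q).injective, hs.1], ?_⟩
    refine mem_image.mpr ⟨p, hs.2, Equiv.swap_apply_left p q⟩
  · intro s _ t _ h
    have hcomp : (⇑(Equiv.swap p q) ∘ ⇑(Equiv.swap p q)) = id :=
      funext fun x => Equiv.swap_apply_self p q x
    have := congrArg (Finset.image (⇑(Equiv.swap p q))) h
    simp only [image_image, hcomp, image_id] at this
    exact this
  · intro t ht
    rw [mem_filter, mem_powersetCard_univ] at ht
    refine ⟨t.image (Equiv.swap p q), ?_, ?_⟩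
    · rw [mem_filter, mem_powersetCard_univ]
      refine ⟨by rw [card_image_of_injective _ (Equiv.swap p q).injective, ht.1], ?_⟩
      exact mem_image.mpr ⟨q, ht.2, Equiv.swap_apply_right p q⟩
    · show image (⇑(Equiv.swap p q)) (image (⇑(Equiv.swap p q)) t) = t
      have hcomp : (⇑(Equiv.swap p q) ∘ ⇑(Equiv.swap p q)) = id :=
        funext fun x => Equiv.swap_apply_self p q x
      rw [image_image, hcomp, image_id]

lemma mem_card_sum (n P : ℕ) :
    ∀ p : Fin P,
      ((powersetCard n (univ : Finset (Fin P))).filter (fun s => p ∈ s)).card * P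
        = n * P.choose n := by
  intro p
  have hsum : ∑ q : Fin P,
      ((powersetCard n (univ : Finset (Fin P))).filter (fun s => q ∈ s)).card
      = n * P.choose n := by
    have : ∀ q : Fin P, ((powersetCard n (univ : Finset (Fin P))).filter (fun s => q ∈ s)).card
        = ∑ s ∈ powersetCard n (univ : Finset (Fin P)), if q ∈ s then 1 else 0 := by
      intro q; rw [Finset.card_filter]
    simp_rw [this]
    rw [Finset.sum_comm]
    have : ∀ s ∈ powersetCard n (univ : Finset (Fin P)),
        (∑ q : Fin P, if q ∈ s then 1 else 0) = n := by
      intro s hs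
      rw [mem_powersetCard_univ] at hs
      rw [Finset.sum_ite_mem, Finset.univ_inter, ← Finset.card_eq_sum_ones, hs]
    rw [Finset.sum_congr rfl this, Finset.sum_const, card_powersetCard, card_univ,
      Fintype.card_fin, smul_eq_mul, mul_comm]
  calc ((powersetCard n (univ : Finset (Fin P))).filter (fun s => p ∈ s)).card * P
      = ∑ q : Fin P,
        ((powersetCard n (univ : Finset (Fin P))).filter (fun s => q ∈ s)).card := by
        rw [Finset.sum_congr rfl (fun q _ => (mem_card_uniform n P q p))]
        simp [Finset.sum_const, mul_comm]
    _ = n * P.choose n := hsum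

lemma sm_mem_card (n P : ℕ) (p : Fin P) :
    (univ.filter fun i : Fin n → Fin P => StrictMono i ∧ p ∈ image i univ).card * P
      = n * P.choose n := by
  have h := sm_card_pred (n := n) (P := P) (fun s => p ∈ s)
  have h2 : (univ.filter fun i : Fin n → Fin P => StrictMono i ∧ p ∈ image i univ).card
      = ((powersetCard n (univ : Finset (Fin P))).filter (fun s => p ∈ s)).card := by
    have einst : ∀ {β : Type} (p' : β → Prop) (h1 h2 : DecidablePred p') (s : Finset β),
        @Finset.filter β p' h1 s = @Finset.filter β p' h2 s := by
      intro β p' h1 h2 s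
      rw [Subsingleton.elim h1 h2]
    convert h using 2 <;> exact einst _ _ _ _
  rw [h2]
  exact mem_card_sum n P p

lemma sm_cnt (n P : ℕ) (p : Fin P) :
    ((univ.filter fun i : Fin n → Fin P => StrictMono i ∧ ∃ l, i l = p)).card * P
      = n * P.choose n := by
  have h1 : (univ.filter fun i : Fin n → Fin P => StrictMono i ∧ ∃ l, i l = p)
      = (univ.filter fun i : Fin n → Fin P => StrictMono i ∧ p ∈ image i univ) :=
    Finset.filter_congr fun i _ => by
      simp only [mem_image, mem_univ, true_and]
  rw [h1]
  exact sm_mem_card n P p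

end Comb

section Main
variable {X W : Type*} [MeasurableSpace X] [MeasurableSpace W]
    (ρX : Measure X) (ρW : Measure W)
    [IsProbabilityMeasure ρX] [IsProbabilityMeasure ρW]
    (φ : X × W → ℝ)

lemma g_meas (hsm : StronglyMeasurable φ) (n : ℕ) [NeZero n] :
    Measurable (fun p : (Fin n → X) × (Fin n → W) =>
      ∏ l : Fin n, φ (p.1 l, p.2 l) * φ (p.1 (l + 1), p.2 l)) := by
  refine Finset.measurable_prod _ fun l _ => Measurable.mul ?_ ?_
  · exact hsm.measurable.comp
      (((measurable_pi_apply l).comp measurable_fst).prodMk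
        ((measurable_pi_apply l).comp measurable_snd))
  · exact hsm.measurable.comp
      (((measurable_pi_apply (l + 1)).comp measurable_fst).prodMk
        ((measurable_pi_apply l).comp measurable_snd))

lemma memL2_g (hsm : StronglyMeasurable φ) (hφ : MemLp φ 4 (ρX.prod ρW)) (n : ℕ) [NeZero n] :
    MemLp (fun p : (Fin n → X) × (Fin n → W) =>
        ∏ l : Fin n, φ (p.1 l, p.2 l) * φ (p.1 (l + 1), p.2 l)) 2
      ((Measure.pi fun _ => ρX).prod (Measure.pi fun _ => ρW)) := by
  letI : MeasureSpace X := ⟨ρX⟩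
  letI : MeasureSpace W := ⟨ρW⟩
  set g : (Fin n → X) × (Fin n → W) → ℝ := fun p =>
    ∏ l : Fin n, φ (p.1 l, p.2 l) * φ (p.1 (l + 1), p.2 l) with hg
  have hgm : Measurable g := g_meas φ hsm n
  rw [memLp_two_iff_integrable_sq hgm.aestronglyMeasurable]
  -- φ^4 is integrable on the product
  have hφ4int : Integrable (fun q => φ q ^ 4) (ρX.prod ρW) := by
    have h := hφ.integrable_norm_rpow (by norm_num) (by norm_num)
    refine h.congr (Filter.Eventually.of_forall fun q => ?_)
    show ‖φ q‖ ^ (ENNReal.toReal 4) = φ q ^ 4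
    rw [show (ENNReal.toReal 4) = ((4 : ℕ) : ℝ) by norm_num, Real.rpow_natCast,
      Real.norm_eq_abs, ← abs_pow, abs_of_nonneg (by positivity)]
  have hslice4 : ∀ᵐ y ∂ρX, Integrable (fun v => φ (y, v) ^ 4) ρW := hφ4int.prod_right_ae
  set F : X → ℝ := fun y => ∫ v, φ (y, v) ^ 4 ∂ρW with hF
  have hFint : Integrable F ρX := hφ4int.integral_prod_left
  have hFnonneg : ∀ y, 0 ≤ F y := fun y => integral_nonneg fun v => by positivity
  have hD : Integrable (fun x : Fin n → X => ∏ j, F (x j)) (Measure.pi fun _ => ρX) :=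
    Integrable.fintype_prod (𝕜 := ℝ) (f := fun _ : Fin n => F) (fun _ => hFint)
  -- a.e. every coordinate has integrable 4th power slice
  have hAE : ∀ᵐ x ∂(Measure.pi fun _ : Fin n => ρX),
      ∀ j : Fin n, Integrable (fun v => φ (x j, v) ^ 4) ρW := by
    rw [ae_all_iff]
    intro j
    exact ae_of_ae_map (mp_eval ρX j).aemeasurable ((mp_eval ρX j).map_eq.symm ▸ hslice4)
  -- slice L² facts
  have hsliceL2 : ∀ (x : Fin n → X),
      (∀ j : Fin n, Integrable (fun v => φ (x j, v) ^ 4) ρW) →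
      ∀ j : Fin n, MemLp (fun v => φ (x j, v) ^ 2) 2 ρW := by
    intro x hx j
    have hmeas : AEStronglyMeasurable (fun v => φ (x j, v) ^ 2) ρW :=
      ((hsm.measurable.comp (measurable_const.prodMk measurable_id)).pow_const 2
        ).aestronglyMeasurable
    rw [memLp_two_iff_integrable_sq hmeas]
    refine (hx j).congr (Filter.Eventually.of_forall fun v => ?_)
    show φ (x j, v) ^ 4 = (φ (x j, v) ^ 2) ^ 2
    ring
  have hprod_sq : ∀ (x : Fin n → X) (w : Fin n → W),
      g (x, w) ^ 2 = ∏ l : Fin n, (φ (x l, w l) ^ 2 * φ (x (l + 1), w l) ^ 2) := by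
    intro x w
    rw [hg]
    simp only
    rw [← Finset.prod_pow]
    refine Finset.prod_congr rfl fun l _ => by ring
  refine (integrable_prod_iff ((hgm.pow_const 2).aestronglyMeasurable)).mpr ⟨?_, ?_⟩
  · filter_upwards [hAE] with x hx
    have hint : Integrable
        (fun w : Fin n → W => ∏ l : Fin n,
          (φ (x l, w l) ^ 2 * φ (x (l + 1), w l) ^ 2))
        (Measure.pi fun _ => ρW) :=
      Integrable.fintype_prod (𝕜 := ℝ)
        (f := fun l : Fin n => fun v => φ (x l, v) ^ 2 * φ (x (l + 1), v) ^ 2)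
        (fun l => helper_int_mul (hsliceL2 x hx l) (hsliceL2 x hx (l + 1)))
    exact hint.congr (Filter.Eventually.of_forall fun w => (hprod_sq x w).symm)
  · refine hD.mono' ?_ ?_
    · exact (((hgm.pow_const 2).stronglyMeasurable.norm).integral_prod_right').aestronglyMeasurable
    · filter_upwards [hAE] with x hx
      have hnn : 0 ≤ ∫ w, ‖g (x, w) ^ 2‖ ∂(Measure.pi fun _ => ρW) :=
        integral_nonneg fun w => norm_nonneg _
      rw [Real.norm_eq_abs, abs_of_nonneg hnn]
      have heq1 : ∫ w, ‖g (x, w) ^ 2‖ ∂(Measure.pi fun _ => ρW)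
          = ∫ w : Fin n → W, ∏ l : Fin n,
              (φ (x l, w l) ^ 2 * φ (x (l + 1), w l) ^ 2)
              ∂(Measure.pi fun _ => ρW) := by
        refine integral_congr_ae (Filter.Eventually.of_forall fun w => ?_)
        show ‖g (x, w) ^ 2‖ = ∏ l : Fin n, φ (x l, w l) ^ 2 * φ (x (l + 1), w l) ^ 2
        rw [Real.norm_eq_abs, abs_of_nonneg (sq_nonneg _), hprod_sq x w]
      have heq2 : (∫ w : Fin n → W, ∏ l : Fin n,
          (φ (x l, w l) ^ 2 * φ (x (l + 1), w l) ^ 2)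
          ∂(Measure.pi fun _ => ρW))
          = ∏ l : Fin n, ∫ v, φ (x l, v) ^ 2 * φ (x (l + 1), v) ^ 2 ∂ρW :=
        integral_fintype_prod_eq_prod (ι := Fin n)
          (fun l : Fin n => fun v => φ (x l, v) ^ 2 * φ (x (l + 1), v) ^ 2)
      rw [heq1, heq2]
      have hCSl : ∀ l : Fin n, ∫ v, φ (x l, v) ^ 2 * φ (x (l + 1), v) ^ 2 ∂ρW
          ≤ Real.sqrt (F (x l)) * Real.sqrt (F (x (l + 1))) := by
        intro l
        have h := helper_CS (hsliceL2 x hx l) (hsliceL2 x hx (l + 1))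
        refine h.trans (le_of_eq ?_)
        have e1 : ∫ v, (φ (x l, v) ^ 2) ^ 2 ∂ρW = F (x l) := by
          refine integral_congr_ae (Filter.Eventually.of_forall fun v => ?_)
          show (φ (x l, v) ^ 2) ^ 2 = φ (x l, v) ^ 4
          ring
        have e2 : ∫ v, (φ (x (l + 1), v) ^ 2) ^ 2 ∂ρW = F (x (l + 1)) := by
          refine integral_congr_ae (Filter.Eventually.of_forall fun v => ?_)
          show (φ (x (l + 1), v) ^ 2) ^ 2 = φ (x (l + 1), v) ^ 4
          ring
        rw [e1, e2]
      calc ∏ l : Fin n, ∫ v, φ (x l, v) ^ 2 * φ (x (l + 1), v) ^ 2 ∂ρW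
          ≤ ∏ l : Fin n, Real.sqrt (F (x l)) * Real.sqrt (F (x (l + 1))) := by
            refine Finset.prod_le_prod (fun l _ => integral_nonneg fun v => by positivity)
              (fun l _ => hCSl l)
        _ = (∏ l : Fin n, Real.sqrt (F (x l))) * ∏ l : Fin n, Real.sqrt (F (x (l + 1))) :=
            Finset.prod_mul_distrib
        _ = (∏ l : Fin n, Real.sqrt (F (x l))) * ∏ l : Fin n, Real.sqrt (F (x l)) := by
            congr 1
            exact Fintype.prod_equiv (Equiv.addRight (1 : Fin n))
              (fun l => Real.sqrt (F (x (l + 1)))) (fun j => Real.sqrt (F (x j)))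
              (fun l => rfl)
        _ = ∏ j, F (x j) := by
            rw [← Finset.prod_mul_distrib]
            exact Finset.prod_congr rfl fun j _ => Real.mul_self_sqrt (hFnonneg _)

lemma integral_g (hsm : StronglyMeasurable φ) (hφ : MemLp φ 4 (ρX.prod ρW)) (n : ℕ) [NeZero n] :
    ∫ q, (∏ l : Fin n, φ (q.1 l, q.2 l) * φ (q.1 (l + 1), q.2 l))
        ∂((Measure.pi fun _ => ρX).prod (Measure.pi fun _ => ρW))
      = ∫ x : Fin n → X,
          ∏ l : Fin n, ∫ w, φ (x l, w) * φ (x (l + 1), w) ∂ρW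
          ∂(Measure.pi fun _ => ρX) := by
  letI : MeasureSpace W := ⟨ρW⟩
  have hgint : Integrable (fun p : (Fin n → X) × (Fin n → W) =>
      ∏ l : Fin n, φ (p.1 l, p.2 l) * φ (p.1 (l + 1), p.2 l))
      ((Measure.pi fun _ => ρX).prod (Measure.pi fun _ => ρW)) :=
    (memL2_g ρX ρW φ hsm hφ n).integrable one_le_two
  rw [integral_prod _ hgint]
  refine integral_congr_ae (Filter.Eventually.of_forall fun x => ?_)
  exact integral_fintype_prod_eq_prod (ι := Fin n)
    (fun l : Fin n => fun v => φ (x l, v) * φ (x (l + 1), v))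

end Main

set_option maxHeartbeats 3000000 in
theorem main_meas
    {X W : Type*} [MeasurableSpace X] [MeasurableSpace W]
    (ρX : Measure X) (ρW : Measure W)
    [IsProbabilityMeasure ρX] [IsProbabilityMeasure ρW]
    (φ : X × W → ℝ) (hsm : StronglyMeasurable φ) (hφ : MemLp φ 4 (ρX.prod ρW))
    (n : ℕ) [NeZero n] (P Q : ℕ) (hP : n ≤ P) (hQ : n ≤ Q)
    (δ : ℝ) (hδ0 : 0 < δ) (hδ1 : δ < 1) :
    ENNReal.ofReal (1 - δ) ≤
      ((Measure.pi fun _ => ρX).prod (Measure.pi fun _ => ρW))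
        {p : (Fin P → X) × (Fin Q → W) |
          |momentEstimator φ n p.1 p.2 -
              ∫ x : Fin n → X,
                ∏ l : Fin n, ∫ w, φ (x l, w) * φ (x (l + 1), w) ∂ρW
                ∂(Measure.pi fun _ => ρX)| ≤
            Real.sqrt
              (((n : ℝ) ^ 2 *
                  variance (fun p : (Fin n → X) × (Fin n → W) =>
                      ∏ l : Fin n, φ (p.1 l, p.2 l) * φ (p.1 (l + 1), p.2 l))
                    ((Measure.pi fun _ => ρX).prod (Measure.pi fun _ => ρW)) / δ) *
                (1 / (P : ℝ) + 1 / (Q : ℝ)))} := by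
  have hnpos : 0 < n := NeZero.pos n
  have hPpos : 0 < P := lt_of_lt_of_le hnpos hP
  have hQpos : 0 < Q := lt_of_lt_of_le hnpos hQ
  set πXn : Measure (Fin n → X) := Measure.pi fun _ => ρX with hπXn
  set πWn : Measure (Fin n → W) := Measure.pi fun _ => ρW with hπWn
  set μP : Measure (Fin P → X) := Measure.pi fun _ => ρX with hμP
  set μQ : Measure (Fin Q → W) := Measure.pi fun _ => ρW with hμQ
  set ν : Measure ((Fin n → X) × (Fin n → W)) := πXn.prod πWn with hν
  set μ0 : Measure ((Fin P → X) × (Fin Q → W)) := μP.prod μQ with hμ0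
  set g : (Fin n → X) × (Fin n → W) → ℝ := fun q =>
    ∏ l : Fin n, φ (q.1 l, q.2 l) * φ (q.1 (l + 1), q.2 l) with hgdef
  have hg2 : MemLp g 2 ν := memL2_g ρX ρW φ hsm hφ n
  have hgm : Measurable g := g_meas φ hsm n
  have hgint : Integrable g ν := hg2.integrable one_le_two
  set mval : ℝ := ∫ q, g q ∂ν with hmval
  rw [show (∫ x : Fin n → X,
      ∏ l : Fin n, ∫ w, φ (x l, w) * φ (x (l + 1), w) ∂ρW ∂πXn) = mval from
    (integral_g ρX ρW φ hsm hφ n).symm]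
  set σ2 : ℝ := ∫ q, (g q - mval) ^ 2 ∂ν with hσ2
  have hσnn : 0 ≤ σ2 := integral_nonneg fun q => sq_nonneg _
  have hgm2 : MemLp (fun q => g q - mval) 2 ν := hg2.sub (memLp_const mval)
  have hvar : variance g ν = σ2 := by
    rw [variance_eq_integral hgm.aemeasurable, hσ2]
  rw [hvar]
  set B : ℝ := ((n : ℝ) ^ 2 * σ2) * (1 / (P : ℝ) + 1 / (Q : ℝ)) with hB
  set t : ℝ := Real.sqrt (((n : ℝ) ^ 2 * σ2 / δ) * (1 / (P : ℝ) + 1 / (Q : ℝ))) with ht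
  have hBnn : 0 ≤ B := by
    have : (0:ℝ) ≤ 1 / (P : ℝ) + 1 / (Q : ℝ) := by positivity
    exact mul_nonneg (mul_nonneg (by positivity) hσnn) this
  have htarg : ((n : ℝ) ^ 2 * σ2 / δ) * (1 / (P : ℝ) + 1 / (Q : ℝ)) = B / δ := by
    rw [hB]; ring
  have ht2 : t ^ 2 = B / δ := by
    rw [ht, Real.sq_sqrt (by rw [htarg]; positivity)]
    exact htarg
  -- index sets
  set SP : Finset (Fin n → Fin P) := Finset.univ.filter (fun i => StrictMono i) with hSP
  set SQ : Finset (Fin n → Fin Q) := Finset.univ.filter (fun a => StrictMono a) with hSQ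
  set K : Finset ((Fin n → Fin P) × (Fin n → Fin Q)) := SP ×ˢ SQ with hK
  set Ψ : ((Fin n → Fin P) × (Fin n → Fin Q)) → ((Fin P → X) × (Fin Q → W)) →
      (Fin n → X) × (Fin n → W) := fun k p => (p.1 ∘ k.1, p.2 ∘ k.2) with hΨ
  have hKmem : ∀ k ∈ K, StrictMono k.1 ∧ StrictMono k.2 := by
    intro k hk
    rw [hK, Finset.mem_product, hSP, hSQ] at hk
    exact ⟨(Finset.mem_filter.mp hk.1).2, (Finset.mem_filter.mp hk.2).2⟩
  have hmpΨ : ∀ k ∈ K, MeasurePreserving (Ψ k) μ0 ν := by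
    intro k hk
    exact (mp_comp_inj ρX (hKmem k hk).1.injective).prod
      (mp_comp_inj ρW (hKmem k hk).2.injective)
  have hT2 : ∀ k ∈ K, MemLp (fun p => g (Ψ k p) - mval) 2 μ0 := by
    intro k hk
    exact (hg2.comp_measurePreserving (hmpΨ k hk)).sub (memLp_const mval)
  have hUint : ∀ k ∈ K, ∀ k' ∈ K,
      Integrable (fun p => (g (Ψ k p) - mval) * (g (Ψ k' p) - mval)) μ0 :=
    fun k hk k' hk' => helper_int_mul (hT2 k hk) (hT2 k' hk')
  have hsqmeas : Measurable (fun q : (Fin n → X) × (Fin n → W) => (g q - mval) ^ 2) :=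
    (hgm.sub measurable_const).pow_const 2
  have hvark : ∀ k ∈ K, ∫ p, (g (Ψ k p) - mval) ^ 2 ∂μ0 = σ2 := by
    intro k hk
    rw [hσ2, ← (hmpΨ k hk).map_eq,
      integral_map (hmpΨ k hk).aemeasurable hsqmeas.aestronglyMeasurable]
  have hcov_le : ∀ k ∈ K, ∀ k' ∈ K,
      ∫ p, (g (Ψ k p) - mval) * (g (Ψ k' p) - mval) ∂μ0 ≤ σ2 := by
    intro k hk k' hk'
    have h := helper_CS (hT2 k hk) (hT2 k' hk')
    rw [hvark k hk, hvark k' hk', Real.mul_self_sqrt hσnn] at h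
    exact h
  have hgsub_int : Integrable (fun q => g q - mval) ν := hgint.sub (integrable_const mval)
  have hgsub_zero : ∫ q, (g q - mval) ∂ν = 0 := by
    rw [integral_sub hgint (integrable_const mval), integral_const, probReal_univ,
      one_smul, ← hmval, sub_self]
  have hcov_zero : ∀ k ∈ K, ∀ k' ∈ K,
      (∀ l l' : Fin n, k.1 l ≠ k'.1 l') → (∀ l l' : Fin n, k.2 l ≠ k'.2 l') →
      ∫ p, (g (Ψ k p) - mval) * (g (Ψ k' p) - mval) ∂μ0 = 0 := by
    intro k hk k' hk' hdx hdw
    have hmpX := mp_pair_disjoint ρX (hKmem k hk).1.injective (hKmem k' hk').1.injective hdx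
    have hmpW := mp_pair_disjoint ρW (hKmem k hk).2.injective (hKmem k' hk').2.injective hdw
    have hmpΘ : MeasurePreserving
        (fun p : (Fin P → X) × (Fin Q → W) =>
          ((p.1 ∘ k.1, p.1 ∘ k'.1), (p.2 ∘ k.2, p.2 ∘ k'.2)))
        μ0 ((πXn.prod πXn).prod (πWn.prod πWn)) := hmpX.prod hmpW
    set κm : Measure (((Fin n → X) × (Fin n → X)) × ((Fin n → W) × (Fin n → W))) :=
      (πXn.prod πXn).prod (πWn.prod πWn) with hκm
    set G : ((Fin n → X) × (Fin n → X)) × ((Fin n → W) × (Fin n → W)) → ℝ := fun q =>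
      (g (q.1.1, q.2.1) - mval) * (g (q.1.2, q.2.2) - mval) with hGdef
    have hL : Measurable (fun q : ((Fin n → X) × (Fin n → X)) × ((Fin n → W) × (Fin n → W)) =>
        ((q.1.1, q.2.1) : (Fin n → X) × (Fin n → W))) :=
      (measurable_fst.fst.prodMk measurable_snd.fst)
    have hR : Measurable (fun q : ((Fin n → X) × (Fin n → X)) × ((Fin n → W) × (Fin n → W)) =>
        ((q.1.2, q.2.2) : (Fin n → X) × (Fin n → W))) :=
      (measurable_fst.snd.prodMk measurable_snd.snd)
    have hGmeas : Measurable G :=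
      (((hgm.comp hL).sub measurable_const).mul ((hgm.comp hR).sub measurable_const))
    have hfstX : MeasurePreserving (Prod.fst : (Fin n → X) × (Fin n → X) → Fin n → X)
        (πXn.prod πXn) πXn :=
      ⟨measurable_fst, by rw [Measure.map_fst_prod, measure_univ, one_smul]⟩
    have hsndX : MeasurePreserving (Prod.snd : (Fin n → X) × (Fin n → X) → Fin n → X)
        (πXn.prod πXn) πXn :=
      ⟨measurable_snd, by rw [Measure.map_snd_prod, measure_univ, one_smul]⟩
    have hfstW : MeasurePreserving (Prod.fst : (Fin n → W) × (Fin n → W) → Fin n → W)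
        (πWn.prod πWn) πWn :=
      ⟨measurable_fst, by rw [Measure.map_fst_prod, measure_univ, one_smul]⟩
    have hsndW : MeasurePreserving (Prod.snd : (Fin n → W) × (Fin n → W) → Fin n → W)
        (πWn.prod πWn) πWn :=
      ⟨measurable_snd, by rw [Measure.map_snd_prod, measure_univ, one_smul]⟩
    have hLmp : MeasurePreserving
        (fun q : ((Fin n → X) × (Fin n → X)) × ((Fin n → W) × (Fin n → W)) =>
          ((q.1.1, q.2.1) : (Fin n → X) × (Fin n → W))) κm ν := hfstX.prod hfstW
    have hRmp : MeasurePreserving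
        (fun q : ((Fin n → X) × (Fin n → X)) × ((Fin n → W) × (Fin n → W)) =>
          ((q.1.2, q.2.2) : (Fin n → X) × (Fin n → W))) κm ν := hsndX.prod hsndW
    have hGint : Integrable G κm :=
      helper_int_mul (hgm2.comp_measurePreserving hLmp) (hgm2.comp_measurePreserving hRmp)
    have step1 : ∫ p, (g (Ψ k p) - mval) * (g (Ψ k' p) - mval) ∂μ0 = ∫ q, G q ∂κm := by
      rw [← hmpΘ.map_eq, integral_map hmpΘ.aemeasurable hGmeas.aestronglyMeasurable]
    rw [step1]
    rw [integral_prod _ hGint]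
    have step2 : ∫ uu' : (Fin n → X) × (Fin n → X),
        (∫ vv' : (Fin n → W) × (Fin n → W), G (uu', vv') ∂(πWn.prod πWn)) ∂(πXn.prod πXn)
        = ∫ uu' : (Fin n → X) × (Fin n → X),
            (∫ v, (g (uu'.1, v) - mval) ∂πWn) * (∫ v', (g (uu'.2, v') - mval) ∂πWn)
            ∂(πXn.prod πXn) := by
      refine integral_congr_ae (Filter.Eventually.of_forall fun uu' => ?_)
      exact integral_prod_mul (μ := πWn) (ν := πWn)
        (fun v => g (uu'.1, v) - mval) (fun v' => g (uu'.2, v') - mval)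
    rw [step2]
    rw [integral_prod_mul (μ := πXn) (ν := πXn)
      (fun u => ∫ v, (g (u, v) - mval) ∂πWn) (fun u' => ∫ v', (g (u', v') - mval) ∂πWn)]
    have step3 : ∫ u, (∫ v, (g (u, v) - mval) ∂πWn) ∂πXn = 0 := by
      rw [← integral_prod _ hgsub_int]
      exact hgsub_zero
    rw [step3, zero_mul]
  -- the sum
  set S : (Fin P → X) × (Fin Q → W) → ℝ := fun p => ∑ k ∈ K, (g (Ψ k p) - mval) with hSdef
  have hS2m : MemLp S 2 μ0 := by
    rw [hSdef]
    exact memLp_finset_sum K hT2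
  have hS2int : Integrable (fun p => S p ^ 2) μ0 := hS2m.integrable_sq
  have hSsum : ∫ p, S p ^ 2 ∂μ0
      = ∑ k ∈ K, ∑ k' ∈ K, ∫ p, (g (Ψ k p) - mval) * (g (Ψ k' p) - mval) ∂μ0 := by
    have h1 : ∀ p, S p ^ 2
        = ∑ k ∈ K, ∑ k' ∈ K, (g (Ψ k p) - mval) * (g (Ψ k' p) - mval) := by
      intro p
      rw [hSdef]
      simp only
      rw [sq, Finset.sum_mul_sum]
    rw [integral_congr_ae (Filter.Eventually.of_forall h1),
      integral_finset_sum K (fun k hk =>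
        integrable_finset_sum K (fun k' hk' => hUint k hk k' hk'))]
    exact Finset.sum_congr rfl fun k hk =>
      integral_finset_sum K fun k' hk' => hUint k hk k' hk'
  set BadPred : ((Fin n → Fin P) × (Fin n → Fin Q)) × ((Fin n → Fin P) × (Fin n → Fin Q)) →
      Prop := fun kk => (∃ l l', kk.1.1 l = kk.2.1 l') ∨ (∃ l l', kk.1.2 l = kk.2.2 l')
    with hBadPred
  set Bad := (K ×ˢ K).filter BadPred with hBad
  have hS2le : ∫ p, S p ^ 2 ∂μ0 ≤ (Bad.card : ℝ) * σ2 := by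
    rw [hSsum, ← Finset.sum_product']
    calc ∑ kk ∈ K ×ˢ K, ∫ p, (g (Ψ kk.1 p) - mval) * (g (Ψ kk.2 p) - mval) ∂μ0
        ≤ ∑ kk ∈ K ×ˢ K, (if BadPred kk then σ2 else 0) := by
          refine Finset.sum_le_sum fun kk hkk => ?_
          rw [Finset.mem_product] at hkk
          by_cases hbad : BadPred kk
          · rw [if_pos hbad]
            exact hcov_le kk.1 hkk.1 kk.2 hkk.2
          · rw [if_neg hbad]
            simp only [hBadPred] at hbad
            push_neg at hbad
            exact le_of_eq (hcov_zero kk.1 hkk.1 kk.2 hkk.2 hbad.1 hbad.2)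
      _ = (Bad.card : ℝ) * σ2 := by
          rw [hBad, ← Finset.sum_filter, Finset.sum_const, nsmul_eq_mul]
  -- counting
  have hSPcard : SP.card = P.choose n := by rw [hSP]; exact sm_card n P
  have hSQcard : SQ.card = Q.choose n := by rw [hSQ]; exact sm_card n Q
  have hcnt_split : Bad.card ≤
      (((SP ×ˢ SP).filter fun ii => ∃ l l', ii.1 l = ii.2 l').card * (Q.choose n * Q.choose n))
      + ((P.choose n * P.choose n) *
          ((SQ ×ˢ SQ).filter fun aa => ∃ l l', aa.1 l = aa.2 l').card) := by
    have hsub : Bad ⊆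
        ((K ×ˢ K).filter fun kk => ∃ l l', kk.1.1 l = kk.2.1 l')
        ∪ ((K ×ˢ K).filter fun kk => ∃ l l', kk.1.2 l = kk.2.2 l') := by
      intro kk hkk
      rw [hBad, Finset.mem_filter] at hkk
      have h2 : (∃ l l', kk.1.1 l = kk.2.1 l') ∨ (∃ l l', kk.1.2 l = kk.2.2 l') := by
        have := hkk.2
        simpa [hBadPred] using this
      rcases h2 with h | h
      · exact Finset.mem_union_left _ (Finset.mem_filter.mpr ⟨hkk.1, h⟩)
      · exact Finset.mem_union_right _ (Finset.mem_filter.mpr ⟨hkk.1, h⟩)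
    have cardA_le : ((K ×ˢ K).filter fun kk => ∃ l l', kk.1.1 l = kk.2.1 l').card
        ≤ ((SP ×ˢ SP).filter fun ii => ∃ l l', ii.1 l = ii.2 l').card
          * (Q.choose n * Q.choose n) := by
      have hinj := Finset.card_le_card_of_injOn
        (f := fun kk : ((Fin n → Fin P) × (Fin n → Fin Q)) ×
            ((Fin n → Fin P) × (Fin n → Fin Q)) => ((kk.1.1, kk.2.1), (kk.1.2, kk.2.2)))
        (s := (K ×ˢ K).filter fun kk => ∃ l l', kk.1.1 l = kk.2.1 l')
        (t := (((SP ×ˢ SP).filter fun ii => ∃ l l', ii.1 l = ii.2 l') ×ˢ (SQ ×ˢ SQ)))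
        ?_ ?_
      · refine hinj.trans (le_of_eq ?_)
        rw [Finset.card_product, Finset.card_product, hSQcard]
      · intro kk hkk
        rw [Finset.mem_coe, Finset.mem_filter, Finset.mem_product] at hkk
        obtain ⟨⟨hk1, hk2⟩, hex⟩ := hkk
        rw [hK, Finset.mem_product] at hk1 hk2
        exact Finset.mem_product.mpr ⟨Finset.mem_filter.mpr
          ⟨Finset.mem_product.mpr ⟨hk1.1, hk2.1⟩, hex⟩,
          Finset.mem_product.mpr ⟨hk1.2, hk2.2⟩⟩
      · intro kk _ kk' _ heq
        simp only [Prod.mk.injEq] at heq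
        exact Prod.ext (Prod.ext heq.1.1 heq.2.1) (Prod.ext heq.1.2 heq.2.2)
    have cardB_le : ((K ×ˢ K).filter fun kk => ∃ l l', kk.1.2 l = kk.2.2 l').card
        ≤ (P.choose n * P.choose n)
          * ((SQ ×ˢ SQ).filter fun aa => ∃ l l', aa.1 l = aa.2 l').card := by
      have hinj := Finset.card_le_card_of_injOn
        (f := fun kk : ((Fin n → Fin P) × (Fin n → Fin Q)) ×
            ((Fin n → Fin P) × (Fin n → Fin Q)) => ((kk.1.1, kk.2.1), (kk.1.2, kk.2.2)))
        (s := (K ×ˢ K).filter fun kk => ∃ l l', kk.1.2 l = kk.2.2 l')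
        (t := ((SP ×ˢ SP) ×ˢ ((SQ ×ˢ SQ).filter fun aa => ∃ l l', aa.1 l = aa.2 l')))
        ?_ ?_
      · refine hinj.trans (le_of_eq ?_)
        rw [Finset.card_product, Finset.card_product, hSPcard]
      · intro kk hkk
        rw [Finset.mem_coe, Finset.mem_filter, Finset.mem_product] at hkk
        obtain ⟨⟨hk1, hk2⟩, hex⟩ := hkk
        rw [hK, Finset.mem_product] at hk1 hk2
        exact Finset.mem_product.mpr ⟨Finset.mem_product.mpr ⟨hk1.1, hk2.1⟩,
          Finset.mem_filter.mpr ⟨Finset.mem_product.mpr ⟨hk1.2, hk2.2⟩, hex⟩⟩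
      · intro kk _ kk' _ heq
        simp only [Prod.mk.injEq] at heq
        exact Prod.ext (Prod.ext heq.1.1 heq.2.1) (Prod.ext heq.1.2 heq.2.2)
    calc Bad.card ≤ (((K ×ˢ K).filter fun kk => ∃ l l', kk.1.1 l = kk.2.1 l')
          ∪ ((K ×ˢ K).filter fun kk => ∃ l l', kk.1.2 l = kk.2.2 l')).card :=
        Finset.card_le_card hsub
      _ ≤ ((K ×ˢ K).filter fun kk => ∃ l l', kk.1.1 l = kk.2.1 l').card
          + ((K ×ˢ K).filter fun kk => ∃ l l', kk.1.2 l = kk.2.2 l').card :=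
        Finset.card_union_le _ _
      _ ≤ _ := Nat.add_le_add cardA_le cardB_le
  have hBadPcard : (((SP ×ˢ SP).filter fun ii => ∃ l l', ii.1 l = ii.2 l').card) * P
      ≤ n ^ 2 * (P.choose n) ^ 2 := by
    have hstep2 : ∀ p, ((SP.filter fun i => ∃ l, i l = p).card) * P
        = n * P.choose n := by
      intro p
      rw [hSP, Finset.filter_filter]
      exact sm_cnt n P p
    have hstep1 : ((SP ×ˢ SP).filter fun ii => ∃ l l', ii.1 l = ii.2 l').card
        ≤ ∑ i' ∈ SP, ∑ l' : Fin n, (SP.filter fun i => ∃ l, i l = i' l').card := by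
      rw [Finset.card_filter, Finset.sum_product, Finset.sum_comm]
      refine Finset.sum_le_sum fun i' _ => ?_
      calc ∑ i ∈ SP, (if ∃ l l', i l = i' l' then 1 else 0)
          ≤ ∑ i ∈ SP, ∑ l' : Fin n, (if ∃ l, i l = i' l' then 1 else 0) := by
            refine Finset.sum_le_sum fun i _ => ?_
            by_cases hcase : ∃ l l', i l = i' l'
            · rw [if_pos hcase]
              obtain ⟨l0, l0', hw⟩ := hcase
              have h1 : (if ∃ l, i l = i' l0' then 1 else 0) = 1 := if_pos ⟨l0, hw⟩
              calc (1 : ℕ) = (if ∃ l, i l = i' l0' then 1 else 0) := h1.symm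
                _ ≤ ∑ l' : Fin n, (if ∃ l, i l = i' l' then 1 else 0) :=
                  Finset.single_le_sum
                    (f := fun l' : Fin n => if ∃ l, i l = i' l' then 1 else 0)
                    (fun _ _ => Nat.zero_le _) (Finset.mem_univ l0')
            · rw [if_neg hcase]
              exact Nat.zero_le _
        _ = ∑ l' : Fin n, ∑ i ∈ SP, (if ∃ l, i l = i' l' then 1 else 0) :=
            Finset.sum_comm
        _ = ∑ l' : Fin n, (SP.filter fun i => ∃ l, i l = i' l').card :=
            Finset.sum_congr rfl fun l' _ => (Finset.card_filter _ _).symm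
    calc ((SP ×ˢ SP).filter fun ii => ∃ l l', ii.1 l = ii.2 l').card * P
        ≤ (∑ i' ∈ SP, ∑ l' : Fin n, (SP.filter fun i => ∃ l, i l = i' l').card) * P :=
          Nat.mul_le_mul hstep1 (le_refl P)
      _ = ∑ i' ∈ SP, ∑ l' : Fin n,
            ((SP.filter fun i => ∃ l, i l = i' l').card * P) := by
          rw [Finset.sum_mul]
          exact Finset.sum_congr rfl fun i' _ => Finset.sum_mul _ _ _
      _ = ∑ i' ∈ SP, ∑ _l' : Fin n, (n * P.choose n) :=
          Finset.sum_congr rfl fun i' _ =>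
            Finset.sum_congr rfl fun l' _ => hstep2 (i' l')
      _ = SP.card * (n * (n * P.choose n)) := by
          simp [Finset.sum_const, Finset.card_univ, mul_assoc, mul_comm, mul_left_comm]
      _ = n ^ 2 * (P.choose n) ^ 2 := by
          rw [hSPcard]
          ring
  have hBadQcard : (((SQ ×ˢ SQ).filter fun ii => ∃ l l', ii.1 l = ii.2 l').card) * Q
      ≤ n ^ 2 * (Q.choose n) ^ 2 := by
    have hstep2 : ∀ p, ((SQ.filter fun i => ∃ l, i l = p).card) * Q
        = n * Q.choose n := by
      intro p
      rw [hSQ, Finset.filter_filter]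
      exact sm_cnt n Q p
    have hstep1 : ((SQ ×ˢ SQ).filter fun ii => ∃ l l', ii.1 l = ii.2 l').card
        ≤ ∑ i' ∈ SQ, ∑ l' : Fin n, (SQ.filter fun i => ∃ l, i l = i' l').card := by
      rw [Finset.card_filter, Finset.sum_product, Finset.sum_comm]
      refine Finset.sum_le_sum fun i' _ => ?_
      calc ∑ i ∈ SQ, (if ∃ l l', i l = i' l' then 1 else 0)
          ≤ ∑ i ∈ SQ, ∑ l' : Fin n, (if ∃ l, i l = i' l' then 1 else 0) := by
            refine Finset.sum_le_sum fun i _ => ?_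
            by_cases hcase : ∃ l l', i l = i' l'
            · rw [if_pos hcase]
              obtain ⟨l0, l0', hw⟩ := hcase
              have h1 : (if ∃ l, i l = i' l0' then 1 else 0) = 1 := if_pos ⟨l0, hw⟩
              calc (1 : ℕ) = (if ∃ l, i l = i' l0' then 1 else 0) := h1.symm
                _ ≤ ∑ l' : Fin n, (if ∃ l, i l = i' l' then 1 else 0) :=
                  Finset.single_le_sum
                    (f := fun l' : Fin n => if ∃ l, i l = i' l' then 1 else 0)
                    (fun _ _ => Nat.zero_le _) (Finset.mem_univ l0')
            · rw [if_neg hcase]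
              exact Nat.zero_le _
        _ = ∑ l' : Fin n, ∑ i ∈ SQ, (if ∃ l, i l = i' l' then 1 else 0) :=
            Finset.sum_comm
        _ = ∑ l' : Fin n, (SQ.filter fun i => ∃ l, i l = i' l').card :=
            Finset.sum_congr rfl fun l' _ => (Finset.card_filter _ _).symm
    calc ((SQ ×ˢ SQ).filter fun ii => ∃ l l', ii.1 l = ii.2 l').card * Q
        ≤ (∑ i' ∈ SQ, ∑ l' : Fin n, (SQ.filter fun i => ∃ l, i l = i' l').card) * Q :=
          Nat.mul_le_mul hstep1 (le_refl Q)
      _ = ∑ i' ∈ SQ, ∑ l' : Fin n,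
            ((SQ.filter fun i => ∃ l, i l = i' l').card * Q) := by
          rw [Finset.sum_mul]
          exact Finset.sum_congr rfl fun i' _ => Finset.sum_mul _ _ _
      _ = ∑ i' ∈ SQ, ∑ _l' : Fin n, (n * Q.choose n) :=
          Finset.sum_congr rfl fun i' _ =>
            Finset.sum_congr rfl fun l' _ => hstep2 (i' l')
      _ = SQ.card * (n * (n * Q.choose n)) := by
          simp [Finset.sum_const, Finset.card_univ, mul_assoc, mul_comm, mul_left_comm]
      _ = n ^ 2 * (Q.choose n) ^ 2 := by
          rw [hSQcard]
          ring
  -- real-valued count bound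
  have hcR : (Bad.card : ℝ) ≤ ((n : ℝ) ^ 2 * (((P.choose n : ℝ)) ^ 2 * ((Q.choose n : ℝ)) ^ 2))
      * (1 / (P : ℝ) + 1 / (Q : ℝ)) := by
    have hNat : Bad.card * (P * Q)
        ≤ n ^ 2 * (P.choose n) ^ 2 * (Q.choose n * Q.choose n) * Q
          + n ^ 2 * (Q.choose n) ^ 2 * (P.choose n * P.choose n) * P := by
      calc Bad.card * (P * Q)
          ≤ ((((SP ×ˢ SP).filter fun ii => ∃ l l', ii.1 l = ii.2 l').card
                * (Q.choose n * Q.choose n))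
              + ((P.choose n * P.choose n)
                * ((SQ ×ˢ SQ).filter fun aa => ∃ l l', aa.1 l = aa.2 l').card)) * (P * Q) :=
            Nat.mul_le_mul hcnt_split (le_refl _)
        _ = ((((SP ×ˢ SP).filter fun ii => ∃ l l', ii.1 l = ii.2 l').card) * P)
              * (Q.choose n * Q.choose n) * Q
            + ((((SQ ×ˢ SQ).filter fun aa => ∃ l l', aa.1 l = aa.2 l').card) * Q)
              * (P.choose n * P.choose n) * P := by ring
        _ ≤ (n ^ 2 * (P.choose n) ^ 2) * (Q.choose n * Q.choose n) * Q
            + (n ^ 2 * (Q.choose n) ^ 2) * (P.choose n * P.choose n) * P :=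
            Nat.add_le_add
              (Nat.mul_le_mul (Nat.mul_le_mul hBadPcard (le_refl _)) (le_refl _))
              (Nat.mul_le_mul (Nat.mul_le_mul hBadQcard (le_refl _)) (le_refl _))
        _ = _ := by ring
    have hPR : (0 : ℝ) < (P : ℝ) := by exact_mod_cast hPpos
    have hQR : (0 : ℝ) < (Q : ℝ) := by exact_mod_cast hQpos
    have hR0 : (Bad.card : ℝ) * ((P : ℝ) * (Q : ℝ))
        ≤ (n : ℝ) ^ 2 * ((P.choose n : ℝ)) ^ 2 * ((Q.choose n : ℝ) * (Q.choose n : ℝ)) * (Q : ℝ)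
          + (n : ℝ) ^ 2 * ((Q.choose n : ℝ)) ^ 2
            * ((P.choose n : ℝ) * (P.choose n : ℝ)) * (P : ℝ) := by
      exact_mod_cast hNat
    refine le_of_mul_le_mul_right ?_ (show (0:ℝ) < (P : ℝ) * (Q : ℝ) by positivity)
    calc (Bad.card : ℝ) * ((P : ℝ) * (Q : ℝ))
        ≤ (n : ℝ) ^ 2 * ((P.choose n : ℝ)) ^ 2 * ((Q.choose n : ℝ) * (Q.choose n : ℝ)) * (Q : ℝ)
          + (n : ℝ) ^ 2 * ((Q.choose n : ℝ)) ^ 2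
            * ((P.choose n : ℝ) * (P.choose n : ℝ)) * (P : ℝ) := hR0
      _ = ((n : ℝ) ^ 2 * (((P.choose n : ℝ)) ^ 2 * ((Q.choose n : ℝ)) ^ 2))
            * (1 / (P : ℝ) + 1 / (Q : ℝ)) * ((P : ℝ) * (Q : ℝ)) := by
          field_simp
  -- estimator identity
  set CPQ : ℝ := (P.choose n : ℝ) * (Q.choose n : ℝ) with hCPQ
  have hCPpos : 0 < P.choose n := Nat.choose_pos hP
  have hCQpos : 0 < Q.choose n := Nat.choose_pos hQ
  have hCpos : 0 < CPQ := by
    rw [hCPQ]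
    have h1 : (0:ℝ) < (P.choose n : ℝ) := by exact_mod_cast hCPpos
    have h2 : (0:ℝ) < (Q.choose n : ℝ) := by exact_mod_cast hCQpos
    positivity
  have hunfold : ∀ p : (Fin P → X) × (Fin Q → W),
      momentEstimator φ n p.1 p.2 - mval = CPQ⁻¹ * S p := by
    intro p
    have h1 : momentEstimator φ n p.1 p.2 = CPQ⁻¹ * ∑ k ∈ K, g (Ψ k p) := by
      simp only [momentEstimator]
      rw [hK, Finset.sum_product]
      rfl
    have h2 : S p = (∑ k ∈ K, g (Ψ k p)) - (K.card : ℝ) * mval := by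
      rw [hSdef]
      simp only
      rw [Finset.sum_sub_distrib, Finset.sum_const, nsmul_eq_mul]
    have hKcard : (K.card : ℝ) = CPQ := by
      rw [hK, Finset.card_product, hSPcard, hSQcard, hCPQ]
      push_cast
      ring
    rw [h1, h2, hKcard]
    field_simp
  have hSmeas : Measurable S := by
    rw [hSdef]
    refine Finset.measurable_sum K fun k _ => ((hgm.comp ?_).sub measurable_const)
    exact Measurable.prodMk
      (measurable_pi_lambda _ fun l => (measurable_pi_apply (k.1 l)).comp measurable_fst)
      (measurable_pi_lambda _ fun l => (measurable_pi_apply (k.2 l)).comp measurable_snd)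
  have hAmeas : Measurable fun p : (Fin P → X) × (Fin Q → W) =>
      momentEstimator φ n p.1 p.2 := by
    have heq : (fun p : (Fin P → X) × (Fin Q → W) => momentEstimator φ n p.1 p.2)
        = fun p => CPQ⁻¹ * S p + mval := by
      funext p
      have := hunfold p
      linarith
    rw [heq]
    exact (measurable_const.mul hSmeas).add measurable_const
  set h : (Fin P → X) × (Fin Q → W) → ℝ :=
    fun p => (momentEstimator φ n p.1 p.2 - mval) ^ 2 with hh
  have hheq : h = fun p => CPQ⁻¹ ^ 2 * S p ^ 2 := by
    funext p
    rw [hh]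
    simp only
    rw [hunfold p]
    ring
  have hhint : Integrable h μ0 := by
    rw [hheq]
    exact hS2int.const_mul _
  have hVle : ∫ p, h p ∂μ0 ≤ B := by
    have h1 : ∫ p, h p ∂μ0 = CPQ⁻¹ ^ 2 * ∫ p, S p ^ 2 ∂μ0 := by
      rw [hheq]
      exact integral_const_mul _ _
    rw [h1]
    have h3 : (Bad.card : ℝ) * σ2
        ≤ (n : ℝ) ^ 2 * CPQ ^ 2 * (1 / (P : ℝ) + 1 / (Q : ℝ)) * σ2 := by
      refine mul_le_mul_of_nonneg_right ?_ hσnn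
      calc (Bad.card : ℝ)
          ≤ ((n : ℝ) ^ 2 * (((P.choose n : ℝ)) ^ 2 * ((Q.choose n : ℝ)) ^ 2))
            * (1 / (P : ℝ) + 1 / (Q : ℝ)) := hcR
        _ = (n : ℝ) ^ 2 * CPQ ^ 2 * (1 / (P : ℝ) + 1 / (Q : ℝ)) := by rw [hCPQ]; ring
    calc CPQ⁻¹ ^ 2 * ∫ p, S p ^ 2 ∂μ0
        ≤ CPQ⁻¹ ^ 2 * ((Bad.card : ℝ) * σ2) :=
          mul_le_mul_of_nonneg_left hS2le (by positivity)
      _ ≤ CPQ⁻¹ ^ 2 * ((n : ℝ) ^ 2 * CPQ ^ 2 * (1 / (P : ℝ) + 1 / (Q : ℝ)) * σ2) :=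
          mul_le_mul_of_nonneg_left h3 (by positivity)
      _ = B := by
          rw [hB]
          field_simp
  set E := {p : (Fin P → X) × (Fin Q → W) | |momentEstimator φ n p.1 p.2 - mval| ≤ t} with hE
  have hEmeas : MeasurableSet E :=
    measurableSet_le ((hAmeas.sub measurable_const).abs) measurable_const
  have hcompl : μ0 E + μ0 Eᶜ = 1 := by
    rw [measure_add_measure_compl hEmeas, measure_univ]
  rcases eq_or_lt_of_le hBnn with hB0 | hBpos
  · -- B = 0
    have hV0 : ∫ p, h p ∂μ0 = 0 :=
      le_antisymm (hVle.trans (le_of_eq hB0.symm)) (integral_nonneg fun p => sq_nonneg _)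
    have hae : h =ᵐ[μ0] 0 :=
      (integral_eq_zero_iff_of_nonneg_ae
        (Filter.Eventually.of_forall fun p => sq_nonneg _) hhint).mp hV0
    have hsub : ∀ᵐ p ∂μ0, p ∈ E := by
      filter_upwards [hae] with p hp
      have hp2 : (momentEstimator φ n p.1 p.2 - mval) ^ 2 = 0 := hp
      have h0 : momentEstimator φ n p.1 p.2 - mval = 0 := by
        exact pow_eq_zero_iff two_ne_zero |>.mp hp2
      show |momentEstimator φ n p.1 p.2 - mval| ≤ t
      rw [h0, abs_zero, ht]
      exact Real.sqrt_nonneg _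
    have hcompl0 : μ0 Eᶜ = 0 := by
      rw [MeasureTheory.ae_iff] at hsub
      exact hsub
    calc ENNReal.ofReal (1 - δ) ≤ 1 := ENNReal.ofReal_le_one.mpr (by linarith)
      _ = μ0 E := by rw [← hcompl, hcompl0, add_zero]
  · -- 0 < B
    have htpos : 0 < t := by
      rw [ht]
      apply Real.sqrt_pos.mpr
      rw [htarg]
      positivity
    have hmark := mul_meas_ge_le_integral_of_nonneg (μ := μ0)
      (Filter.Eventually.of_forall fun p => sq_nonneg _ : 0 ≤ᵐ[μ0] h) hhint (t ^ 2)
    have hBδ : B = δ * t ^ 2 := by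
      rw [ht2]
      field_simp
    have htoReal : (μ0 {p | t ^ 2 ≤ h p}).toReal ≤ δ := by
      have h4 := hmark.trans (hVle.trans (le_of_eq hBδ))
      have h5 : t ^ 2 * (μ0 {p | t ^ 2 ≤ h p}).toReal ≤ t ^ 2 * δ := by simp only [Measure.real] at h4; linarith
      exact le_of_mul_le_mul_left h5 (pow_pos htpos 2)
    have hbadle : μ0 {p | t ^ 2 ≤ h p} ≤ ENNReal.ofReal δ :=
      (ENNReal.le_ofReal_iff_toReal_le (measure_ne_top _ _) hδ0.le).mpr htoReal
    have hEcsub : Eᶜ ⊆ {p | t ^ 2 ≤ h p} := by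
      intro p hp
      have h5 : ¬ |momentEstimator φ n p.1 p.2 - mval| ≤ t := hp
      push_neg at h5
      have h6 : t ^ 2 ≤ |momentEstimator φ n p.1 p.2 - mval| ^ 2 :=
        pow_le_pow_left₀ htpos.le h5.le 2
      rw [sq_abs] at h6
      exact h6
    have hEcle : μ0 Eᶜ ≤ ENNReal.ofReal δ := (measure_mono hEcsub).trans hbadle
    have hδsum : ENNReal.ofReal (1 - δ) + ENNReal.ofReal δ = 1 := by
      rw [← ENNReal.ofReal_add (by linarith) hδ0.le]
      norm_num
    have hfin : ENNReal.ofReal (1 - δ) + ENNReal.ofReal δ ≤ μ0 E + ENNReal.ofReal δ := by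
      calc ENNReal.ofReal (1 - δ) + ENNReal.ofReal δ = 1 := hδsum
        _ = μ0 E + μ0 Eᶜ := hcompl.symm
        _ ≤ μ0 E + ENNReal.ofReal δ := add_le_add_right hEcle _
    exact ENNReal.le_of_add_le_add_right ENNReal.ofReal_ne_top hfin

set_option maxHeartbeats 1000000 in
/-- Chebyshev-type guarantee: with probability at least `1 − δ`,
`|m̂(n) − m(n)| ≤ sqrt((f(n)/δ)(1/P + 1/Q))`, where
`f(n) = n² Var(∏_i φ(x_i,w_i) φ(x_{i+1},w_i))` and `m(n)` is the `n`-th spectral moment. -/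
theorem momentEstimator_concentration
    {X W : Type*} [MeasurableSpace X] [MeasurableSpace W]
    (ρX : Measure X) (ρW : Measure W)
    [IsProbabilityMeasure ρX] [IsProbabilityMeasure ρW]
    (φ : X × W → ℝ) (hφ : MemLp φ 4 (ρX.prod ρW))
    (n : ℕ) [NeZero n] (P Q : ℕ) (hP : n ≤ P) (hQ : n ≤ Q)
    (δ : ℝ) (hδ0 : 0 < δ) (hδ1 : δ < 1) :
    ENNReal.ofReal (1 - δ) ≤
      ((Measure.pi fun _ => ρX).prod (Measure.pi fun _ => ρW))
        {p : (Fin P → X) × (Fin Q → W) |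
          |momentEstimator φ n p.1 p.2 -
              ∫ x : Fin n → X,
                ∏ l : Fin n, ∫ w, φ (x l, w) * φ (x (l + 1), w) ∂ρW
                ∂(Measure.pi fun _ => ρX)| ≤
            Real.sqrt
              (((n : ℝ) ^ 2 *
                  variance (fun p : (Fin n → X) × (Fin n → W) =>
                      ∏ l : Fin n, φ (p.1 l, p.2 l) * φ (p.1 (l + 1), p.2 l))
                    ((Measure.pi fun _ => ρX).prod (Measure.pi fun _ => ρW)) / δ) *
                (1 / (P : ℝ) + 1 / (Q : ℝ)))} := by
  classical
  set φ' : X × W → ℝ := hφ.1.mk φ with hφ'def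
  have hsm : StronglyMeasurable φ' := hφ.1.stronglyMeasurable_mk
  have haeφ : φ =ᵐ[ρX.prod ρW] φ' := hφ.1.ae_eq_mk
  have hφ4' : MemLp φ' 4 (ρX.prod ρW) := hφ.ae_eq haeφ
  have hmain := main_meas ρX ρW φ' hsm hφ4' n P Q hP hQ δ hδ0 hδ1
  -- variance transfer
  have hgae : (fun p : (Fin n → X) × (Fin n → W) =>
      ∏ l : Fin n, φ (p.1 l, p.2 l) * φ (p.1 (l + 1), p.2 l))
      =ᵐ[(Measure.pi fun _ => ρX).prod (Measure.pi fun _ => ρW)]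
      (fun p => ∏ l : Fin n, φ' (p.1 l, p.2 l) * φ' (p.1 (l + 1), p.2 l)) := by
    have hcoord : ∀ j j' : Fin n,
        ∀ᵐ p ∂((Measure.pi fun _ : Fin n => ρX).prod (Measure.pi fun _ : Fin n => ρW)),
          φ (p.1 j, p.2 j') = φ' (p.1 j, p.2 j') := by
      intro j j'
      have hmp : MeasurePreserving
          (fun p : (Fin n → X) × (Fin n → W) => ((p.1 j, p.2 j') : X × W))
          ((Measure.pi fun _ => ρX).prod (Measure.pi fun _ => ρW)) (ρX.prod ρW) :=
        (mp_eval ρX j).prod (mp_eval ρW j')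
      have h2 := ae_eq_comp hmp.aemeasurable (hmp.map_eq.symm ▸ haeφ)
      filter_upwards [h2] with p hp
      exact hp
    have hall : ∀ᵐ p ∂((Measure.pi fun _ : Fin n => ρX).prod (Measure.pi fun _ : Fin n => ρW)),
        ∀ j j' : Fin n, φ (p.1 j, p.2 j') = φ' (p.1 j, p.2 j') :=
      ae_all_iff.mpr fun j => ae_all_iff.mpr fun j' => hcoord j j'
    filter_upwards [hall] with p hp
    exact Finset.prod_congr rfl fun l _ => by rw [hp l l, hp (l + 1) l]
  have hvar_eq : variance (fun p : (Fin n → X) × (Fin n → W) =>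
      ∏ l : Fin n, φ (p.1 l, p.2 l) * φ (p.1 (l + 1), p.2 l))
        ((Measure.pi fun _ => ρX).prod (Measure.pi fun _ => ρW))
      = variance (fun p : (Fin n → X) × (Fin n → W) =>
        ∏ l : Fin n, φ' (p.1 l, p.2 l) * φ' (p.1 (l + 1), p.2 l))
        ((Measure.pi fun _ => ρX).prod (Measure.pi fun _ => ρW)) :=
    variance_congr_ae hgae
  -- moment transfer
  have hslice : ∀ᵐ y ∂ρX, (fun w => φ (y, w)) =ᵐ[ρW] (fun w => φ' (y, w)) :=
    Measure.ae_ae_of_ae_prod haeφ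
  have hmom_ae : ∀ᵐ x ∂(Measure.pi fun _ : Fin n => ρX),
      ∀ j : Fin n, (fun w => φ (x j, w)) =ᵐ[ρW] (fun w => φ' (x j, w)) :=
    ae_all_iff.mpr fun j =>
      ae_of_ae_map (mp_eval ρX j).aemeasurable ((mp_eval ρX j).map_eq.symm ▸ hslice)
  have hmom : (∫ x : Fin n → X,
      ∏ l : Fin n, ∫ w, φ (x l, w) * φ (x (l + 1), w) ∂ρW ∂(Measure.pi fun _ => ρX))
      = ∫ x : Fin n → X,
        ∏ l : Fin n, ∫ w, φ' (x l, w) * φ' (x (l + 1), w) ∂ρW ∂(Measure.pi fun _ => ρX) := by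
    refine integral_congr_ae ?_
    filter_upwards [hmom_ae] with x hx
    refine Finset.prod_congr rfl fun l _ => integral_congr_ae ?_
    filter_upwards [hx l, hx (l + 1)] with w h1 h2
    rw [h1, h2]
  -- estimator transfer
  have hest_ae : ∀ᵐ p ∂((Measure.pi fun _ : Fin P => ρX).prod (Measure.pi fun _ : Fin Q => ρW)),
      momentEstimator φ n p.1 p.2 = momentEstimator φ' n p.1 p.2 := by
    have hcoord2 : ∀ (j : Fin P) (b : Fin Q),
        ∀ᵐ p ∂((Measure.pi fun _ : Fin P => ρX).prod (Measure.pi fun _ : Fin Q => ρW)),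
          φ (p.1 j, p.2 b) = φ' (p.1 j, p.2 b) := by
      intro j b
      have hmp : MeasurePreserving
          (fun p : (Fin P → X) × (Fin Q → W) => ((p.1 j, p.2 b) : X × W))
          ((Measure.pi fun _ => ρX).prod (Measure.pi fun _ => ρW)) (ρX.prod ρW) :=
        (mp_eval ρX j).prod (mp_eval ρW b)
      have h2 := ae_eq_comp hmp.aemeasurable (hmp.map_eq.symm ▸ haeφ)
      filter_upwards [h2] with p hp
      exact hp
    have hall : ∀ᵐ p ∂((Measure.pi fun _ : Fin P => ρX).prod (Measure.pi fun _ : Fin Q => ρW)),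
        ∀ (j : Fin P) (b : Fin Q), φ (p.1 j, p.2 b) = φ' (p.1 j, p.2 b) :=
      ae_all_iff.mpr fun j => ae_all_iff.mpr fun b => hcoord2 j b
    filter_upwards [hall] with p hp
    simp only [momentEstimator]
    congr 1
    refine Finset.sum_congr rfl fun i _ =>
      Finset.sum_congr rfl fun a _ => Finset.prod_congr rfl fun l _ => ?_
    rw [hp (i l) (a l), hp (i (l + 1)) (a l)]
  rw [hvar_eq, hmom]
  refine le_trans hmain (le_of_eq ?_)
  refine measure_congr ?_
  rw [Filter.eventuallyEq_set]
  filter_upwards [hest_ae] with p hp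
  simp only [Set.mem_setOf_eq, hp]
end

section
/- For natural numbers P, Q, n with 2n ≤ P and 2n ≤ Q, one has 1 − (C(P−n,n)·C(Q−n,n)) / (C(P,n)·C(Q,n)) ≤ n²·(1/P + 1/Q), where C(·,·) denotes the binomial coefficient and the inequality is between real numbers. -/
lemma aux_choose (m k : ℕ) : (m+1).choose k * (m + 1 - k) = (m+1) * m.choose k := by
  rw [← Nat.choose_succ_right_eq, ← Nat.add_one_mul_choose_eq]

lemma key_choose_ratio (n P : ℕ) (h : 2 * n ≤ P) :
    ((P:ℝ) - (n:ℝ)^2) * (P.choose n) ≤ (P:ℝ) * ((P - n).choose n) := by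
  induction n with
  | zero => simp
  | succ n ih =>
    have ih' := ih (by omega)
    set p : ℝ := (P:ℝ) with hpdef
    have hp : (2*(n:ℝ)+2) ≤ p := by exact_mod_cast (by exact_mod_cast h : ((2*(n+1):ℕ):ℝ) ≤ (P:ℝ)) |>.trans_eq' (by push_cast; ring)
    set A : ℝ := (P.choose n : ℝ)
    set A' : ℝ := (P.choose (n+1) : ℝ)
    set B : ℝ := ((P - n).choose n : ℝ)
    set B' : ℝ := ((P - (n+1)).choose (n+1) : ℝ)
    set C : ℝ := ((P - (n+1)).choose n : ℝ)
    have hA : (0:ℝ) ≤ A := Nat.cast_nonneg _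
    have hB : (0:ℝ) ≤ B := Nat.cast_nonneg _
    have e1 : A' * ((n:ℝ)+1) = A * (p - n) := by
      have h' := Nat.choose_succ_right_eq P n
      have h2 := congrArg (fun x : ℕ => (x:ℝ)) h'
      push_cast [Nat.cast_sub (show n ≤ P by omega)] at h2
      linarith
    have e2 : B' * ((n:ℝ)+1) = C * (p - (2*(n:ℝ)+1)) := by
      have h' := Nat.choose_succ_right_eq (P - (n+1)) n
      have h2 := congrArg (fun x : ℕ => (x:ℝ)) h'
      have hsub : P - (n+1) - n = P - (2*n+1) := by omega
      rw [hsub] at h2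
      push_cast [Nat.cast_sub (show 2*n+1 ≤ P by omega)] at h2
      linarith
    have e3 : B * (p - 2*(n:ℝ)) = (p - (n:ℝ)) * C := by
      have h' := aux_choose (P - (n+1)) n
      have hm : P - (n+1) + 1 = P - n := by omega
      rw [hm] at h'
      have hsub : P - n - n = P - 2*n := by omega
      rw [hsub] at h'
      have h2 := congrArg (fun x : ℕ => (x:ℝ)) h'
      push_cast [Nat.cast_sub (show n ≤ P by omega), Nat.cast_sub (show 2*n ≤ P by omega)] at h2
      linarith
    have hprod : (0:ℝ) ≤ (p - 2*(n:ℝ)) * (p - (2*(n:ℝ)+1)) := by nlinarith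
    have poly : (p - ((n:ℝ)+1)^2) * (p - (n:ℝ))^2 ≤ (p - (n:ℝ)^2) * ((p - 2*(n:ℝ)) * (p - (2*(n:ℝ)+1))) := by
      nlinarith [sq_nonneg (n:ℝ), Nat.cast_nonneg (α := ℝ) n, mul_nonneg (mul_nonneg (Nat.cast_nonneg (α := ℝ) n) (Nat.cast_nonneg (α := ℝ) n)) (Nat.cast_nonneg (α := ℝ) n)]
    have s1 : (p - ((n:ℝ)+1)^2) * A * (p - (n:ℝ))^2 ≤ (p - (n:ℝ)^2) * A * ((p - 2*(n:ℝ)) * (p - (2*(n:ℝ)+1))) := by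
      nlinarith [mul_le_mul_of_nonneg_left poly hA]
    have s2 : (p - (n:ℝ)^2) * A * ((p - 2*(n:ℝ)) * (p - (2*(n:ℝ)+1))) ≤ p * B * ((p - 2*(n:ℝ)) * (p - (2*(n:ℝ)+1))) :=
      mul_le_mul_of_nonneg_right ih' hprod
    have hpos : (0:ℝ) < ((n:ℝ)+1) * (p - n) := by
      apply mul_pos (by positivity)
      have : (0:ℝ) ≤ (n:ℝ) := Nat.cast_nonneg _
      linarith
    have key1 : (p - ((n:ℝ)+1)^2) * A' * (((n:ℝ)+1) * (p - n)) = (p - ((n:ℝ)+1)^2) * A * (p - (n:ℝ))^2 := by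
      linear_combination (p - ((n:ℝ)+1)^2) * (p - (n:ℝ)) * e1
    have key2 : p * B' * (((n:ℝ)+1) * (p - n)) = p * B * ((p - 2*(n:ℝ)) * (p - (2*(n:ℝ)+1))) := by
      linear_combination p * (p - (n:ℝ)) * e2 - p * (p - (2*(n:ℝ)+1)) * e3
    have goal' : (p - ((n:ℝ)+1)^2) * A' * (((n:ℝ)+1) * (p - n)) ≤ p * B' * (((n:ℝ)+1) * (p - n)) := by
      rw [key1, key2]; exact le_trans s1 s2
    have := le_of_mul_le_mul_right goal' hpos
    calc (p - ((n+1:ℕ):ℝ)^2) * (P.choose (n+1)) = (p - ((n:ℝ)+1)^2) * A' := by push_cast; ring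
    _ ≤ p * B' := this
    _ = p * ((P - (n+1)).choose (n+1)) := rfl


/-- For `2n ≤ P` and `2n ≤ Q`, the real-number inequality
`1 − C(P−n,n)C(Q−n,n)/(C(P,n)C(Q,n)) ≤ n²(1/P + 1/Q)` holds. -/
theorem one_sub_choose_ratio_le (P Q n : ℕ) (hP : 2 * n ≤ P) (hQ : 2 * n ≤ Q) :
    1 - (((P - n).choose n : ℝ) * ((Q - n).choose n : ℝ)) /
          ((P.choose n : ℝ) * (Q.choose n : ℝ))
      ≤ (n : ℝ) ^ 2 * (1 / (P : ℝ) + 1 / (Q : ℝ)) := by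
  rcases Nat.eq_zero_or_pos n with rfl | hn
  · simp
  have hP0 : 0 < P := by omega
  have hQ0 : 0 < Q := by omega
  have hAP : (0:ℝ) < (P.choose n : ℝ) := by exact_mod_cast Nat.choose_pos (by omega)
  have hAQ : (0:ℝ) < (Q.choose n : ℝ) := by exact_mod_cast Nat.choose_pos (by omega)
  have hpR : (0:ℝ) < (P:ℝ) := by exact_mod_cast hP0
  have hqR : (0:ℝ) < (Q:ℝ) := by exact_mod_cast hQ0
  set x : ℝ := ((P - n).choose n : ℝ) / (P.choose n : ℝ) with hx
  set y : ℝ := ((Q - n).choose n : ℝ) / (Q.choose n : ℝ) with hy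
  have hx1 : x ≤ 1 := by
    rw [hx, div_le_one hAP]
    exact_mod_cast Nat.choose_le_choose n (Nat.sub_le P n)
  have hy1 : y ≤ 1 := by
    rw [hy, div_le_one hAQ]
    exact_mod_cast Nat.choose_le_choose n (Nat.sub_le Q n)
  have hx2 : 1 - (n:ℝ)^2 / P ≤ x := by
    have h1 : 1 - (n:ℝ)^2 / P = ((P:ℝ) - (n:ℝ)^2) / P := by field_simp
    rw [hx, h1, div_le_div_iff₀ hpR hAP]
    have := key_choose_ratio n P hP
    linarith
  have hy2 : 1 - (n:ℝ)^2 / Q ≤ y := by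
    have h1 : 1 - (n:ℝ)^2 / Q = ((Q:ℝ) - (n:ℝ)^2) / Q := by field_simp
    rw [hy, h1, div_le_div_iff₀ hqR hAQ]
    have := key_choose_ratio n Q hQ
    linarith
  have hxy : (((P - n).choose n : ℝ) * ((Q - n).choose n : ℝ)) /
      ((P.choose n : ℝ) * (Q.choose n : ℝ)) = x * y := by
    rw [hx, hy, div_mul_div_comm]
  rw [hxy]
  have hrhs : (n : ℝ) ^ 2 * (1 / (P : ℝ) + 1 / (Q : ℝ)) = (n:ℝ)^2/P + (n:ℝ)^2/Q := by ring
  rw [hrhs]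
  nlinarith [mul_nonneg (sub_nonneg.2 hx1) (sub_nonneg.2 hy1)]
end

section
/- Let η > 0 be a real number and define φ_η = (1 + sqrt(1 + 4η)) / (2η). Then for every natural number n ≥ 1, ∏_{q=1}^{n} ( 1 + 2η − 2η·cos(2πq/n) ) = ( ηⁿ·φ_ηⁿ − φ_η^{−n} )². -/
open Finset Complex Polynomial

lemma prod_range_c (n : ℕ) (hn : 1 ≤ n) (c : ℂ) :
    ∏ i ∈ range n, (c - Complex.exp (2 * Real.pi * Complex.I / n) ^ i) = c ^ n - 1 := by
  have hζ := Complex.isPrimitiveRoot_exp n (by omega)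
  have h := X_pow_sub_C_eq_prod hζ (by omega : 0 < n) (one_pow n : (1:ℂ)^n = 1)
  have := (congr_arg (Polynomial.eval c) h).symm
  simpa [Polynomial.eval_prod] using this

lemma prod_Icc_c (n : ℕ) (hn : 1 ≤ n) (c : ℂ) :
    ∏ q ∈ Icc 1 n, (c - Complex.exp (2 * Real.pi * Complex.I / n) ^ q) = c ^ n - 1 := by
  set ζ := Complex.exp (2 * Real.pi * Complex.I / n) with hζdef
  have hζ := Complex.isPrimitiveRoot_exp n (by omega : (n:ℕ) ≠ 0)
  obtain ⟨m, rfl⟩ : ∃ m, n = m + 1 := ⟨n - 1, by omega⟩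
  rw [← prod_range_c (m+1) hn c]
  rw [← Finset.Ico_add_one_right_eq_Icc, Finset.prod_Ico_eq_prod_range]
  simp only [Nat.add_sub_cancel, Nat.succ_sub_one]
  rw [Finset.prod_range_succ, Finset.prod_range_succ']
  have h1 : ζ ^ (1 + m) = 1 := by rw [add_comm]; exact hζ.pow_eq_one
  rw [h1, pow_zero]
  congr 1
  exact Finset.prod_congr rfl (fun x _ => by rw [add_comm])

lemma fac (a θ : ℂ) :
    (a - Complex.exp (θ * Complex.I)) * (a - Complex.exp (-θ * Complex.I))
      = a ^ 2 - 2 * a * Complex.cos θ + 1 := by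
  rw [show -θ * Complex.I = (-θ) * Complex.I by ring, Complex.exp_mul_I, Complex.exp_mul_I,
    Complex.cos_neg, Complex.sin_neg]
  linear_combination Complex.sin_sq_add_cos_sq θ - Complex.sin θ ^ 2 * Complex.I_sq

lemma prod_quad (n : ℕ) (hn : 1 ≤ n) (a : ℝ) :
    ∏ q ∈ Icc 1 n, (a ^ 2 - 2 * a * Real.cos (2 * Real.pi * q / n) + 1)
      = (a ^ n - 1) ^ 2 := by
  have key : ∀ q : ℕ, ((2 * Real.pi * q / n : ℝ) : ℂ) * Complex.I
      = q * (2 * Real.pi * Complex.I / n) := by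
    intro q; push_cast; ring
  apply Complex.ofReal_injective
  rw [Complex.ofReal_prod]
  calc ∏ q ∈ Icc 1 n, (((a ^ 2 - 2 * a * Real.cos (2 * Real.pi * q / n) + 1 : ℝ)) : ℂ)
      = ∏ q ∈ Icc 1 n, (((a:ℂ) - Complex.exp (((2 * Real.pi * q / n : ℝ):ℂ) * Complex.I)) *
          ((a:ℂ) - Complex.exp (-((2 * Real.pi * q / n : ℝ):ℂ) * Complex.I))) := by
        refine Finset.prod_congr rfl fun q _ => ?_
        rw [fac]
        push_cast
        ring
    _ = (∏ q ∈ Icc 1 n, ((a:ℂ) - Complex.exp (2 * Real.pi * Complex.I / n) ^ q)) *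
          (∏ q ∈ Icc 1 n, ((a:ℂ) - (starRingEnd ℂ) (Complex.exp (2 * Real.pi * Complex.I / n) ^ q))) := by
        rw [← Finset.prod_mul_distrib]
        refine Finset.prod_congr rfl fun q _ => ?_
        congr 1
        · rw [key q, Complex.exp_nat_mul]
        · rw [← Complex.exp_nat_mul, ← Complex.exp_conj, ← key q]
          congr 1
          rw [map_mul, Complex.conj_ofReal, Complex.conj_I]
          ring_nf
    _ = (((a ^ n - 1) ^ 2 : ℝ) : ℂ) := by
        have h2 : ∏ q ∈ Icc 1 n, ((a:ℂ) - (starRingEnd ℂ) (Complex.exp (2 * Real.pi * Complex.I / n) ^ q))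
            = (starRingEnd ℂ) (∏ q ∈ Icc 1 n, ((a:ℂ) - Complex.exp (2 * Real.pi * Complex.I / n) ^ q)) := by
          rw [map_prod]
          exact Finset.prod_congr rfl fun q _ => by rw [map_sub, Complex.conj_ofReal]
        rw [h2, prod_Icc_c n hn, map_sub, map_pow, Complex.conj_ofReal, map_one]
        push_cast
        ring

/-- For `η > 0`, `φ_η = (1 + sqrt(1+4η))/(2η)` and `n ≥ 1`,
`∏_{q=1}^{n} (1 + 2η − 2η·cos(2πq/n)) = (ηⁿ φ_ηⁿ − φ_η^{−n})²`. -/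
theorem prod_one_add_two_eta_sub_cos (η : ℝ) (hη : 0 < η)
    (φ : ℝ) (hφ : φ = (1 + Real.sqrt (1 + 4 * η)) / (2 * η))
    (n : ℕ) (hn : 1 ≤ n) :
    ∏ q ∈ Finset.Icc 1 n,
        (1 + 2 * η - 2 * η * Real.cos (2 * Real.pi * (q : ℝ) / (n : ℝ)))
      = (η ^ n * φ ^ n - (φ ^ n)⁻¹) ^ 2 := by
  have hs : Real.sqrt (1 + 4 * η) ^ 2 = 1 + 4 * η := Real.sq_sqrt (by positivity)
  have hsnn : 0 ≤ Real.sqrt (1 + 4 * η) := Real.sqrt_nonneg _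
  have hφpos : 0 < φ := by rw [hφ]; positivity
  have hrel : η * φ ^ 2 = φ + 1 := by
    subst hφ
    field_simp
    nlinarith [hs, Real.sq_sqrt (show (0:ℝ) ≤ 1 + η * 4 by positivity)]
  set a : ℝ := η * φ ^ 2 with ha
  have hapos : 0 < a := by positivity
  have hquad : η * a ^ 2 + η = (1 + 2 * η) * a := by
    rw [ha]; linear_combination (η^2*φ^2 + η*φ - η) * hrel
  have step1 : ∀ θ : ℝ, 1 + 2 * η - 2 * η * Real.cos θ
      = (η / a) * (a ^ 2 - 2 * a * Real.cos θ + 1) := by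
    intro θ
    field_simp
    nlinarith [hquad, Real.cos_le_one θ]
  calc ∏ q ∈ Finset.Icc 1 n,
        (1 + 2 * η - 2 * η * Real.cos (2 * Real.pi * (q : ℝ) / (n : ℝ)))
      = ∏ q ∈ Finset.Icc 1 n,
        ((η / a) * (a ^ 2 - 2 * a * Real.cos (2 * Real.pi * (q : ℝ) / (n : ℝ)) + 1)) := by
        exact Finset.prod_congr rfl fun q _ => step1 _
    _ = (η / a) ^ n * ∏ q ∈ Finset.Icc 1 n,
        (a ^ 2 - 2 * a * Real.cos (2 * Real.pi * (q : ℝ) / (n : ℝ)) + 1) := by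
        rw [Finset.prod_mul_distrib, Finset.prod_const, Nat.card_Icc]
        simp
    _ = (η / a) ^ n * (a ^ n - 1) ^ 2 := by rw [prod_quad n hn a]
    _ = (η ^ n * φ ^ n - (φ ^ n)⁻¹) ^ 2 := by
        rw [ha]
        rw [div_pow, mul_pow]
        field_simp
        ring
end

section
/- Let λ, μ : ℕ → ℝ be two nonnegative, nonincreasing, summable sequences such that for every natural number n ≥ 1 the power-sum series Σ_{i} λ_iⁿ and Σ_{i} μ_iⁿ are equal. Then λ_i = μ_i for every i; that is, the sequence of spectral moments uniquely determines a nonincreasing nonnegative summable eigenvalue sequence. -/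
private lemma pow_summable {f : ℕ → ℝ} (hf0 : ∀ i, 0 ≤ f i) (hfA : Antitone f)
    (hfS : Summable f) (n : ℕ) (hn : 1 ≤ n) : Summable fun i => f i ^ n := by
  obtain ⟨m, rfl⟩ := Nat.exists_eq_add_of_le hn
  refine Summable.of_nonneg_of_le (fun i => pow_nonneg (hf0 i) _)
    (fun i => ?_) (hfS.mul_left (f 0 ^ m))
  calc f i ^ (1 + m) = f i ^ m * f i := by ring
    _ ≤ f 0 ^ m * f i :=
      mul_le_mul_of_nonneg_right (pow_le_pow_left₀ (hf0 i) (hfA (Nat.zero_le i)) m) (hf0 i)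

private lemma aux_le
    (lam mu : ℕ → ℝ) (hlam0 : ∀ i, 0 ≤ lam i) (hmu0 : ∀ i, 0 ≤ mu i)
    (hlamA : Antitone lam) (hmuA : Antitone mu)
    (hlamS : Summable lam) (hmuS : Summable mu)
    (h : ∀ n : ℕ, 1 ≤ n → ∑' i, lam i ^ n = ∑' i, mu i ^ n)
    (k : ℕ) (hk : ∀ j, j < k → lam j = mu j) : lam k ≤ mu k := by
  by_contra hlt
  push_neg at hlt
  set a := lam k with ha
  set b := mu k with hb
  -- tail power sums are equal
  have htail : ∀ n : ℕ, 1 ≤ n →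
      (∑' i, lam (i + k) ^ n) = ∑' i, mu (i + k) ^ n := by
    intro n hn
    have h1 := Summable.sum_add_tsum_nat_add k (pow_summable hlam0 hlamA hlamS n hn)
    have h2 := Summable.sum_add_tsum_nat_add k (pow_summable hmu0 hmuA hmuS n hn)
    have hsum : (∑ i ∈ Finset.range k, lam i ^ n) = ∑ i ∈ Finset.range k, mu i ^ n :=
      Finset.sum_congr rfl fun i hi => by rw [hk i (Finset.mem_range.mp hi)]
    have := h n hn
    linarith [h1, h2]
  -- For each n ≥ 1 : a^n ≤ C * b^(n-1) where C = ∑' i, mu (i + k)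
  set C := ∑' i, mu (i + k) with hC
  have hCnonneg : 0 ≤ C := tsum_nonneg fun i => hmu0 _
  have hmuS' : Summable fun i => mu (i + k) := hmuS.comp_injective (add_left_injective k)
  have key : ∀ m : ℕ, a ^ (m + 1) ≤ b ^ m * C := by
    intro m
    have hn : 1 ≤ m + 1 := Nat.le_add_left 1 m
    have hSl := (pow_summable hlam0 hlamA hlamS (m+1) hn).comp_injective (add_left_injective k)
    have hSm := (pow_summable hmu0 hmuA hmuS (m+1) hn).comp_injective (add_left_injective k)
    have h0 : a ^ (m + 1) ≤ ∑' i, lam (i + k) ^ (m + 1) := by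
      have := Summable.le_tsum hSl 0 (fun j _ => pow_nonneg (hlam0 _) _)
      simpa using this
    have h1 : (∑' i, mu (i + k) ^ (m + 1)) ≤ ∑' i, b ^ m * mu (i + k) := by
      refine Summable.tsum_le_tsum (fun i => ?_) hSm (hmuS'.mul_left _)
      calc mu (i + k) ^ (m + 1) = mu (i + k) ^ m * mu (i + k) := by ring
        _ ≤ b ^ m * mu (i + k) :=
          mul_le_mul_of_nonneg_right
            (pow_le_pow_left₀ (hmu0 _) (hmuA (Nat.le_add_left k i)) m) (hmu0 _)
    rw [htail (m + 1) hn] at h0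
    calc a ^ (m + 1) ≤ ∑' i, mu (i + k) ^ (m + 1) := h0
      _ ≤ ∑' i, b ^ m * mu (i + k) := h1
      _ = b ^ m * C := tsum_mul_left
  have ha0 : 0 < a := lt_of_le_of_lt (hmu0 k) hlt
  rcases eq_or_lt_of_le (hmu0 k) with hb0 | hb0
  · have := key 1
    have hb' : b = 0 := hb0.symm
    rw [hb'] at this
    simp at this
    nlinarith
  · -- b > 0, a/b > 1
    have hab : 1 < a / b := (one_lt_div hb0).mpr hlt
    obtain ⟨m, hm⟩ := pow_unbounded_of_one_lt (C / a) hab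
    have := key m
    have hbm : (0:ℝ) < b ^ m := pow_pos hb0 m
    have h2 : a * (a / b) ^ m ≤ C := by
      have heq : a * (a / b) ^ m = a ^ (m + 1) / b ^ m := by
        rw [div_pow, pow_succ]
        ring
      rw [heq, div_le_iff₀ hbm]
      nlinarith [key m]
    have h3 : C < a * (a / b) ^ m := by
      rw [← div_lt_iff₀' ha0]
      exact hm
    linarith

/-- Two nonnegative, nonincreasing, summable sequences with equal
power sums `Σ_i λ_iⁿ = Σ_i μ_iⁿ` for every `n ≥ 1` are equal: the spectral moments
uniquely determine such an eigenvalue sequence. -/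
theorem eq_of_forall_tsum_pow_eq
    (lam mu : ℕ → ℝ) (hlam0 : ∀ i, 0 ≤ lam i) (hmu0 : ∀ i, 0 ≤ mu i)
    (hlamA : Antitone lam) (hmuA : Antitone mu)
    (hlamS : Summable lam) (hmuS : Summable mu)
    (h : ∀ n : ℕ, 1 ≤ n → ∑' i, lam i ^ n = ∑' i, mu i ^ n) :
    ∀ i, lam i = mu i := by
  intro i
  induction i using Nat.strong_induction_on with
  | _ i ih =>
    refine le_antisymm (aux_le lam mu hlam0 hmu0 hlamA hmuA hlamS hmuS h i ih)
      (aux_le mu lam hmu0 hlam0 hmuA hlamA hmuS hlamS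
        (fun n hn => (h n hn).symm) i (fun j hj => (ih j hj).symm))
end

section
/- Let ρ_X, ρ_W be probability measures and φ : X × W → ℝ be in L⁴(ρ_X ⊗ ρ_W). Let x_1,…,x_P be i.i.d. with law ρ_X and w_1,…,w_Q i.i.d. with law ρ_W, all mutually independent, and set Φ_{iα} = φ(x_i, w_α). Define the naive second-moment estimator m̂₀(2) = (1/(P²Q²)) Σ_{i,j=1}^{P} Σ_{α,β=1}^{Q} Φ_{iα}Φ_{jα}Φ_{jβ}Φ_{iβ}. Then E[ m̂₀(2) ] = ((P−1)(Q−1)/(PQ))·m(2) + ((Q−1)/(PQ))·∫ k(x,x)² dρ_X(x) + ((P−1)/(PQ))·∫ ( ∫ φ(x,w)² dρ_X(x) )² dρ_W(w) + (1/(PQ))·∫∫ φ(x,w)⁴ dρ_X(x)dρ_W(w), where k(x,y) = ∫ φ(x,w)φ(y,w) dρ_W(w) and m(2) = ∫∫ k(x,y)² dρ_X(x)dρ_X(y). -/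
open MeasureTheory

lemma abs_quartic (a b c d : ℝ) : |a * b * c * d| ≤ (a ^ 4 + b ^ 4 + c ^ 4 + d ^ 4) / 4 := by
  have h : ∀ x y : ℝ, |x * y| ≤ (x ^ 2 + y ^ 2) / 2 := by
    intro x y
    rw [abs_mul]
    nlinarith [sq_nonneg (|x| - |y|), sq_abs x, sq_abs y, abs_nonneg x, abs_nonneg y]
  calc |a * b * c * d| = |(a * b) * (c * d)| := by ring_nf
    _ ≤ ((a * b) ^ 2 + (c * d) ^ 2) / 2 := h _ _
    _ ≤ (a ^ 4 + b ^ 4 + c ^ 4 + d ^ 4) / 4 := by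
        nlinarith [sq_nonneg (a ^ 2 - b ^ 2), sq_nonneg (c ^ 2 - d ^ 2)]

lemma measurePreserving_eval' {ι : Type*} [Fintype ι] {α : Type*} [MeasurableSpace α]
    (μ : Measure α) [IsProbabilityMeasure μ] (i : ι) :
    MeasurePreserving (fun f : ι → α => f i) (Measure.pi fun _ => μ) μ := by
  classical
  refine ⟨measurable_pi_apply i, ?_⟩
  ext s hs
  rw [Measure.map_apply (measurable_pi_apply i) hs,
    show (fun f : ι → α => f i) ⁻¹' s = Function.eval i ⁻¹' s from rfl,
    ← Set.univ_pi_update_univ, Measure.pi_pi]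
  have h : ∀ l, μ (Function.update (fun _ : ι => (Set.univ : Set α)) i s l)
      = Function.update (fun _ : ι => μ Set.univ) i (μ s) l := by
    intro l
    rcases eq_or_ne l i with rfl | hli
    · simp
    · simp [Function.update_of_ne hli]
  rw [Finset.prod_congr rfl fun l _ => h l,
    Finset.prod_update_of_mem (Finset.mem_univ i)]
  simp

lemma measurePreserving_evalPair {ι : Type*} [Fintype ι] [DecidableEq ι] {α : Type*}
    [MeasurableSpace α] (μ : Measure α) [IsProbabilityMeasure μ] {i j : ι} (hij : i ≠ j) :
    MeasurePreserving (fun f : ι → α => (f i, f j)) (Measure.pi fun _ => μ) (μ.prod μ) := by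
  have hmeas : Measurable fun f : ι → α => (f i, f j) :=
    (measurable_pi_apply i).prodMk (measurable_pi_apply j)
  refine ⟨hmeas, ?_⟩
  refine (Measure.prod_eq fun s t hs ht => ?_).symm
  rw [Measure.map_apply hmeas (hs.prod ht)]
  have hset : (fun f : ι → α => (f i, f j)) ⁻¹' (s ×ˢ t) =
      Set.pi Set.univ
        (Function.update (Function.update (fun _ : ι => (Set.univ : Set α)) i s) j t) := by
    ext f
    simp only [Set.mem_preimage, Set.mem_prod, Set.mem_pi, Set.mem_univ, true_implies]
    constructor
    · rintro ⟨hfi, hfj⟩ l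
      rcases eq_or_ne l j with rfl | hlj
      · simpa using hfj
      rcases eq_or_ne l i with rfl | hli
      · simpa [Function.update_of_ne hij] using hfi
      · simp [Function.update_of_ne hlj, Function.update_of_ne hli]
    · intro h
      refine ⟨?_, ?_⟩
      · have := h i
        simpa [Function.update_of_ne hij] using this
      · have := h j
        simpa using this
  rw [hset, Measure.pi_pi]
  have h : ∀ l, μ (Function.update (Function.update (fun _ : ι => (Set.univ : Set α)) i s) j t l)
      = Function.update (Function.update (fun _ : ι => μ Set.univ) i (μ s)) j (μ t) l := by
    intro l
    rcases eq_or_ne l j with rfl | hlj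
    · simp
    rcases eq_or_ne l i with rfl | hli
    · simp [Function.update_of_ne hij]
    · simp [Function.update_of_ne hlj, Function.update_of_ne hli]
  rw [Finset.prod_congr rfl fun l _ => h l,
    Finset.prod_update_of_mem (Finset.mem_univ j),
    Finset.prod_update_of_mem (by simp [hij] : i ∈ Finset.univ \ {j})]
  simp [mul_comm]

lemma mp_integral {α β : Type*} [MeasurableSpace α] [MeasurableSpace β]
    {μ : Measure α} {ν : Measure β} {f : α → β} (h : MeasurePreserving f μ ν)
    {g : β → ℝ} (hg : AEStronglyMeasurable g ν) :
    ∫ x, g (f x) ∂μ = ∫ y, g y ∂ν := by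
  rw [← h.map_eq] at hg ⊢
  exact (integral_map h.measurable.aemeasurable hg).symm

lemma integrable_four {Z : Type*} [MeasurableSpace Z] {μ : Measure Z}
    {f1 f2 f3 f4 : Z → ℝ}
    (hm : AEStronglyMeasurable (fun z => f1 z * f2 z * f3 z * f4 z) μ)
    (h1 : Integrable (fun z => f1 z ^ 4) μ) (h2 : Integrable (fun z => f2 z ^ 4) μ)
    (h3 : Integrable (fun z => f3 z ^ 4) μ) (h4 : Integrable (fun z => f4 z ^ 4) μ) :
    Integrable (fun z => f1 z * f2 z * f3 z * f4 z) μ := by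
  refine Integrable.mono' (((h1.add h2).add (h3.add h4)).div_const 4) hm ?_
  filter_upwards with z
  rw [Real.norm_eq_abs]
  refine le_trans (abs_quartic _ _ _ _) (le_of_eq ?_)
  simp only [Pi.add_apply]
  ring

lemma sum_ite_diag {n : ℕ} (u v : ℝ) :
    ∑ c : Fin n × Fin n, (if c.1 = c.2 then u else v) = n * u + ((n : ℝ) ^ 2 - n) * v := by
  have h : ∀ c : Fin n × Fin n, (if c.1 = c.2 then u else v)
      = v + (if c.1 = c.2 then u - v else 0) := by
    intro c; split <;> ring
  simp_rw [h, Finset.sum_add_distrib, Finset.sum_const, Fintype.sum_prod_type]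
  simp only [Finset.sum_ite_eq, Finset.mem_univ, if_true, Finset.sum_const,
    Finset.card_univ, Fintype.card_prod, Fintype.card_fin, nsmul_eq_mul]
  push_cast
  ring

lemma mp_fst {α β : Type*} [MeasurableSpace α] [MeasurableSpace β]
    (μ : Measure α) (ν : Measure β) [SigmaFinite μ] [IsProbabilityMeasure ν] :
    MeasurePreserving (Prod.fst : α × β → α) (μ.prod ν) μ :=
  ⟨measurable_fst, by simp⟩

lemma mp_snd {α β : Type*} [MeasurableSpace α] [MeasurableSpace β]
    (μ : Measure α) (ν : Measure β) [IsProbabilityMeasure μ] [SigmaFinite ν] :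
    MeasurePreserving (Prod.snd : α × β → β) (μ.prod ν) ν :=
  ⟨measurable_snd, by simp⟩

section Terms

variable {X W : Type*} [MeasurableSpace X] [MeasurableSpace W]
  (μ : Measure X) (ν : Measure W) [IsProbabilityMeasure μ] [IsProbabilityMeasure ν]

lemma term_MM {ψ : X × W → ℝ} (hm : Measurable ψ)
    (h4 : Integrable (fun q => ψ q ^ 4) (μ.prod ν)) :
    ∫ z : (X × X) × (W × W),
        ψ (z.1.1, z.2.1) * ψ (z.1.2, z.2.1) * ψ (z.1.2, z.2.2) * ψ (z.1.1, z.2.2)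
        ∂((μ.prod μ).prod (ν.prod ν))
      = ∫ x, ∫ y, (∫ w, ψ (x, w) * ψ (y, w) ∂ν) ^ 2 ∂μ ∂μ := by
  have h4m : AEStronglyMeasurable (fun q : X × W => ψ q ^ 4) (μ.prod ν) :=
    (hm.pow_const 4).aestronglyMeasurable
  have mp11 : MeasurePreserving (fun z : (X × X) × (W × W) => (z.1.1, z.2.1))
      ((μ.prod μ).prod (ν.prod ν)) (μ.prod ν) :=
    (mp_fst μ μ).prod
      (mp_fst ν ν)
  have mp21 : MeasurePreserving (fun z : (X × X) × (W × W) => (z.1.2, z.2.1))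
      ((μ.prod μ).prod (ν.prod ν)) (μ.prod ν) :=
    (mp_snd μ μ).prod
      (mp_fst ν ν)
  have mp22 : MeasurePreserving (fun z : (X × X) × (W × W) => (z.1.2, z.2.2))
      ((μ.prod μ).prod (ν.prod ν)) (μ.prod ν) :=
    (mp_snd μ μ).prod
      (mp_snd ν ν)
  have mp12 : MeasurePreserving (fun z : (X × X) × (W × W) => (z.1.1, z.2.2))
      ((μ.prod μ).prod (ν.prod ν)) (μ.prod ν) :=
    (mp_fst μ μ).prod
      (mp_snd ν ν)
  have hGint : Integrable (fun z : (X × X) × (W × W) =>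
      ψ (z.1.1, z.2.1) * ψ (z.1.2, z.2.1) * ψ (z.1.2, z.2.2) * ψ (z.1.1, z.2.2))
      ((μ.prod μ).prod (ν.prod ν)) := by
    refine integrable_four ?_ ((mp11.integrable_comp h4m).mpr h4)
      ((mp21.integrable_comp h4m).mpr h4) ((mp22.integrable_comp h4m).mpr h4)
      ((mp12.integrable_comp h4m).mpr h4)
    exact (((hm.comp mp11.measurable).mul (hm.comp mp21.measurable)).mul
      ((hm.comp mp22.measurable).mul (hm.comp mp12.measurable))).aestronglyMeasurable
      |>.congr (by filter_upwards with z; simp only [Pi.mul_apply, Function.comp_apply, mul_assoc])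
  have hinner : ∀ z1 : X × X,
      (∫ z2 : W × W, ψ (z1.1, z2.1) * ψ (z1.2, z2.1) * ψ (z1.2, z2.2) * ψ (z1.1, z2.2)
        ∂(ν.prod ν)) = (∫ w, ψ (z1.1, w) * ψ (z1.2, w) ∂ν) ^ 2 := by
    intro z1
    calc (∫ z2 : W × W, ψ (z1.1, z2.1) * ψ (z1.2, z2.1) * ψ (z1.2, z2.2) * ψ (z1.1, z2.2)
          ∂(ν.prod ν))
        = ∫ z2 : W × W, (fun w => ψ (z1.1, w) * ψ (z1.2, w)) z2.1 *
            (fun w => ψ (z1.1, w) * ψ (z1.2, w)) z2.2 ∂(ν.prod ν) := by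
          apply integral_congr_ae; filter_upwards with z2; ring
      _ = (∫ w, ψ (z1.1, w) * ψ (z1.2, w) ∂ν) * (∫ w, ψ (z1.1, w) * ψ (z1.2, w) ∂ν) :=
          integral_prod_mul (fun w => ψ (z1.1, w) * ψ (z1.2, w)) (fun w => ψ (z1.1, w) * ψ (z1.2, w))
      _ = (∫ w, ψ (z1.1, w) * ψ (z1.2, w) ∂ν) ^ 2 := (sq _).symm
  calc ∫ z : (X × X) × (W × W),
        ψ (z.1.1, z.2.1) * ψ (z.1.2, z.2.1) * ψ (z.1.2, z.2.2) * ψ (z.1.1, z.2.2)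
        ∂((μ.prod μ).prod (ν.prod ν))
      = ∫ z1 : X × X, ∫ z2 : W × W,
          ψ (z1.1, z2.1) * ψ (z1.2, z2.1) * ψ (z1.2, z2.2) * ψ (z1.1, z2.2)
          ∂(ν.prod ν) ∂(μ.prod μ) := integral_prod _ hGint
    _ = ∫ z1 : X × X, (∫ w, ψ (z1.1, w) * ψ (z1.2, w) ∂ν) ^ 2 ∂(μ.prod μ) :=
        integral_congr_ae (Filter.Eventually.of_forall hinner)
    _ = ∫ x, ∫ y, (∫ w, ψ (x, w) * ψ (y, w) ∂ν) ^ 2 ∂μ ∂μ := by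
        refine integral_prod _ (hGint.integral_prod_left.congr ?_)
        filter_upwards with z1
        exact hinner z1

lemma term_A {ψ : X × W → ℝ} (hm : Measurable ψ)
    (h4 : Integrable (fun q => ψ q ^ 4) (μ.prod ν)) :
    ∫ z : X × (W × W),
        ψ (z.1, z.2.1) * ψ (z.1, z.2.1) * ψ (z.1, z.2.2) * ψ (z.1, z.2.2)
        ∂(μ.prod (ν.prod ν))
      = ∫ x, (∫ w, ψ (x, w) * ψ (x, w) ∂ν) ^ 2 ∂μ := by
  have h4m : AEStronglyMeasurable (fun q : X × W => ψ q ^ 4) (μ.prod ν) :=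
    (hm.pow_const 4).aestronglyMeasurable
  have mp1 : MeasurePreserving (fun z : X × (W × W) => (z.1, z.2.1))
      (μ.prod (ν.prod ν)) (μ.prod ν) :=
    (MeasurePreserving.id μ).prod (mp_fst ν ν)
  have mp2 : MeasurePreserving (fun z : X × (W × W) => (z.1, z.2.2))
      (μ.prod (ν.prod ν)) (μ.prod ν) :=
    (MeasurePreserving.id μ).prod (mp_snd ν ν)
  have hGint : Integrable (fun z : X × (W × W) =>
      ψ (z.1, z.2.1) * ψ (z.1, z.2.1) * ψ (z.1, z.2.2) * ψ (z.1, z.2.2))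
      (μ.prod (ν.prod ν)) := by
    refine integrable_four ?_ ((mp1.integrable_comp h4m).mpr h4)
      ((mp1.integrable_comp h4m).mpr h4) ((mp2.integrable_comp h4m).mpr h4)
      ((mp2.integrable_comp h4m).mpr h4)
    exact (((hm.comp mp1.measurable).mul (hm.comp mp1.measurable)).mul
      ((hm.comp mp2.measurable).mul (hm.comp mp2.measurable))).aestronglyMeasurable
      |>.congr (by filter_upwards with z; simp only [Pi.mul_apply, Function.comp_apply, mul_assoc])
  have hinner : ∀ x : X,
      (∫ z2 : W × W, ψ (x, z2.1) * ψ (x, z2.1) * ψ (x, z2.2) * ψ (x, z2.2) ∂(ν.prod ν))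
        = (∫ w, ψ (x, w) * ψ (x, w) ∂ν) ^ 2 := by
    intro x
    calc (∫ z2 : W × W, ψ (x, z2.1) * ψ (x, z2.1) * ψ (x, z2.2) * ψ (x, z2.2) ∂(ν.prod ν))
        = ∫ z2 : W × W, (fun w => ψ (x, w) * ψ (x, w)) z2.1 *
            (fun w => ψ (x, w) * ψ (x, w)) z2.2 ∂(ν.prod ν) := by
          apply integral_congr_ae; filter_upwards with z2; ring
      _ = (∫ w, ψ (x, w) * ψ (x, w) ∂ν) * (∫ w, ψ (x, w) * ψ (x, w) ∂ν) :=
          integral_prod_mul (fun w => ψ (x, w) * ψ (x, w)) (fun w => ψ (x, w) * ψ (x, w))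
      _ = (∫ w, ψ (x, w) * ψ (x, w) ∂ν) ^ 2 := (sq _).symm
  calc ∫ z : X × (W × W),
        ψ (z.1, z.2.1) * ψ (z.1, z.2.1) * ψ (z.1, z.2.2) * ψ (z.1, z.2.2)
        ∂(μ.prod (ν.prod ν))
      = ∫ x, ∫ z2 : W × W, ψ (x, z2.1) * ψ (x, z2.1) * ψ (x, z2.2) * ψ (x, z2.2)
          ∂(ν.prod ν) ∂μ := integral_prod _ hGint
    _ = ∫ x, (∫ w, ψ (x, w) * ψ (x, w) ∂ν) ^ 2 ∂μ :=
        integral_congr_ae (Filter.Eventually.of_forall hinner)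

lemma term_B {ψ : X × W → ℝ} (hm : Measurable ψ)
    (h4 : Integrable (fun q => ψ q ^ 4) (μ.prod ν)) :
    ∫ z : (X × X) × W,
        ψ (z.1.1, z.2) * ψ (z.1.2, z.2) * ψ (z.1.2, z.2) * ψ (z.1.1, z.2)
        ∂((μ.prod μ).prod ν)
      = ∫ w, (∫ x, ψ (x, w) ^ 2 ∂μ) ^ 2 ∂ν := by
  have h4m : AEStronglyMeasurable (fun q : X × W => ψ q ^ 4) (μ.prod ν) :=
    (hm.pow_const 4).aestronglyMeasurable
  have mp1 : MeasurePreserving (fun z : (X × X) × W => (z.1.1, z.2))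
      ((μ.prod μ).prod ν) (μ.prod ν) :=
    (mp_fst μ μ).prod (MeasurePreserving.id ν)
  have mp2 : MeasurePreserving (fun z : (X × X) × W => (z.1.2, z.2))
      ((μ.prod μ).prod ν) (μ.prod ν) :=
    (mp_snd μ μ).prod (MeasurePreserving.id ν)
  have hGint : Integrable (fun z : (X × X) × W =>
      ψ (z.1.1, z.2) * ψ (z.1.2, z.2) * ψ (z.1.2, z.2) * ψ (z.1.1, z.2))
      ((μ.prod μ).prod ν) := by
    refine integrable_four ?_ ((mp1.integrable_comp h4m).mpr h4)
      ((mp2.integrable_comp h4m).mpr h4) ((mp2.integrable_comp h4m).mpr h4)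
      ((mp1.integrable_comp h4m).mpr h4)
    exact (((hm.comp mp1.measurable).mul (hm.comp mp2.measurable)).mul
      ((hm.comp mp2.measurable).mul (hm.comp mp1.measurable))).aestronglyMeasurable
      |>.congr (by filter_upwards with z; simp only [Pi.mul_apply, Function.comp_apply, mul_assoc])
  have hinner : ∀ w : W,
      (∫ z1 : X × X, ψ (z1.1, w) * ψ (z1.2, w) * ψ (z1.2, w) * ψ (z1.1, w) ∂(μ.prod μ))
        = (∫ x, ψ (x, w) ^ 2 ∂μ) ^ 2 := by
    intro w
    calc (∫ z1 : X × X, ψ (z1.1, w) * ψ (z1.2, w) * ψ (z1.2, w) * ψ (z1.1, w) ∂(μ.prod μ))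
        = ∫ z1 : X × X, (fun x => ψ (x, w) ^ 2) z1.1 *
            (fun x => ψ (x, w) ^ 2) z1.2 ∂(μ.prod μ) := by
          apply integral_congr_ae; filter_upwards with z1; ring
      _ = (∫ x, ψ (x, w) ^ 2 ∂μ) * (∫ x, ψ (x, w) ^ 2 ∂μ) :=
          integral_prod_mul (fun x => ψ (x, w) ^ 2) (fun x => ψ (x, w) ^ 2)
      _ = (∫ x, ψ (x, w) ^ 2 ∂μ) ^ 2 := (sq _).symm
  calc ∫ z : (X × X) × W,
        ψ (z.1.1, z.2) * ψ (z.1.2, z.2) * ψ (z.1.2, z.2) * ψ (z.1.1, z.2)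
        ∂((μ.prod μ).prod ν)
      = ∫ w, ∫ z1 : X × X, ψ (z1.1, w) * ψ (z1.2, w) * ψ (z1.2, w) * ψ (z1.1, w)
          ∂(μ.prod μ) ∂ν := integral_prod_symm _ hGint
    _ = ∫ w, (∫ x, ψ (x, w) ^ 2 ∂μ) ^ 2 ∂ν :=
        integral_congr_ae (Filter.Eventually.of_forall hinner)

end Terms

lemma main_sm {X W : Type*} [MeasurableSpace X] [MeasurableSpace W]
    (ρX : Measure X) (ρW : Measure W)
    [IsProbabilityMeasure ρX] [IsProbabilityMeasure ρW]
    (ψ : X × W → ℝ) (hm : Measurable ψ)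
    (h4 : Integrable (fun q => ψ q ^ 4) (ρX.prod ρW))
    (P Q : ℕ) (hP : 1 ≤ P) (hQ : 1 ≤ Q) :
    ∫ p : (Fin P → X) × (Fin Q → W),
        ((P : ℝ) ^ 2 * (Q : ℝ) ^ 2)⁻¹ *
          ∑ i : Fin P, ∑ j : Fin P, ∑ a : Fin Q, ∑ b : Fin Q,
            ψ (p.1 i, p.2 a) * ψ (p.1 j, p.2 a) * ψ (p.1 j, p.2 b) * ψ (p.1 i, p.2 b)
        ∂((Measure.pi fun _ => ρX).prod (Measure.pi fun _ => ρW))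
      = ((P : ℝ) - 1) * ((Q : ℝ) - 1) / ((P : ℝ) * (Q : ℝ)) *
            (∫ x, ∫ y, (∫ w, ψ (x, w) * ψ (y, w) ∂ρW) ^ 2 ∂ρX ∂ρX)
        + ((Q : ℝ) - 1) / ((P : ℝ) * (Q : ℝ)) *
            (∫ x, (∫ w, ψ (x, w) * ψ (x, w) ∂ρW) ^ 2 ∂ρX)
        + ((P : ℝ) - 1) / ((P : ℝ) * (Q : ℝ)) *
            (∫ w, (∫ x, ψ (x, w) ^ 2 ∂ρX) ^ 2 ∂ρW)
        + ((P : ℝ) * (Q : ℝ))⁻¹ * ∫ q, ψ q ^ 4 ∂(ρX.prod ρW) := by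
  classical
  set bigμ : Measure ((Fin P → X) × (Fin Q → W)) :=
    (Measure.pi fun _ => ρX).prod (Measure.pi fun _ => ρW) with hbigμ
  have h4m : AEStronglyMeasurable (fun q : X × W => ψ q ^ 4) (ρX.prod ρW) :=
    (hm.pow_const 4).aestronglyMeasurable
  have hmpc : ∀ (i : Fin P) (a : Fin Q),
      MeasurePreserving (fun p : (Fin P → X) × (Fin Q → W) => (p.1 i, p.2 a))
        bigμ (ρX.prod ρW) :=
    fun i a => (measurePreserving_eval' ρX i).prod (measurePreserving_eval' ρW a)
  have hint4 : ∀ (i : Fin P) (a : Fin Q),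
      Integrable (fun p : (Fin P → X) × (Fin Q → W) => ψ (p.1 i, p.2 a) ^ 4) bigμ :=
    fun i a => ((hmpc i a).integrable_comp h4m).mpr h4
  have hmc : ∀ (i : Fin P) (a : Fin Q),
      Measurable (fun p : (Fin P → X) × (Fin Q → W) => ψ (p.1 i, p.2 a)) :=
    fun i a => hm.comp (hmpc i a).measurable
  have hTi : ∀ (c : (Fin P × Fin P) × (Fin Q × Fin Q)),
      Integrable (fun p : (Fin P → X) × (Fin Q → W) =>
        ψ (p.1 c.1.1, p.2 c.2.1) * ψ (p.1 c.1.2, p.2 c.2.1) *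
          ψ (p.1 c.1.2, p.2 c.2.2) * ψ (p.1 c.1.1, p.2 c.2.2)) bigμ := by
    rintro ⟨⟨i, j⟩, ⟨a, b⟩⟩
    exact integrable_four
      (((((hmc i a).mul (hmc j a)).mul ((hmc j b).mul (hmc i b))).aestronglyMeasurable).congr
        (by filter_upwards with p; simp only [Pi.mul_apply, mul_assoc]))
      (hint4 i a) (hint4 j a) (hint4 j b) (hint4 i b)
  set M : ℝ := ∫ x, ∫ y, (∫ w, ψ (x, w) * ψ (y, w) ∂ρW) ^ 2 ∂ρX ∂ρX with hM
  set A : ℝ := ∫ x, (∫ w, ψ (x, w) * ψ (x, w) ∂ρW) ^ 2 ∂ρX with hA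
  set B : ℝ := ∫ w, (∫ x, ψ (x, w) ^ 2 ∂ρX) ^ 2 ∂ρW with hB
  set C : ℝ := ∫ q, ψ q ^ 4 ∂(ρX.prod ρW) with hC
  have hval : ∀ (c : (Fin P × Fin P) × (Fin Q × Fin Q)),
      (∫ p : (Fin P → X) × (Fin Q → W),
        ψ (p.1 c.1.1, p.2 c.2.1) * ψ (p.1 c.1.2, p.2 c.2.1) *
          ψ (p.1 c.1.2, p.2 c.2.2) * ψ (p.1 c.1.1, p.2 c.2.2) ∂bigμ)
      = if c.1.1 = c.1.2 then (if c.2.1 = c.2.2 then C else A)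
        else (if c.2.1 = c.2.2 then B else M) := by
    rintro ⟨⟨i, j⟩, ⟨a, b⟩⟩
    by_cases hij : i = j
    · subst hij
      by_cases hab : a = b
      · subst hab
        simp only [if_pos rfl]
        have hT := hmpc i a
        have hg : AEStronglyMeasurable (fun q : X × W => ψ q * ψ q * (ψ q * ψ q))
            (ρX.prod ρW) := ((hm.mul hm).mul (hm.mul hm)).aestronglyMeasurable
        calc (∫ p : (Fin P → X) × (Fin Q → W),
              ψ (p.1 i, p.2 a) * ψ (p.1 i, p.2 a) * ψ (p.1 i, p.2 a) * ψ (p.1 i, p.2 a) ∂bigμ)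
            = ∫ p : (Fin P → X) × (Fin Q → W),
              (fun q : X × W => ψ q * ψ q * (ψ q * ψ q)) ((fun p : (Fin P → X) × (Fin Q → W) => (p.1 i, p.2 a)) p) ∂bigμ := by
              apply integral_congr_ae; filter_upwards with p; ring
          _ = ∫ q, ψ q * ψ q * (ψ q * ψ q) ∂(ρX.prod ρW) := mp_integral hT hg
          _ = C := by apply integral_congr_ae; filter_upwards with q; ring
      · simp only [if_pos rfl, if_neg hab]
        have hT : MeasurePreserving
            (fun p : (Fin P → X) × (Fin Q → W) => (p.1 i, (p.2 a, p.2 b)))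
            bigμ (ρX.prod (ρW.prod ρW)) :=
          (measurePreserving_eval' ρX i).prod (measurePreserving_evalPair ρW hab)
        have hg : AEStronglyMeasurable (fun z : X × (W × W) =>
            ψ (z.1, z.2.1) * ψ (z.1, z.2.1) * ψ (z.1, z.2.2) * ψ (z.1, z.2.2))
            (ρX.prod (ρW.prod ρW)) := by
          apply Measurable.aestronglyMeasurable; fun_prop
        exact (mp_integral hT hg).trans (term_A ρX ρW hm h4)
    · by_cases hab : a = b
      · subst hab
        simp only [if_neg hij, if_pos rfl]
        have hT : MeasurePreserving
            (fun p : (Fin P → X) × (Fin Q → W) => ((p.1 i, p.1 j), p.2 a))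
            bigμ ((ρX.prod ρX).prod ρW) :=
          (measurePreserving_evalPair ρX hij).prod (measurePreserving_eval' ρW a)
        have hg : AEStronglyMeasurable (fun z : (X × X) × W =>
            ψ (z.1.1, z.2) * ψ (z.1.2, z.2) * ψ (z.1.2, z.2) * ψ (z.1.1, z.2))
            ((ρX.prod ρX).prod ρW) := by
          apply Measurable.aestronglyMeasurable; fun_prop
        exact (mp_integral hT hg).trans (term_B ρX ρW hm h4)
      · simp only [if_neg hij, if_neg hab]
        have hT : MeasurePreserving
            (fun p : (Fin P → X) × (Fin Q → W) => ((p.1 i, p.1 j), (p.2 a, p.2 b)))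
            bigμ ((ρX.prod ρX).prod (ρW.prod ρW)) :=
          (measurePreserving_evalPair ρX hij).prod (measurePreserving_evalPair ρW hab)
        have hg : AEStronglyMeasurable (fun z : (X × X) × (W × W) =>
            ψ (z.1.1, z.2.1) * ψ (z.1.2, z.2.1) * ψ (z.1.2, z.2.2) * ψ (z.1.1, z.2.2))
            ((ρX.prod ρX).prod (ρW.prod ρW)) := by
          apply Measurable.aestronglyMeasurable; fun_prop
        exact (mp_integral hT hg).trans (term_MM ρX ρW hm h4)
  have hP0 : (P : ℝ) ≠ 0 := Nat.cast_ne_zero.mpr (by omega)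
  have hQ0 : (Q : ℝ) ≠ 0 := Nat.cast_ne_zero.mpr (by omega)
  calc ∫ p : (Fin P → X) × (Fin Q → W),
        ((P : ℝ) ^ 2 * (Q : ℝ) ^ 2)⁻¹ *
          ∑ i : Fin P, ∑ j : Fin P, ∑ a : Fin Q, ∑ b : Fin Q,
            ψ (p.1 i, p.2 a) * ψ (p.1 j, p.2 a) * ψ (p.1 j, p.2 b) * ψ (p.1 i, p.2 b) ∂bigμ
      = ((P : ℝ) ^ 2 * (Q : ℝ) ^ 2)⁻¹ * ∫ p : (Fin P → X) × (Fin Q → W),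
          ∑ i : Fin P, ∑ j : Fin P, ∑ a : Fin Q, ∑ b : Fin Q,
            ψ (p.1 i, p.2 a) * ψ (p.1 j, p.2 a) * ψ (p.1 j, p.2 b) * ψ (p.1 i, p.2 b) ∂bigμ :=
        integral_const_mul _ _
    _ = ((P : ℝ) ^ 2 * (Q : ℝ) ^ 2)⁻¹ * ∫ p : (Fin P → X) × (Fin Q → W),
          ∑ c : (Fin P × Fin P) × (Fin Q × Fin Q),
            ψ (p.1 c.1.1, p.2 c.2.1) * ψ (p.1 c.1.2, p.2 c.2.1) *
              ψ (p.1 c.1.2, p.2 c.2.2) * ψ (p.1 c.1.1, p.2 c.2.2) ∂bigμ := by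
        congr 1
        apply integral_congr_ae
        filter_upwards with p
        simp only [Fintype.sum_prod_type]
    _ = ((P : ℝ) ^ 2 * (Q : ℝ) ^ 2)⁻¹ *
          ∑ c : (Fin P × Fin P) × (Fin Q × Fin Q),
            ∫ p : (Fin P → X) × (Fin Q → W),
              ψ (p.1 c.1.1, p.2 c.2.1) * ψ (p.1 c.1.2, p.2 c.2.1) *
                ψ (p.1 c.1.2, p.2 c.2.2) * ψ (p.1 c.1.1, p.2 c.2.2) ∂bigμ := by
        rw [integral_finset_sum _ (fun c _ => hTi c)]
    _ = ((P : ℝ) ^ 2 * (Q : ℝ) ^ 2)⁻¹ *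
          ∑ c : (Fin P × Fin P) × (Fin Q × Fin Q),
            (if c.1.1 = c.1.2 then (if c.2.1 = c.2.2 then C else A)
              else (if c.2.1 = c.2.2 then B else M)) := by
        rw [Finset.sum_congr rfl fun c _ => hval c]
    _ = ((P : ℝ) ^ 2 * (Q : ℝ) ^ 2)⁻¹ *
          ((P : ℝ) * ((Q : ℝ) * C + ((Q : ℝ) ^ 2 - (Q : ℝ)) * A)
            + ((P : ℝ) ^ 2 - (P : ℝ)) * ((Q : ℝ) * B + ((Q : ℝ) ^ 2 - (Q : ℝ)) * M)) := by
        congr 1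
        rw [Fintype.sum_prod_type]
        have h2 : ∀ cp : Fin P × Fin P,
            (∑ cq : Fin Q × Fin Q,
              (if cp.1 = cp.2 then (if cq.1 = cq.2 then C else A)
                else (if cq.1 = cq.2 then B else M)))
            = if cp.1 = cp.2 then ((Q : ℝ) * C + ((Q : ℝ) ^ 2 - (Q : ℝ)) * A)
              else ((Q : ℝ) * B + ((Q : ℝ) ^ 2 - (Q : ℝ)) * M) := by
          intro cp
          by_cases h : cp.1 = cp.2
          · simp only [if_pos h]; exact sum_ite_diag C A
          · simp only [if_neg h]; exact sum_ite_diag B M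
        rw [show (∑ cp : Fin P × Fin P, ∑ cq : Fin Q × Fin Q,
            (if cp.1 = cp.2 then (if cq.1 = cq.2 then C else A)
              else (if cq.1 = cq.2 then B else M)))
          = ∑ cp : Fin P × Fin P,
            (if cp.1 = cp.2 then ((Q : ℝ) * C + ((Q : ℝ) ^ 2 - (Q : ℝ)) * A)
              else ((Q : ℝ) * B + ((Q : ℝ) ^ 2 - (Q : ℝ)) * M))
          from Finset.sum_congr rfl fun cp _ => h2 cp]
        exact sum_ite_diag _ _
    _ = ((P : ℝ) - 1) * ((Q : ℝ) - 1) / ((P : ℝ) * (Q : ℝ)) * M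
        + ((Q : ℝ) - 1) / ((P : ℝ) * (Q : ℝ)) * A
        + ((P : ℝ) - 1) / ((P : ℝ) * (Q : ℝ)) * B
        + ((P : ℝ) * (Q : ℝ))⁻¹ * C := by
        field_simp
        ring

/-- Exact expectation of the naive second-moment estimator:
`E[m̂₀(2)] = ((P−1)(Q−1)/(PQ))·m(2) + ((Q−1)/(PQ))·∫ k(x,x)² dρX
 + ((P−1)/(PQ))·∫ (∫ φ(x,w)² dρX)² dρW + (1/(PQ))·∫∫ φ⁴`. -/
theorem expectation_naive_second_moment
    {X W : Type*} [MeasurableSpace X] [MeasurableSpace W]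
    (ρX : Measure X) (ρW : Measure W)
    [IsProbabilityMeasure ρX] [IsProbabilityMeasure ρW]
    (φ : X × W → ℝ) (hφ : MemLp φ 4 (ρX.prod ρW))
    (P Q : ℕ) (hP : 1 ≤ P) (hQ : 1 ≤ Q) :
    ∫ p : (Fin P → X) × (Fin Q → W),
        ((P : ℝ) ^ 2 * (Q : ℝ) ^ 2)⁻¹ *
          ∑ i : Fin P, ∑ j : Fin P, ∑ a : Fin Q, ∑ b : Fin Q,
            φ (p.1 i, p.2 a) * φ (p.1 j, p.2 a) * φ (p.1 j, p.2 b) * φ (p.1 i, p.2 b)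
        ∂((Measure.pi fun _ => ρX).prod (Measure.pi fun _ => ρW))
      = ((P : ℝ) - 1) * ((Q : ℝ) - 1) / ((P : ℝ) * (Q : ℝ)) *
            (∫ x, ∫ y, (∫ w, φ (x, w) * φ (y, w) ∂ρW) ^ 2 ∂ρX ∂ρX)
        + ((Q : ℝ) - 1) / ((P : ℝ) * (Q : ℝ)) *
            (∫ x, (∫ w, φ (x, w) * φ (x, w) ∂ρW) ^ 2 ∂ρX)
        + ((P : ℝ) - 1) / ((P : ℝ) * (Q : ℝ)) *
            (∫ w, (∫ x, φ (x, w) ^ 2 ∂ρX) ^ 2 ∂ρW)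
        + ((P : ℝ) * (Q : ℝ))⁻¹ * ∫ q, φ q ^ 4 ∂(ρX.prod ρW) := by
  classical
  set ψ : X × W → ℝ := hφ.1.mk φ with hψdef
  have hmψ : Measurable ψ := hφ.1.stronglyMeasurable_mk.measurable
  have hee : φ =ᵐ[ρX.prod ρW] ψ := hφ.1.ae_eq_mk
  have hψLp : MemLp ψ 4 (ρX.prod ρW) := hφ.ae_eq hee
  have h4 : Integrable (fun q => ψ q ^ 4) (ρX.prod ρW) := by
    have h1 : Integrable (fun q => ‖ψ q‖ ^ (4 : ENNReal).toReal) (ρX.prod ρW) :=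
      memLp_one_iff_integrable.mp (hψLp.norm_rpow (by norm_num) (by norm_num))
    refine h1.congr (Filter.Eventually.of_forall fun q => ?_)
    show ‖ψ q‖ ^ (4 : ENNReal).toReal = ψ q ^ 4
    rw [Real.norm_eq_abs, show ((4 : ENNReal).toReal) = ((4 : ℕ) : ℝ) by norm_num,
      Real.rpow_natCast, pow_abs, abs_of_nonneg (by positivity)]
  have hx : ∀ᵐ x ∂ρX, (fun w => φ (x, w)) =ᵐ[ρW] (fun w => ψ (x, w)) :=
    Measure.ae_ae_of_ae_prod hee
  have hw : ∀ᵐ w ∂ρW, (fun x => φ (x, w)) =ᵐ[ρX] (fun x => ψ (x, w)) := by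
    have hswap : ∀ᵐ z ∂ρW.prod ρX, φ (z.2, z.1) = ψ (z.2, z.1) :=
      (Measure.measurePreserving_swap (μ := ρW) (ν := ρX)).quasiMeasurePreserving.ae hee
    exact Measure.ae_ae_of_ae_prod hswap
  have hmpc : ∀ (i : Fin P) (a : Fin Q),
      MeasurePreserving (fun p : (Fin P → X) × (Fin Q → W) => (p.1 i, p.2 a))
        ((Measure.pi fun _ => ρX).prod (Measure.pi fun _ => ρW)) (ρX.prod ρW) :=
    fun i a => (measurePreserving_eval' ρX i).prod (measurePreserving_eval' ρW a)
  have hcoordae : ∀ᵐ p ∂((Measure.pi fun _ : Fin P => ρX).prod (Measure.pi fun _ : Fin Q => ρW)),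
      ∀ (i : Fin P) (a : Fin Q), φ (p.1 i, p.2 a) = ψ (p.1 i, p.2 a) := by
    rw [ae_all_iff]
    intro i
    rw [ae_all_iff]
    intro a
    exact (hmpc i a).quasiMeasurePreserving.ae hee
  have hL : (∫ p : (Fin P → X) × (Fin Q → W),
        ((P : ℝ) ^ 2 * (Q : ℝ) ^ 2)⁻¹ *
          ∑ i : Fin P, ∑ j : Fin P, ∑ a : Fin Q, ∑ b : Fin Q,
            φ (p.1 i, p.2 a) * φ (p.1 j, p.2 a) * φ (p.1 j, p.2 b) * φ (p.1 i, p.2 b)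
        ∂((Measure.pi fun _ => ρX).prod (Measure.pi fun _ => ρW)))
      = ∫ p : (Fin P → X) × (Fin Q → W),
        ((P : ℝ) ^ 2 * (Q : ℝ) ^ 2)⁻¹ *
          ∑ i : Fin P, ∑ j : Fin P, ∑ a : Fin Q, ∑ b : Fin Q,
            ψ (p.1 i, p.2 a) * ψ (p.1 j, p.2 a) * ψ (p.1 j, p.2 b) * ψ (p.1 i, p.2 b)
        ∂((Measure.pi fun _ => ρX).prod (Measure.pi fun _ => ρW)) := by
    apply integral_congr_ae
    filter_upwards [hcoordae] with p hp
    simp only [hp]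
  have hM : (∫ x, ∫ y, (∫ w, φ (x, w) * φ (y, w) ∂ρW) ^ 2 ∂ρX ∂ρX)
      = ∫ x, ∫ y, (∫ w, ψ (x, w) * ψ (y, w) ∂ρW) ^ 2 ∂ρX ∂ρX := by
    apply integral_congr_ae
    filter_upwards [hx] with x hxx
    apply integral_congr_ae
    filter_upwards [hx] with y hyy
    have hxy : (fun w => φ (x, w) * φ (y, w)) =ᵐ[ρW] fun w => ψ (x, w) * ψ (y, w) := hxx.mul hyy
    rw [integral_congr_ae hxy]
  have hA : (∫ x, (∫ w, φ (x, w) * φ (x, w) ∂ρW) ^ 2 ∂ρX)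
      = ∫ x, (∫ w, ψ (x, w) * ψ (x, w) ∂ρW) ^ 2 ∂ρX := by
    apply integral_congr_ae
    filter_upwards [hx] with x hxx
    have hxy : (fun w => φ (x, w) * φ (x, w)) =ᵐ[ρW] fun w => ψ (x, w) * ψ (x, w) := hxx.mul hxx
    rw [integral_congr_ae hxy]
  have hB : (∫ w, (∫ x, φ (x, w) ^ 2 ∂ρX) ^ 2 ∂ρW)
      = ∫ w, (∫ x, ψ (x, w) ^ 2 ∂ρX) ^ 2 ∂ρW := by
    apply integral_congr_ae
    filter_upwards [hw] with w hww
    have h2 : (∫ x, φ (x, w) ^ 2 ∂ρX) = ∫ x, ψ (x, w) ^ 2 ∂ρX := by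
      apply integral_congr_ae
      filter_upwards [hww] with x h
      rw [show φ (x, w) = ψ (x, w) from h]
    rw [h2]
  have hC : (∫ q, φ q ^ 4 ∂(ρX.prod ρW)) = ∫ q, ψ q ^ 4 ∂(ρX.prod ρW) :=
    integral_congr_ae (hee.mono fun q h => by simp only [h])
  rw [hL, hM, hA, hB, hC]
  exact main_sm ρX ρW ψ hmψ h4 P Q hP hQ
end

section
/- Let Φ be a real P × Q matrix with P, Q ≥ 2, and define K_{ij} = (1/Q)·Σ_{α=1}^{Q} Φ_{iα}Φ_{jα}, K̃_{αβ} = (1/P)·Σ_{i=1}^{P} Φ_{iα}Φ_{iβ}, the naive estimator m̂₀(2) = tr((K/P)²), the constant c = (P−1)(Q−1)/(PQ), and the all-distinct-index average m̂*(2) = (1/(P(P−1)Q(Q−1)))·Σ_{i≠j} Σ_{α≠β} Φ_{iα}Φ_{jα}Φ_{jβ}Φ_{iβ}. Then the deterministic identity c·m̂*(2) = m̂₀(2) − Σ_{i=1}^{P} K_{ii}²/P² − Σ_{α=1}^{Q} K̃_{αα}²/Q² + Σ_{i=1}^{P} Σ_{α=1}^{Q} Φ_{iα}⁴/(P²Q²)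 holds. -/
open Matrix Finset

lemma sum_filter_ne_pairs {n : ℕ} (g : Fin n → Fin n → ℝ) :
    ∑ p ∈ Finset.univ.filter (fun p : Fin n × Fin n => p.1 ≠ p.2), g p.1 p.2
    = (∑ i, ∑ j, g i j) - ∑ i, g i i := by
  have h := Finset.sum_filter_add_sum_filter_not (Finset.univ : Finset (Fin n × Fin n))
      (fun p => p.1 ≠ p.2) (fun p => g p.1 p.2)
  have hdiag : ∑ p ∈ Finset.univ.filter (fun p : Fin n × Fin n => ¬ p.1 ≠ p.2), g p.1 p.2
      = ∑ i, g i i := by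
    rw [Finset.sum_filter, Fintype.sum_prod_type]
    simp
  have htot : (∑ p : Fin n × Fin n, g p.1 p.2) = ∑ i, ∑ j, g i j :=
    Fintype.sum_prod_type _
  rw [hdiag] at h
  linarith [h, htot]

/-- Deterministic identity relating the all-distinct-index average
`m̂*(2)` to the naive estimator `m̂₀(2) = tr((K/P)²)`:
`c·m̂*(2) = m̂₀(2) − Σ_i K_{ii}²/P² − Σ_α K̃_{αα}²/Q² + Σ_{iα} Φ_{iα}⁴/(P²Q²)`,
where `c = (P−1)(Q−1)/(PQ)`. -/
theorem second_moment_unbiased_identity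
    (P Q : ℕ) (hP : 2 ≤ P) (hQ : 2 ≤ Q) (Φ : Matrix (Fin P) (Fin Q) ℝ)
    (K : Matrix (Fin P) (Fin P) ℝ)
    (hK : ∀ i j, K i j = (Q : ℝ)⁻¹ * ∑ a, Φ i a * Φ j a)
    (Kt : Matrix (Fin Q) (Fin Q) ℝ)
    (hKt : ∀ a b, Kt a b = (P : ℝ)⁻¹ * ∑ i, Φ i a * Φ i b) :
    ((P : ℝ) - 1) * ((Q : ℝ) - 1) / ((P : ℝ) * (Q : ℝ)) *
        (((P : ℝ) * ((P : ℝ) - 1) * (Q : ℝ) * ((Q : ℝ) - 1))⁻¹ *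
          ∑ ij ∈ Finset.univ.filter (fun ij : Fin P × Fin P => ij.1 ≠ ij.2),
            ∑ ab ∈ Finset.univ.filter (fun ab : Fin Q × Fin Q => ab.1 ≠ ab.2),
              Φ ij.1 ab.1 * Φ ij.2 ab.1 * Φ ij.2 ab.2 * Φ ij.1 ab.2)
      = Matrix.trace (((P : ℝ)⁻¹ • K) ^ 2)
        - (∑ i, K i i ^ 2 / (P : ℝ) ^ 2)
        - (∑ a, Kt a a ^ 2 / (Q : ℝ) ^ 2)
        + ∑ i, ∑ a, Φ i a ^ 4 / ((P : ℝ) ^ 2 * (Q : ℝ) ^ 2) := by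
  have hP0 : (P : ℝ) ≠ 0 := by positivity
  have hQ0 : (Q : ℝ) ≠ 0 := by positivity
  have hP1 : (P : ℝ) - 1 ≠ 0 := by
    have : (2:ℝ) ≤ (P:ℝ) := by exact_mod_cast hP
    linarith
  have hQ1 : (Q : ℝ) - 1 ≠ 0 := by
    have : (2:ℝ) ≤ (Q:ℝ) := by exact_mod_cast hQ
    linarith
  have hT : (∑ ij ∈ Finset.univ.filter (fun ij : Fin P × Fin P => ij.1 ≠ ij.2),
            ∑ ab ∈ Finset.univ.filter (fun ab : Fin Q × Fin Q => ab.1 ≠ ab.2),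
              Φ ij.1 ab.1 * Φ ij.2 ab.1 * Φ ij.2 ab.2 * Φ ij.1 ab.2)
      = (∑ i, ∑ j, ∑ a, ∑ b, Φ i a * Φ j a * Φ j b * Φ i b)
        - (∑ i, ∑ a, ∑ b, Φ i a ^ 2 * Φ i b ^ 2)
        - (∑ i, ∑ j, ∑ a, Φ i a ^ 2 * Φ j a ^ 2)
        + (∑ i, ∑ a, Φ i a ^ 4) := by
    have inner : ∀ i j : Fin P,
        (∑ ab ∈ Finset.univ.filter (fun ab : Fin Q × Fin Q => ab.1 ≠ ab.2),
          Φ i ab.1 * Φ j ab.1 * Φ j ab.2 * Φ i ab.2)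
        = (∑ a, ∑ b, Φ i a * Φ j a * Φ j b * Φ i b) - ∑ a, Φ i a * Φ j a * Φ j a * Φ i a :=
      fun i j => sum_filter_ne_pairs (fun a b => Φ i a * Φ j a * Φ j b * Φ i b)
    rw [Finset.sum_congr rfl (fun p _ => inner p.1 p.2)]
    rw [sum_filter_ne_pairs (fun i j =>
      (∑ a, ∑ b, Φ i a * Φ j a * Φ j b * Φ i b) - ∑ a, Φ i a * Φ j a * Φ j a * Φ i a)]
    have e1 : (∑ i, ∑ j, ((∑ a, ∑ b, Φ i a * Φ j a * Φ j b * Φ i b)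
              - ∑ a, Φ i a * Φ j a * Φ j a * Φ i a))
        = (∑ i, ∑ j, ∑ a, ∑ b, Φ i a * Φ j a * Φ j b * Φ i b)
          - (∑ i, ∑ j, ∑ a, Φ i a ^ 2 * Φ j a ^ 2) := by
      rw [← Finset.sum_sub_distrib]
      apply Finset.sum_congr rfl; intro i _
      rw [← Finset.sum_sub_distrib]
      apply Finset.sum_congr rfl; intro j _
      congr 1
      apply Finset.sum_congr rfl; intro a _
      ring
    have e2 : (∑ i, ((∑ a, ∑ b, Φ i a * Φ i a * Φ i b * Φ i b)
              - ∑ a, Φ i a * Φ i a * Φ i a * Φ i a))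
        = (∑ i, ∑ a, ∑ b, Φ i a ^ 2 * Φ i b ^ 2) - (∑ i, ∑ a, Φ i a ^ 4) := by
      rw [← Finset.sum_sub_distrib]
      apply Finset.sum_congr rfl; intro i _
      congr 1
      · apply Finset.sum_congr rfl; intro a _
        apply Finset.sum_congr rfl; intro b _
        ring
      · apply Finset.sum_congr rfl; intro a _
        ring
    rw [e1, e2]
    ring
  have hTr : Matrix.trace (((P : ℝ)⁻¹ • K) ^ 2)
      = ((P:ℝ)^2 * (Q:ℝ)^2)⁻¹ * ∑ i, ∑ j, ∑ a, ∑ b, Φ i a * Φ j a * Φ j b * Φ i b := by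
    rw [pow_two]
    simp only [Matrix.trace, Matrix.diag, Matrix.mul_apply, Matrix.smul_apply, smul_eq_mul]
    rw [Finset.mul_sum]
    apply Finset.sum_congr rfl; intro i _
    rw [Finset.mul_sum]
    apply Finset.sum_congr rfl; intro j _
    rw [hK i j, hK j i]
    have hprod : (∑ a, Φ i a * Φ j a) * (∑ b, Φ j b * Φ i b)
        = ∑ a, ∑ b, Φ i a * Φ j a * Φ j b * Φ i b := by
      rw [Finset.sum_mul_sum]
      apply Finset.sum_congr rfl; intro a _
      apply Finset.sum_congr rfl; intro b _
      ring
    rw [← hprod]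
    rw [mul_inv, ← inv_pow, ← inv_pow]
    ring
  have hKd : (∑ i, K i i ^ 2 / (P : ℝ) ^ 2)
      = ((P:ℝ)^2 * (Q:ℝ)^2)⁻¹ * ∑ i, ∑ a, ∑ b, Φ i a ^ 2 * Φ i b ^ 2 := by
    rw [Finset.mul_sum]
    apply Finset.sum_congr rfl; intro i _
    rw [hK i i]
    have hprod : (∑ a, Φ i a * Φ i a) * (∑ b, Φ i b * Φ i b)
        = ∑ a, ∑ b, Φ i a ^ 2 * Φ i b ^ 2 := by
      rw [Finset.sum_mul_sum]
      apply Finset.sum_congr rfl; intro a _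
      apply Finset.sum_congr rfl; intro b _
      ring
    rw [← hprod]
    rw [mul_inv, ← inv_pow, ← inv_pow, div_eq_mul_inv]
    ring
  have hKtd : (∑ a, Kt a a ^ 2 / (Q : ℝ) ^ 2)
      = ((P:ℝ)^2 * (Q:ℝ)^2)⁻¹ * ∑ i, ∑ j, ∑ a, Φ i a ^ 2 * Φ j a ^ 2 := by
    have hre : (∑ i, ∑ j, ∑ a, Φ i a ^ 2 * Φ j a ^ 2)
        = ∑ a, ∑ i, ∑ j, Φ i a ^ 2 * Φ j a ^ 2 := by
      calc (∑ i, ∑ j, ∑ a, Φ i a ^ 2 * Φ j a ^ 2)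
            = ∑ i, ∑ a, ∑ j, Φ i a ^ 2 * Φ j a ^ 2 :=
              Finset.sum_congr rfl (fun i _ => Finset.sum_comm)
        _ = ∑ a, ∑ i, ∑ j, Φ i a ^ 2 * Φ j a ^ 2 := Finset.sum_comm
    rw [hre, Finset.mul_sum]
    apply Finset.sum_congr rfl; intro a _
    rw [hKt a a]
    have hprod : (∑ i, Φ i a * Φ i a) * (∑ j, Φ j a * Φ j a)
        = ∑ i, ∑ j, Φ i a ^ 2 * Φ j a ^ 2 := by
      rw [Finset.sum_mul_sum]
      apply Finset.sum_congr rfl; intro i _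
      apply Finset.sum_congr rfl; intro j _
      ring
    rw [← hprod]
    rw [mul_inv, ← inv_pow, ← inv_pow, div_eq_mul_inv]
    ring
  have h4 : (∑ i, ∑ a, Φ i a ^ 4 / ((P : ℝ) ^ 2 * (Q : ℝ) ^ 2))
      = ((P:ℝ)^2 * (Q:ℝ)^2)⁻¹ * ∑ i, ∑ a, Φ i a ^ 4 := by
    rw [Finset.mul_sum]
    apply Finset.sum_congr rfl; intro i _
    rw [Finset.mul_sum]
    apply Finset.sum_congr rfl; intro a _
    rw [div_eq_inv_mul]
  rw [hT, hTr, hKd, hKtd, h4]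
  field_simp
end

section
/- Let Φ be a real P × Q matrix and n ≥ 2 with n ≤ P and n ≤ Q. For 1 ≤ h ≤ P, 1 ≤ a ≤ P, 1 ≤ b ≤ Q, and m ≥ 2 define S^{(h)}_{ab}[m] = Σ ∏_{l=1}^{m−1} Φ_{i_l α_l}·Φ_{i_{l+1} α_l}·Φ_{i_m α_m}, where the sum ranges over index tuples with i_1 = h, h < i_2 < ⋯ < i_{m−1} < i_m = a, and 1 ≤ α_1 < ⋯ < α_{m−1} < α_m = b. Then: (i) the recursion S^{(h)}_{ab}[m+1] = Σ_{k=m}^{b−1} Σ_{l=h+m−1}^{a−1} S^{(h)}_{lk}[m]·Φ_{ak}·Φ_{ab} holds (with S^{(h)}_{ab}[2] given directly by its defining sum); and (ii) the estimator m̂(n) = (1/(C(P,n)C(Q,n)))·Σ over strictly increasing tuples 1 ≤ i_1 < ⋯ < i_n ≤ P, 1 ≤ α_1 < ⋯ < α_n ≤ Q of ∏_{l=1}^{n} Φ_{i_l α_l}Φ_{i_{l+1} α_l} (with i_{n+1} = i_1) satisfies m̂(n) = (1/(C(P,n)C(Q,n)))·Σ_{h=1}^{P−n+1} Σ_{j=n}^{Q}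 Σ_{i=h+n−1}^{P} S^{(h)}_{ij}[n]·Φ_{hj}. -/
open Finset

open scoped Classical in
/-- The partial cyclic-path sum `S^{(h)}_{ab}[k+1]`: the sum, over strictly increasing
row tuples `i : Fin (k+1) → Fin P` with `i 0 = h` and `i (last) = a` and strictly
increasing column tuples `α : Fin (k+1) → Fin Q` with `α (last) = b`, of
`(∏_{l} Φ_{i_l α_l} Φ_{i_{l+1} α_l}) · Φ_{i_last α_last}`.
(Its order parameter `k` corresponds to `m = k + 1` in the paper's `S[m]`.) -/
noncomputable def pathSum {P Q : ℕ} (Φ : Fin P → Fin Q → ℝ) (k : ℕ)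
    (h a : Fin P) (b : Fin Q) : ℝ :=
  ∑ i ∈ Finset.univ.filter
      (fun i : Fin (k + 1) → Fin P => StrictMono i ∧ i 0 = h ∧ i (Fin.last k) = a),
    ∑ α ∈ Finset.univ.filter
      (fun α : Fin (k + 1) → Fin Q => StrictMono α ∧ α (Fin.last k) = b),
      (∏ l : Fin k, Φ (i l.castSucc) (α l.castSucc) * Φ (i l.succ) (α l.castSucc)) *
        Φ (i (Fin.last k)) (α (Fin.last k))

lemma aux_le_s17 {N k : ℕ} {i : Fin (k+1) → Fin N} (hi : StrictMono i) :
    ∀ j : Fin (k+1), (i 0 : ℕ) + (j : ℕ) ≤ (i j : ℕ) := by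
  intro j
  induction j using Fin.induction with
  | zero => simp
  | succ j ih =>
    have h1 : (i j.castSucc : ℕ) < (i j.succ : ℕ) := hi (Fin.castSucc_lt_succ : j.castSucc < j.succ)
    simp only [Fin.val_succ, Fin.coe_castSucc] at *
    omega

open scoped Classical in
lemma part2core {P Q m : ℕ} (hP : m + 1 ≤ P) (hQ : m + 1 ≤ Q) (Φ : Fin P → Fin Q → ℝ) :
    (∑ i ∈ Finset.univ.filter (fun i : Fin (m+1) → Fin P => StrictMono i),
      ∑ α ∈ Finset.univ.filter (fun α : Fin (m+1) → Fin Q => StrictMono α),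
        ∏ l : Fin (m+1), Φ (i l) (α l) * Φ (i (l + 1)) (α l))
    = ∑ h ∈ Finset.univ.filter (fun h : Fin P => (h : ℕ) ≤ P - (m+1)),
        ∑ j ∈ Finset.univ.filter (fun j : Fin Q => m ≤ (j : ℕ)),
          ∑ i ∈ Finset.univ.filter (fun i : Fin P => (h : ℕ) + m ≤ (i : ℕ)),
            pathSum Φ m h i j * Φ h j := by
  symm
  simp only [pathSum, Finset.sum_mul]
  -- abbreviations
  set T : (Fin (m+1) → Fin P) → (Fin (m+1) → Fin Q) → ℝ := fun i' α' =>
    (∏ l : Fin m, Φ (i' l.castSucc) (α' l.castSucc) * Φ (i' l.succ) (α' l.castSucc)) *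
      Φ (i' (Fin.last m)) (α' (Fin.last m)) with hT
  calc
    ∑ h ∈ Finset.univ.filter (fun h : Fin P => (h : ℕ) ≤ P - (m+1)),
      ∑ j ∈ Finset.univ.filter (fun j : Fin Q => m ≤ (j : ℕ)),
        ∑ i ∈ Finset.univ.filter (fun i : Fin P => (h : ℕ) + m ≤ (i : ℕ)),
          ∑ i' ∈ Finset.univ.filter
              (fun i' : Fin (m+1) → Fin P => StrictMono i' ∧ i' 0 = h ∧ i' (Fin.last m) = i),
            ∑ α' ∈ Finset.univ.filter
              (fun α' : Fin (m+1) → Fin Q => StrictMono α' ∧ α' (Fin.last m) = j),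
              T i' α' * Φ h j
      = ∑ i' ∈ Finset.univ.filter (fun i' : Fin (m+1) → Fin P => StrictMono i'),
          ∑ α' ∈ Finset.univ.filter (fun α' : Fin (m+1) → Fin Q => StrictMono α'),
            T i' α' * Φ (i' 0) (α' (Fin.last m)) := by
        -- step 1: rewrite Φ h j using the filter conditions
        have e1 : ∀ (h : Fin P) (j : Fin Q)
            (i' : Fin (m+1) → Fin P),
            (∑ α' ∈ Finset.univ.filter
              (fun α' : Fin (m+1) → Fin Q => StrictMono α' ∧ α' (Fin.last m) = j),
              T i' α' * Φ h j)
            = ∑ α' ∈ Finset.univ.filter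
              (fun α' : Fin (m+1) → Fin Q => StrictMono α' ∧ α' (Fin.last m) = j),
              T i' α' * Φ h (α' (Fin.last m)) := by
          intro h j i'
          refine Finset.sum_congr rfl fun α' hα' => ?_
          rw [(Finset.mem_filter.mp hα').2.2]
        simp only [e1]
        -- step 2: swap j to innermost, then fiberwise over α' last
        have e2 : ∀ h : Fin P,
            (∑ j ∈ Finset.univ.filter (fun j : Fin Q => m ≤ (j : ℕ)),
              ∑ i ∈ Finset.univ.filter (fun i : Fin P => (h : ℕ) + m ≤ (i : ℕ)),
                ∑ i' ∈ Finset.univ.filter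
                  (fun i' : Fin (m+1) → Fin P => StrictMono i' ∧ i' 0 = h ∧ i' (Fin.last m) = i),
                  ∑ α' ∈ Finset.univ.filter
                    (fun α' : Fin (m+1) → Fin Q => StrictMono α' ∧ α' (Fin.last m) = j),
                    T i' α' * Φ h (α' (Fin.last m)))
            = ∑ i ∈ Finset.univ.filter (fun i : Fin P => (h : ℕ) + m ≤ (i : ℕ)),
                ∑ i' ∈ Finset.univ.filter
                  (fun i' : Fin (m+1) → Fin P => StrictMono i' ∧ i' 0 = h ∧ i' (Fin.last m) = i),
                  ∑ j ∈ Finset.univ.filter (fun j : Fin Q => m ≤ (j : ℕ)),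
                  ∑ α' ∈ Finset.univ.filter
                    (fun α' : Fin (m+1) → Fin Q => StrictMono α' ∧ α' (Fin.last m) = j),
                    T i' α' * Φ h (α' (Fin.last m)) := by
          intro h
          rw [Finset.sum_comm]
          exact Finset.sum_congr rfl fun i _ => Finset.sum_comm
        simp only [e2]
        -- step 3: collapse the j-sum
        have e3 : ∀ (h : Fin P) (i' : Fin (m+1) → Fin P),
            (∑ j ∈ Finset.univ.filter (fun j : Fin Q => m ≤ (j : ℕ)),
              ∑ α' ∈ Finset.univ.filter
                (fun α' : Fin (m+1) → Fin Q => StrictMono α' ∧ α' (Fin.last m) = j),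
                T i' α' * Φ h (α' (Fin.last m)))
            = ∑ α' ∈ Finset.univ.filter
                (fun α' : Fin (m+1) → Fin Q => StrictMono α'),
                T i' α' * Φ h (α' (Fin.last m)) := by
          intro h i'
          have hset : ∀ j : Fin Q,
              Finset.univ.filter
                (fun α' : Fin (m+1) → Fin Q => StrictMono α' ∧ α' (Fin.last m) = j)
              = (Finset.univ.filter
                  (fun α' : Fin (m+1) → Fin Q => StrictMono α')).filter
                  (fun α' => α' (Fin.last m) = j) := by
            intro j; ext α'; simp [Finset.mem_filter, and_assoc]
          simp only [hset]
          refine Finset.sum_fiberwise_of_maps_to ?_ _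
          intro α' hα'
          have hsm := (Finset.mem_filter.mp hα').2
          have := aux_le_s17 hsm (Fin.last m)
          simp only [Finset.mem_filter, Finset.mem_univ, true_and, Fin.val_last] at *
          omega
        simp only [e3]
        -- step 4: collapse the i-sum
        have e4 : ∀ h : Fin P,
            (∑ i ∈ Finset.univ.filter (fun i : Fin P => (h : ℕ) + m ≤ (i : ℕ)),
              ∑ i' ∈ Finset.univ.filter
                (fun i' : Fin (m+1) → Fin P => StrictMono i' ∧ i' 0 = h ∧ i' (Fin.last m) = i),
                ∑ α' ∈ Finset.univ.filter
                  (fun α' : Fin (m+1) → Fin Q => StrictMono α'),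
                  T i' α' * Φ h (α' (Fin.last m)))
            = ∑ i' ∈ Finset.univ.filter
                (fun i' : Fin (m+1) → Fin P => StrictMono i' ∧ i' 0 = h),
                ∑ α' ∈ Finset.univ.filter
                  (fun α' : Fin (m+1) → Fin Q => StrictMono α'),
                  T i' α' * Φ h (α' (Fin.last m)) := by
          intro h
          have hset : ∀ i : Fin P,
              Finset.univ.filter
                (fun i' : Fin (m+1) → Fin P => StrictMono i' ∧ i' 0 = h ∧ i' (Fin.last m) = i)
              = (Finset.univ.filter
                  (fun i' : Fin (m+1) → Fin P => StrictMono i' ∧ i' 0 = h)).filter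
                  (fun i' => i' (Fin.last m) = i) := by
            intro i; ext i'; simp [Finset.mem_filter, and_assoc]
          simp only [hset]
          refine Finset.sum_fiberwise_of_maps_to ?_ _
          intro i' hi'
          obtain ⟨hsm, h0⟩ := (Finset.mem_filter.mp hi').2
          have := aux_le_s17 hsm (Fin.last m)
          simp only [Finset.mem_filter, Finset.mem_univ, true_and, Fin.val_last] at *
          omega
        simp only [e4]
        -- step 5: rewrite Φ h → Φ (i' 0), then collapse the h-sum
        have e5 : ∀ h : Fin P,
            (∑ i' ∈ Finset.univ.filter
                (fun i' : Fin (m+1) → Fin P => StrictMono i' ∧ i' 0 = h),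
                ∑ α' ∈ Finset.univ.filter
                  (fun α' : Fin (m+1) → Fin Q => StrictMono α'),
                  T i' α' * Φ h (α' (Fin.last m)))
            = ∑ i' ∈ Finset.univ.filter
                (fun i' : Fin (m+1) → Fin P => StrictMono i' ∧ i' 0 = h),
                ∑ α' ∈ Finset.univ.filter
                  (fun α' : Fin (m+1) → Fin Q => StrictMono α'),
                  T i' α' * Φ (i' 0) (α' (Fin.last m)) := by
          intro h
          refine Finset.sum_congr rfl fun i' hi' => ?_
          rw [(Finset.mem_filter.mp hi').2.2]
        simp only [e5]
        have hset : ∀ h : Fin P,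
            Finset.univ.filter
              (fun i' : Fin (m+1) → Fin P => StrictMono i' ∧ i' 0 = h)
            = (Finset.univ.filter
                (fun i' : Fin (m+1) → Fin P => StrictMono i')).filter
                (fun i' => i' 0 = h) := by
          intro h; ext i'; simp [Finset.mem_filter, and_assoc]
        simp only [hset]
        refine Finset.sum_fiberwise_of_maps_to ?_ _
        intro i' hi'
        have hsm := (Finset.mem_filter.mp hi').2
        have h1 := aux_le_s17 hsm (Fin.last m)
        have h2 := (i' (Fin.last m)).isLt
        simp only [Finset.mem_filter, Finset.mem_univ, true_and, Fin.val_last] at *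
        omega
    _ = ∑ i ∈ Finset.univ.filter (fun i : Fin (m+1) → Fin P => StrictMono i),
          ∑ α ∈ Finset.univ.filter (fun α : Fin (m+1) → Fin Q => StrictMono α),
            ∏ l : Fin (m+1), Φ (i l) (α l) * Φ (i (l + 1)) (α l) := by
        refine Finset.sum_congr rfl fun i _ => Finset.sum_congr rfl fun α _ => ?_
        rw [hT, Fin.prod_univ_castSucc]
        simp only [Fin.coeSucc_eq_succ, Fin.last_add_one]
        ring

lemma aux_snoc_sm {N k : ℕ} {i : Fin (k+1) → Fin N} {a : Fin N} :
    StrictMono (Fin.snoc i a : Fin (k+2) → Fin N) ↔ StrictMono i ∧ i (Fin.last k) < a := by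
  constructor
  · intro H
    refine ⟨?_, ?_⟩
    · have h := H.comp Fin.strictMono_castSucc
      have e : (fun j => (Fin.snoc i a : Fin (k+2) → Fin N) (Fin.castSucc j)) = i := by
        funext j; simp
      simpa [Function.comp, e] using h
    · have h := H (Fin.castSucc_lt_last (Fin.last k))
      simpa using h
  · rintro ⟨H1, H2⟩
    rw [Fin.strictMono_iff_lt_succ]
    intro j
    induction j using Fin.lastCases with
    | last => simpa [Fin.succ_last] using H2
    | cast j => rw [Fin.succ_castSucc]; simp only [Fin.snoc_castSucc]; exact H1 (Fin.castSucc_lt_succ : j.castSucc < j.succ)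

open scoped Classical in
lemma part1core {P Q r : ℕ} (Φ : Fin P → Fin Q → ℝ) (h a : Fin P) (b : Fin Q) :
    pathSum Φ (r+2) h a b
      = ∑ k ∈ Finset.univ.filter
          (fun k : Fin Q => r + 1 ≤ (k : ℕ) ∧ (k : ℕ) < (b : ℕ)),
          ∑ l ∈ Finset.univ.filter
            (fun l : Fin P => (h : ℕ) + (r + 1) ≤ (l : ℕ) ∧ (l : ℕ) < (a : ℕ)),
            pathSum Φ (r+1) h l k * Φ a k * Φ a b := by
  symm
  simp only [pathSum, Finset.sum_mul]
  set T : (Fin (r+2) → Fin P) → (Fin (r+2) → Fin Q) → ℝ := fun i' α' =>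
    (∏ l : Fin (r+1), Φ (i' l.castSucc) (α' l.castSucc) * Φ (i' l.succ) (α' l.castSucc)) *
      Φ (i' (Fin.last (r+1))) (α' (Fin.last (r+1))) with hT
  calc
    ∑ k ∈ Finset.univ.filter
        (fun k : Fin Q => r + 1 ≤ (k : ℕ) ∧ (k : ℕ) < (b : ℕ)),
      ∑ l ∈ Finset.univ.filter
          (fun l : Fin P => (h : ℕ) + (r + 1) ≤ (l : ℕ) ∧ (l : ℕ) < (a : ℕ)),
        ∑ i' ∈ Finset.univ.filter
            (fun i' : Fin (r+2) → Fin P =>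
              StrictMono i' ∧ i' 0 = h ∧ i' (Fin.last (r+1)) = l),
          ∑ α' ∈ Finset.univ.filter
              (fun α' : Fin (r+2) → Fin Q => StrictMono α' ∧ α' (Fin.last (r+1)) = k),
            T i' α' * Φ a k * Φ a b
      = ∑ i' ∈ Finset.univ.filter
            (fun i' : Fin (r+2) → Fin P =>
              StrictMono i' ∧ i' 0 = h ∧ (i' (Fin.last (r+1)) : ℕ) < (a : ℕ)),
          ∑ α' ∈ Finset.univ.filter
              (fun α' : Fin (r+2) → Fin Q =>
                StrictMono α' ∧ (α' (Fin.last (r+1)) : ℕ) < (b : ℕ)),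
            T i' α' * Φ a (α' (Fin.last (r+1))) * Φ a b := by
        -- rewrite Φ a k
        have e1 : ∀ (k : Fin Q) (i' : Fin (r+2) → Fin P),
            (∑ α' ∈ Finset.univ.filter
              (fun α' : Fin (r+2) → Fin Q => StrictMono α' ∧ α' (Fin.last (r+1)) = k),
              T i' α' * Φ a k * Φ a b)
            = ∑ α' ∈ Finset.univ.filter
              (fun α' : Fin (r+2) → Fin Q => StrictMono α' ∧ α' (Fin.last (r+1)) = k),
              T i' α' * Φ a (α' (Fin.last (r+1))) * Φ a b := by
          intro k i'
          refine Finset.sum_congr rfl fun α' hα' => ?_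
          rw [(Finset.mem_filter.mp hα').2.2]
        simp only [e1]
        -- swap k past l and i'
        rw [Finset.sum_comm]
        rw [Finset.sum_congr rfl fun l _ => Finset.sum_comm]
        -- collapse the k-sum
        have e3 : ∀ i' : Fin (r+2) → Fin P,
            (∑ k ∈ Finset.univ.filter
                (fun k : Fin Q => r + 1 ≤ (k : ℕ) ∧ (k : ℕ) < (b : ℕ)),
              ∑ α' ∈ Finset.univ.filter
                  (fun α' : Fin (r+2) → Fin Q => StrictMono α' ∧ α' (Fin.last (r+1)) = k),
                T i' α' * Φ a (α' (Fin.last (r+1))) * Φ a b)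
            = ∑ α' ∈ Finset.univ.filter
                  (fun α' : Fin (r+2) → Fin Q =>
                    StrictMono α' ∧ (α' (Fin.last (r+1)) : ℕ) < (b : ℕ)),
                T i' α' * Φ a (α' (Fin.last (r+1))) * Φ a b := by
          intro i'
          rw [Finset.sum_congr rfl (fun k hk => ?_)]
          · refine Finset.sum_fiberwise_of_maps_to (g := fun α' => α' (Fin.last (r+1))) ?_ _
            intro α' hα'
            obtain ⟨hsm, hlt⟩ := (Finset.mem_filter.mp hα').2
            have h1 := aux_le_s17 hsm (Fin.last (r+1))
            simp only [Finset.mem_filter, Finset.mem_univ, true_and, Fin.val_last] at *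
            omega
          · obtain ⟨hk1, hk2⟩ := (Finset.mem_filter.mp hk).2
            congr 1
            ext α'
            simp only [Finset.mem_filter, Finset.mem_univ, true_and]
            constructor
            · rintro ⟨hs, he⟩
              exact ⟨⟨hs, by rw [he]; exact hk2⟩, he⟩
            · rintro ⟨⟨hs, _⟩, he⟩
              exact ⟨hs, he⟩
        simp only [e3]
        -- collapse the l-sum
        rw [Finset.sum_congr rfl (fun l hl => ?_)]
        · refine Finset.sum_fiberwise_of_maps_to (g := fun i' => i' (Fin.last (r+1))) ?_ _
          intro i' hi'
          obtain ⟨hsm, h0, hlt⟩ := (Finset.mem_filter.mp hi').2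
          have h1 := aux_le_s17 hsm (Fin.last (r+1))
          rw [h0] at h1
          simp only [Finset.mem_filter, Finset.mem_univ, true_and, Fin.val_last] at *
          omega
        · obtain ⟨hl1, hl2⟩ := (Finset.mem_filter.mp hl).2
          congr 1
          ext i'
          simp only [Finset.mem_filter, Finset.mem_univ, true_and]
          constructor
          · rintro ⟨hs, h0, he⟩
            exact ⟨⟨hs, h0, by rw [he]; exact hl2⟩, he⟩
          · rintro ⟨⟨hs, h0, _⟩, he⟩
            exact ⟨hs, h0, he⟩
    _ = ∑ i ∈ Finset.univ.filter
            (fun i : Fin (r+3) → Fin P =>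
              StrictMono i ∧ i 0 = h ∧ i (Fin.last (r+2)) = a),
          ∑ α ∈ Finset.univ.filter
              (fun α : Fin (r+3) → Fin Q => StrictMono α ∧ α (Fin.last (r+2)) = b),
            (∏ l : Fin (r+2), Φ (i l.castSucc) (α l.castSucc) * Φ (i l.succ) (α l.castSucc)) *
              Φ (i (Fin.last (r+2))) (α (Fin.last (r+2))) := by
        rw [← Finset.sum_product', ← Finset.sum_product']
        refine Finset.sum_nbij'
          (fun p => (Fin.snoc p.1 a, Fin.snoc p.2 b))
          (fun p => (Fin.init p.1, Fin.init p.2)) ?_ ?_ ?_ ?_ ?_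
        · rintro ⟨i', α'⟩ hp
          simp only [Finset.mem_product, Finset.mem_filter, Finset.mem_univ, true_and] at hp ⊢
          obtain ⟨⟨hs1, h0, hlt⟩, hs2, hlt2⟩ := hp
          refine ⟨⟨aux_snoc_sm.mpr ⟨hs1, hlt⟩, ?_, ?_⟩, aux_snoc_sm.mpr ⟨hs2, hlt2⟩, ?_⟩
          · rw [show (0 : Fin (r+3)) = Fin.castSucc 0 from rfl, Fin.snoc_castSucc]; exact h0
          · exact Fin.snoc_last ..
          · exact Fin.snoc_last ..
        · rintro ⟨i, α⟩ hp
          simp only [Finset.mem_product, Finset.mem_filter, Finset.mem_univ, true_and] at hp ⊢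
          obtain ⟨⟨hs1, h0, hlast⟩, hs2, hlast2⟩ := hp
          refine ⟨⟨hs1.comp Fin.strictMono_castSucc, ?_, ?_⟩,
            hs2.comp Fin.strictMono_castSucc, ?_⟩
          · simpa [Fin.init] using h0
          · have := hs1 (Fin.castSucc_lt_last (Fin.last (r+1)))
            rw [hlast] at this
            exact this
          · have := hs2 (Fin.castSucc_lt_last (Fin.last (r+1)))
            rw [hlast2] at this
            exact this
        · rintro ⟨i', α'⟩ _
          simp [Fin.init_snoc]
        · rintro ⟨i, α⟩ hp
          simp only [Finset.mem_product, Finset.mem_filter, Finset.mem_univ, true_and] at hp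
          obtain ⟨⟨hs1, h0, hlast⟩, hs2, hlast2⟩ := hp
          have e1 : (Fin.snoc (Fin.init i) a : Fin (r+3) → Fin P) = i := by
            rw [← hlast]; exact Fin.snoc_init_self i
          have e2 : (Fin.snoc (Fin.init α) b : Fin (r+3) → Fin Q) = α := by
            rw [← hlast2]; exact Fin.snoc_init_self α
          simp [e1, e2]
        · rintro ⟨i', α'⟩ hp
          simp only
          rw [Fin.prod_univ_castSucc]
          simp only [Fin.succ_castSucc, Fin.snoc_castSucc, Fin.succ_last, Fin.snoc_last]
          rw [hT]
          ring

open scoped Classical in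
/-- (i) The partial sums `S^{(h)}_{ab}[m] = pathSum Φ (m-1) h a b`
satisfy the dynamic-programming recursion
`S^{(h)}_{ab}[m+1] = Σ_{k=m}^{b−1} Σ_{l=h+m−1}^{a−1} S^{(h)}_{lk}[m] Φ_{ak} Φ_{ab}`,
and (ii) the estimator `m̂(n)` satisfies
`m̂(n) = (1/(C(P,n)C(Q,n))) Σ_{h=1}^{P−n+1} Σ_{j=n}^{Q} Σ_{i=h+n−1}^{P} S^{(h)}_{ij}[n] Φ_{hj}`
(all indices here are `0`-based, shifting the paper's `1`-based ranges). -/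
theorem pathSum_recursion_and_estimator_eq
    (P Q n : ℕ) [NeZero n] (hn : 2 ≤ n) (hnP : n ≤ P) (hnQ : n ≤ Q)
    (Φ : Fin P → Fin Q → ℝ) :
    (∀ m : ℕ, 2 ≤ m → ∀ (h a : Fin P) (b : Fin Q),
      pathSum Φ m h a b
        = ∑ k ∈ Finset.univ.filter
            (fun k : Fin Q => m - 1 ≤ (k : ℕ) ∧ (k : ℕ) < (b : ℕ)),
            ∑ l ∈ Finset.univ.filter
              (fun l : Fin P => (h : ℕ) + (m - 1) ≤ (l : ℕ) ∧ (l : ℕ) < (a : ℕ)),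
              pathSum Φ (m - 1) h l k * Φ a k * Φ a b)
    ∧ ((P.choose n : ℝ) * (Q.choose n : ℝ))⁻¹ *
          ∑ i ∈ Finset.univ.filter (fun i : Fin n → Fin P => StrictMono i),
            ∑ a ∈ Finset.univ.filter (fun a : Fin n → Fin Q => StrictMono a),
              ∏ l : Fin n, Φ (i l) (a l) * Φ (i (l + 1)) (a l)
        = ((P.choose n : ℝ) * (Q.choose n : ℝ))⁻¹ *
            ∑ h ∈ Finset.univ.filter (fun h : Fin P => (h : ℕ) ≤ P - n),
              ∑ j ∈ Finset.univ.filter (fun j : Fin Q => n - 1 ≤ (j : ℕ)),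
                ∑ i ∈ Finset.univ.filter
                    (fun i : Fin P => (h : ℕ) + (n - 1) ≤ (i : ℕ)),
                  pathSum Φ (n - 1) h i j * Φ h j := by
  constructor
  · intro m hm h a b
    obtain ⟨r, rfl⟩ : ∃ r, m = r + 2 := ⟨m - 2, by omega⟩
    have e : r + 2 - 1 = r + 1 := rfl
    simp only [e]
    exact part1core Φ h a b
  · obtain ⟨m, rfl⟩ : ∃ m, n = m + 1 := ⟨n - 1, by omega⟩
    simp only [Nat.add_sub_cancel]
    congr 1
    exact part2core hnP hnQ Φ
end

section
/- Let ρ_X, ρ_W, ρ_ε be probability measures, φ : X × W → ℝ square-integrable with respect to ρ_X ⊗ ρ_W, and γ : X × W × E → ℝ a noise function satisfying ∫ γ(x,w,ε) dρ_ε(ε) = 0 for all (x,w) and ∫ γ(x,w,ε)² dρ_ε(ε) < ∞ (with γ square-integrable with respect to ρ_X ⊗ ρ_W ⊗ ρ_ε). Let x_1,…,x_n be i.i.d. ~ ρ_X, w_1,…,w_n i.i.d. ~ ρ_W, and ε_1,…,ε_n, ε′_1,…,ε′_n i.i.d. ~ ρ_ε, all 3n + n variables mutually independent. Then E[ ∏_{l=1}^{n}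 (φ(x_l,w_l) + γ(x_l,w_l,ε_l)) · (φ(x_{l+1},w_l) + γ(x_{l+1},w_l,ε′_l)) ] = m(n) with x_{n+1} = x_1; i.e., the cyclic-product estimator over disjoint indices remains unbiased under independent zero-mean additive noise. -/
open MeasureTheory

section AuxHelpers

variable {α β : Type*} [MeasurableSpace α] [MeasurableSpace β]

lemma aux_mp_fst (μ : Measure α) (ν : Measure β) [SFinite μ] [IsProbabilityMeasure ν] :
    MeasurePreserving Prod.fst (μ.prod ν) μ :=
  ⟨measurable_fst, by rw [Measure.map_fst_prod, measure_univ, one_smul]⟩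

lemma aux_mp_snd (μ : Measure α) (ν : Measure β) [IsProbabilityMeasure μ] [SFinite ν] :
    MeasurePreserving Prod.snd (μ.prod ν) ν :=
  ⟨measurable_snd, by rw [Measure.map_snd_prod, measure_univ, one_smul]⟩

lemma aux_L2mul {μ : Measure α} {f g : α → ℝ} (hf : MemLp f 2 μ) (hg : MemLp g 2 μ) :
    Integrable (fun a => f a * g a) μ := by
  have h : MemLp (f • g) 1 μ :=
    hg.smul hf
  rw [memLp_one_iff_integrable] at h
  exact h

lemma aux_prod_mem (μ : Measure α) [IsProbabilityMeasure μ] {h : α → ℝ} (hh : MemLp h 2 μ)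
    (n : ℕ) :
    MemLp (fun y : Fin n → α => ∏ l, h (y l)) 2 (Measure.pi fun _ => μ) := by
  letI : MeasureSpace α := ⟨μ⟩
  haveI : SigmaFinite (volume : Measure α) := inferInstanceAs (SigmaFinite μ)
  have hq : ∀ l : Fin n, Measure.QuasiMeasurePreserving (fun y : Fin n → α => y l)
      (Measure.pi fun _ => μ) μ := fun l =>
    ⟨measurable_pi_apply l, Measure.AbsolutelyContinuous.mk fun s hs h0 => by
      rw [Measure.map_apply (measurable_pi_apply l) hs]
      exact Measure.pi_eval_preimage_null _ h0⟩
  have hsm : AEStronglyMeasurable (fun y : Fin n → α => ∏ l, h (y l))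
      (Measure.pi fun _ => μ) :=
    Finset.aestronglyMeasurable_fun_prod _ fun l _ =>
      hh.aestronglyMeasurable.comp_quasiMeasurePreserving (hq l)
  refine (memLp_two_iff_integrable_sq hsm).mpr ?_
  have heq : (fun y : Fin n → α => (∏ l, h (y l)) ^ 2)
      = fun y : Fin n → α => ∏ l : Fin n, (fun z => h z ^ 2) (y l) := by
    funext y; rw [← Finset.prod_pow]
  rw [heq]
  exact Integrable.fintype_prod (f := fun _ : Fin n => fun z => h z ^ 2)
    (fun _ => hh.integrable_sq)

end AuxHelpers

section Pack

variable {A B C D : Type*} [MeasurableSpace A] [MeasurableSpace B] [MeasurableSpace C]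
  [MeasurableSpace D] {n : ℕ}

/-- Packing equivalence for triples. -/
def auxPack3 (B C D : Type*) [MeasurableSpace B] [MeasurableSpace C] [MeasurableSpace D]
    (n : ℕ) : (Fin n → B × C × D) ≃ᵐ (Fin n → B) × (Fin n → C) × (Fin n → D) :=
  (MeasurableEquiv.arrowProdEquivProdArrow B (C × D) (Fin n)).trans
    ((MeasurableEquiv.refl (Fin n → B)).prodCongr
      (MeasurableEquiv.arrowProdEquivProdArrow C D (Fin n)))

lemma auxPack3_mp (μB : Measure B) (μC : Measure C) (μD : Measure D)
    [IsProbabilityMeasure μB] [IsProbabilityMeasure μC] [IsProbabilityMeasure μD] :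
    MeasurePreserving (auxPack3 B C D n) (Measure.pi fun _ => μB.prod (μC.prod μD))
      ((Measure.pi fun _ : Fin n => μB).prod
        ((Measure.pi fun _ : Fin n => μC).prod (Measure.pi fun _ : Fin n => μD))) := by
  have h1 := measurePreserving_arrowProdEquivProdArrow C D (Fin n)
    (fun _ => μC) (fun _ => μD)
  have h2 := measurePreserving_arrowProdEquivProdArrow B (C × D) (Fin n)
    (fun _ => μB) (fun _ => μC.prod μD)
  exact ((MeasurePreserving.id _).prod h1).comp h2

/-- Packing equivalence for quadruples. -/
def auxPack4 (A B C D : Type*) [MeasurableSpace A] [MeasurableSpace B] [MeasurableSpace C]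
    [MeasurableSpace D] (n : ℕ) :
    (Fin n → A × B × C × D) ≃ᵐ (Fin n → A) × (Fin n → B) × (Fin n → C) × (Fin n → D) :=
  (MeasurableEquiv.arrowProdEquivProdArrow A (B × C × D) (Fin n)).trans
    ((MeasurableEquiv.refl (Fin n → A)).prodCongr (auxPack3 B C D n))

lemma auxPack4_mp (μA : Measure A) (μB : Measure B) (μC : Measure C) (μD : Measure D)
    [IsProbabilityMeasure μA] [IsProbabilityMeasure μB] [IsProbabilityMeasure μC]
    [IsProbabilityMeasure μD] :
    MeasurePreserving (auxPack4 A B C D n)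
      (Measure.pi fun _ => μA.prod (μB.prod (μC.prod μD)))
      ((Measure.pi fun _ : Fin n => μA).prod
        ((Measure.pi fun _ : Fin n => μB).prod
          ((Measure.pi fun _ : Fin n => μC).prod (Measure.pi fun _ : Fin n => μD)))) := by
  have h1 := auxPack3_mp (n := n) μB μC μD
  have h2 := measurePreserving_arrowProdEquivProdArrow A (B × C × D) (Fin n)
    (fun _ => μA) (fun _ => μB.prod (μC.prod μD))
  exact ((MeasurePreserving.id _).prod h1).comp h2

lemma aux_integral_pack3 (μB : Measure B) (μC : Measure C) (μD : Measure D)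
    [IsProbabilityMeasure μB] [IsProbabilityMeasure μC] [IsProbabilityMeasure μD]
    (g : Fin n → B × C × D → ℝ) :
    ∫ q : (Fin n → B) × (Fin n → C) × (Fin n → D), ∏ l, g l (q.1 l, q.2.1 l, q.2.2 l)
        ∂((Measure.pi fun _ : Fin n => μB).prod
          ((Measure.pi fun _ : Fin n => μC).prod (Measure.pi fun _ : Fin n => μD)))
      = ∏ l, ∫ r, g l r ∂(μB.prod (μC.prod μD)) := by
  rw [← (auxPack3_mp (n := n) μB μC μD).integral_comp'
    (fun q => ∏ l, g l (q.1 l, q.2.1 l, q.2.2 l))]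
  letI : MeasureSpace (B × C × D) := ⟨μB.prod (μC.prod μD)⟩
  haveI : SigmaFinite (volume : Measure (B × C × D)) :=
    inferInstanceAs (SigmaFinite (μB.prod (μC.prod μD)))
  exact integral_fintype_prod_eq_prod g

lemma aux_mem_pack4 (μA : Measure A) (μB : Measure B) (μC : Measure C) (μD : Measure D)
    [IsProbabilityMeasure μA] [IsProbabilityMeasure μB] [IsProbabilityMeasure μC]
    [IsProbabilityMeasure μD] {h : A × B × C × D → ℝ}
    (hh : MemLp h 2 (μA.prod (μB.prod (μC.prod μD)))) (n : ℕ) :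
    MemLp (fun p : (Fin n → A) × (Fin n → B) × (Fin n → C) × (Fin n → D) =>
        ∏ l, h (p.1 l, p.2.1 l, p.2.2.1 l, p.2.2.2 l)) 2
      ((Measure.pi fun _ : Fin n => μA).prod
        ((Measure.pi fun _ : Fin n => μB).prod
          ((Measure.pi fun _ : Fin n => μC).prod (Measure.pi fun _ : Fin n => μD)))) := by
  have hmp := auxPack4_mp (n := n) μA μB μC μD
  have hp := aux_prod_mem _ hh n
  rw [← hmp.map_eq, MeasurableEquiv.memLp_map_measure_iff]
  exact hp

end Pack

section Shift

lemma aux_shift_apply {X : Type*} [MeasurableSpace X] {n : ℕ} [NeZero n] (x : Fin n → X)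
    (l : Fin n) :
    MeasurableEquiv.piCongrLeft (fun _ : Fin n => X) (Equiv.subRight (1 : Fin n)) x l
      = x (l + 1) := by
  have h := MeasurableEquiv.piCongrLeft_apply_apply (Equiv.subRight (1 : Fin n))
    (β := fun _ : Fin n => X) x (l + 1)
  have h2 : (Equiv.subRight (1 : Fin n)) (l + 1) = l := by
    rw [Equiv.subRight_apply]; exact add_sub_cancel_right l 1
  rw [h2] at h
  exact h

end Shift
lemma aux_factor {W E : Type*} [MeasurableSpace W] [MeasurableSpace E]
    (ρW : Measure W) (ρE : Measure E) [IsProbabilityMeasure ρW] [IsProbabilityMeasure ρE]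
    (fa fb : W → ℝ) (ga gb : W × E → ℝ)
    (hfa : MemLp fa 2 ρW) (hfb : MemLp fb 2 ρW)
    (hga : MemLp ga 2 (ρW.prod ρE)) (hgb : MemLp gb 2 (ρW.prod ρE))
    (hgam : ∀ w, ∫ e, ga (w, e) ∂ρE = 0) (hgbm : ∀ w, ∫ e, gb (w, e) ∂ρE = 0) :
    ∫ r : W × E × E, (fa r.1 + ga (r.1, r.2.1)) * (fb r.1 + gb (r.1, r.2.2))
        ∂(ρW.prod (ρE.prod ρE)) = ∫ w, fa w * fb w ∂ρW := by
  have pW : MeasurePreserving (fun r : W × E × E => r.1) (ρW.prod (ρE.prod ρE)) ρW :=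
    aux_mp_fst ρW (ρE.prod ρE)
  have p1 : MeasurePreserving (fun r : W × E × E => (r.1, r.2.1)) (ρW.prod (ρE.prod ρE))
      (ρW.prod ρE) := (MeasurePreserving.id ρW).prod (aux_mp_fst ρE ρE)
  have p2 : MeasurePreserving (fun r : W × E × E => (r.1, r.2.2)) (ρW.prod (ρE.prod ρE))
      (ρW.prod ρE) := (MeasurePreserving.id ρW).prod (aux_mp_snd ρE ρE)
  have mfa : MemLp (fun r : W × E × E => fa r.1) 2 (ρW.prod (ρE.prod ρE)) :=
    hfa.comp_measurePreserving pW
  have mfb : MemLp (fun r : W × E × E => fb r.1) 2 (ρW.prod (ρE.prod ρE)) :=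
    hfb.comp_measurePreserving pW
  have mga : MemLp (fun r : W × E × E => ga (r.1, r.2.1)) 2 (ρW.prod (ρE.prod ρE)) :=
    hga.comp_measurePreserving p1
  have mgb : MemLp (fun r : W × E × E => gb (r.1, r.2.2)) 2 (ρW.prod (ρE.prod ρE)) :=
    hgb.comp_measurePreserving p2
  have I1 : Integrable (fun r : W × E × E => fa r.1 * fb r.1) (ρW.prod (ρE.prod ρE)) :=
    aux_L2mul mfa mfb
  have I2 : Integrable (fun r : W × E × E => fa r.1 * gb (r.1, r.2.2)) (ρW.prod (ρE.prod ρE)) :=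
    aux_L2mul mfa mgb
  have I3 : Integrable (fun r : W × E × E => ga (r.1, r.2.1) * fb r.1) (ρW.prod (ρE.prod ρE)) :=
    aux_L2mul mga mfb
  have I4 : Integrable (fun r : W × E × E => ga (r.1, r.2.1) * gb (r.1, r.2.2))
      (ρW.prod (ρE.prod ρE)) := aux_L2mul mga mgb
  have hexp : (fun r : W × E × E => (fa r.1 + ga (r.1, r.2.1)) * (fb r.1 + gb (r.1, r.2.2)))
      = fun r : W × E × E => fa r.1 * fb r.1 + (fa r.1 * gb (r.1, r.2.2) +
        (ga (r.1, r.2.1) * fb r.1 + ga (r.1, r.2.1) * gb (r.1, r.2.2))) := by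
    funext r; ring
  have I34 : Integrable (fun r : W × E × E =>
      ga (r.1, r.2.1) * fb r.1 + ga (r.1, r.2.1) * gb (r.1, r.2.2)) (ρW.prod (ρE.prod ρE)) :=
    I3.add I4
  have I234 : Integrable (fun r : W × E × E => fa r.1 * gb (r.1, r.2.2) +
      (ga (r.1, r.2.1) * fb r.1 + ga (r.1, r.2.1) * gb (r.1, r.2.2)))
      (ρW.prod (ρE.prod ρE)) := I2.add I34
  rw [hexp, integral_add I1 I234, integral_add I2 I34, integral_add I3 I4]
  have h1 : ∫ r : W × E × E, fa r.1 * fb r.1 ∂(ρW.prod (ρE.prod ρE))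
      = ∫ w, fa w * fb w ∂ρW := by
    have := integral_prod_mul (μ := ρW) (ν := ρE.prod ρE)
      (fun w => fa w * fb w) (fun _ => (1 : ℝ))
    simpa using this
  have h2 : ∫ r : W × E × E, fa r.1 * gb (r.1, r.2.2) ∂(ρW.prod (ρE.prod ρE)) = 0 := by
    rw [MeasureTheory.integral_prod _ I2]
    have hw : ∀ w, (∫ ee : E × E, fa w * gb (w, ee.2) ∂(ρE.prod ρE)) = 0 := by
      intro w
      rw [integral_const_mul]
      have h' := integral_prod_mul (μ := ρE) (ν := ρE) (fun _ => (1 : ℝ))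
        (fun e => gb (w, e))
      simp only [one_mul] at h'
      rw [h', hgbm w, mul_zero, mul_zero]
    simp only [hw, integral_zero]
  have h3 : ∫ r : W × E × E, ga (r.1, r.2.1) * fb r.1 ∂(ρW.prod (ρE.prod ρE)) = 0 := by
    rw [MeasureTheory.integral_prod _ I3]
    have hw : ∀ w, (∫ ee : E × E, ga (w, ee.1) * fb w ∂(ρE.prod ρE)) = 0 := by
      intro w
      have h' := integral_prod_mul (μ := ρE) (ν := ρE) (fun e => ga (w, e) * fb w)
        (fun _ => (1 : ℝ))
      simp only [mul_one] at h'
      rw [h', integral_mul_const, hgam w, zero_mul, zero_mul]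
    simp only [hw, integral_zero]
  have h4 : ∫ r : W × E × E, ga (r.1, r.2.1) * gb (r.1, r.2.2) ∂(ρW.prod (ρE.prod ρE)) = 0 := by
    rw [MeasureTheory.integral_prod _ I4]
    have hw : ∀ w, (∫ ee : E × E, ga (w, ee.1) * gb (w, ee.2) ∂(ρE.prod ρE)) = 0 := by
      intro w
      rw [integral_prod_mul (μ := ρE) (ν := ρE) (fun e => ga (w, e)) (fun e => gb (w, e)),
        hgam w, zero_mul]
    simp only [hw, integral_zero]
  rw [h1, h2, h3, h4]
  ring

/-- The cyclic-product estimator over disjoint indices remains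
unbiased under independent zero-mean additive noise: with noisy measurements
`Φ = φ(x,w) + γ(x,w,ε)`, the expected cyclic product still equals the `n`-th
spectral moment `m(n)`. -/
theorem expectation_noisy_cyclic_product_eq_spectral_moment
    {X W E : Type*} [MeasurableSpace X] [MeasurableSpace W] [MeasurableSpace E]
    (ρX : Measure X) (ρW : Measure W) (ρE : Measure E)
    [IsProbabilityMeasure ρX] [IsProbabilityMeasure ρW] [IsProbabilityMeasure ρE]
    (φ : X × W → ℝ) (hφ : MemLp φ 2 (ρX.prod ρW))
    (γ : X × W × E → ℝ) (hγ : MemLp γ 2 (ρX.prod (ρW.prod ρE)))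
    (hγmean : ∀ x w, ∫ e, γ (x, w, e) ∂ρE = 0)
    (hγsq : ∀ x w, Integrable (fun e => γ (x, w, e) ^ 2) ρE)
    (n : ℕ) [NeZero n] :
    ∫ p : (Fin n → X) × (Fin n → W) × (Fin n → E) × (Fin n → E),
        ∏ l : Fin n,
          (φ (p.1 l, p.2.1 l) + γ (p.1 l, p.2.1 l, p.2.2.1 l)) *
            (φ (p.1 (l + 1), p.2.1 l) + γ (p.1 (l + 1), p.2.1 l, p.2.2.2 l))
        ∂((Measure.pi fun _ => ρX).prod
            ((Measure.pi fun _ => ρW).prod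
              ((Measure.pi fun _ => ρE).prod (Measure.pi fun _ => ρE))))
      = ∫ x : Fin n → X,
          ∏ l : Fin n, ∫ w, φ (x l, w) * φ (x (l + 1), w) ∂ρW
          ∂(Measure.pi fun _ => ρX) := by
  classical
  -- measure-preserving projections on the one-sample space
  have mpXW : MeasurePreserving (fun z : X × W × E × E => (z.1, z.2.1))
      (ρX.prod (ρW.prod (ρE.prod ρE))) (ρX.prod ρW) :=
    (MeasurePreserving.id ρX).prod (aux_mp_fst ρW (ρE.prod ρE))
  have mp1 : MeasurePreserving (fun z : X × W × E × E => (z.1, z.2.1, z.2.2.1))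
      (ρX.prod (ρW.prod (ρE.prod ρE))) (ρX.prod (ρW.prod ρE)) :=
    (MeasurePreserving.id ρX).prod ((MeasurePreserving.id ρW).prod (aux_mp_fst ρE ρE))
  have mp2 : MeasurePreserving (fun z : X × W × E × E => (z.1, z.2.1, z.2.2.2))
      (ρX.prod (ρW.prod (ρE.prod ρE))) (ρX.prod (ρW.prod ρE)) :=
    (MeasurePreserving.id ρX).prod ((MeasurePreserving.id ρW).prod (aux_mp_snd ρE ρE))
  have memA : MemLp (fun z : X × W × E × E => φ (z.1, z.2.1) + γ (z.1, z.2.1, z.2.2.1)) 2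
      (ρX.prod (ρW.prod (ρE.prod ρE))) :=
    (hφ.comp_measurePreserving mpXW).add (hγ.comp_measurePreserving mp1)
  have memB : MemLp (fun z : X × W × E × E => φ (z.1, z.2.1) + γ (z.1, z.2.1, z.2.2.2)) 2
      (ρX.prod (ρW.prod (ρE.prod ρE))) :=
    (hφ.comp_measurePreserving mpXW).add (hγ.comp_measurePreserving mp2)
  -- L² bounds for the two half-products on the big product space
  have memPA : MemLp (fun p : (Fin n → X) × (Fin n → W) × (Fin n → E) × (Fin n → E) =>
      ∏ l, (φ (p.1 l, p.2.1 l) + γ (p.1 l, p.2.1 l, p.2.2.1 l))) 2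
      ((Measure.pi fun _ : Fin n => ρX).prod
        ((Measure.pi fun _ : Fin n => ρW).prod
          ((Measure.pi fun _ : Fin n => ρE).prod (Measure.pi fun _ : Fin n => ρE)))) :=
    aux_mem_pack4 ρX ρW ρE ρE memA n
  have memPB0 : MemLp (fun p : (Fin n → X) × (Fin n → W) × (Fin n → E) × (Fin n → E) =>
      ∏ l, (φ (p.1 l, p.2.1 l) + γ (p.1 l, p.2.1 l, p.2.2.2 l))) 2
      ((Measure.pi fun _ : Fin n => ρX).prod
        ((Measure.pi fun _ : Fin n => ρW).prod
          ((Measure.pi fun _ : Fin n => ρE).prod (Measure.pi fun _ : Fin n => ρE)))) :=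
    aux_mem_pack4 ρX ρW ρE ρE memB n
  -- shift the X-coordinates cyclically
  have hSe : MeasurePreserving
      (MeasurableEquiv.piCongrLeft (fun _ : Fin n => X) (Equiv.subRight (1 : Fin n)))
      (Measure.pi fun _ : Fin n => ρX) (Measure.pi fun _ : Fin n => ρX) :=
    measurePreserving_piCongrLeft (fun _ => ρX) (Equiv.subRight (1 : Fin n))
  have hSE : MeasurePreserving
      (Prod.map
        (MeasurableEquiv.piCongrLeft (fun _ : Fin n => X) (Equiv.subRight (1 : Fin n)))
        (id : (Fin n → W) × (Fin n → E) × (Fin n → E) →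
          (Fin n → W) × (Fin n → E) × (Fin n → E)))
      ((Measure.pi fun _ : Fin n => ρX).prod
        ((Measure.pi fun _ : Fin n => ρW).prod
          ((Measure.pi fun _ : Fin n => ρE).prod (Measure.pi fun _ : Fin n => ρE))))
      ((Measure.pi fun _ : Fin n => ρX).prod
        ((Measure.pi fun _ : Fin n => ρW).prod
          ((Measure.pi fun _ : Fin n => ρE).prod (Measure.pi fun _ : Fin n => ρE)))) :=
    hSe.prod (MeasurePreserving.id _)
  have memPB : MemLp (fun p : (Fin n → X) × (Fin n → W) × (Fin n → E) × (Fin n → E) =>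
      ∏ l, (φ (p.1 (l + 1), p.2.1 l) + γ (p.1 (l + 1), p.2.1 l, p.2.2.2 l))) 2
      ((Measure.pi fun _ : Fin n => ρX).prod
        ((Measure.pi fun _ : Fin n => ρW).prod
          ((Measure.pi fun _ : Fin n => ρE).prod (Measure.pi fun _ : Fin n => ρE)))) := by
    have h := memPB0.comp_measurePreserving hSE
    have he : ((fun p : (Fin n → X) × (Fin n → W) × (Fin n → E) × (Fin n → E) =>
        ∏ l, (φ (p.1 l, p.2.1 l) + γ (p.1 l, p.2.1 l, p.2.2.2 l))) ∘
          (Prod.map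
            (MeasurableEquiv.piCongrLeft (fun _ : Fin n => X) (Equiv.subRight (1 : Fin n)))
            id))
        = fun p : (Fin n → X) × (Fin n → W) × (Fin n → E) × (Fin n → E) =>
          ∏ l, (φ (p.1 (l + 1), p.2.1 l) + γ (p.1 (l + 1), p.2.1 l, p.2.2.2 l)) := by
      funext p
      simp only [Function.comp_apply, Prod.map_fst, Prod.map_snd, id_eq]
      refine Finset.prod_congr rfl fun l _ => ?_
      rw [aux_shift_apply]
    rw [he] at h
    exact h
  -- integrability of the full integrand
  have hFint : Integrable (fun p : (Fin n → X) × (Fin n → W) × (Fin n → E) × (Fin n → E) =>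
      ∏ l : Fin n,
        (φ (p.1 l, p.2.1 l) + γ (p.1 l, p.2.1 l, p.2.2.1 l)) *
          (φ (p.1 (l + 1), p.2.1 l) + γ (p.1 (l + 1), p.2.1 l, p.2.2.2 l)))
      ((Measure.pi fun _ : Fin n => ρX).prod
        ((Measure.pi fun _ : Fin n => ρW).prod
          ((Measure.pi fun _ : Fin n => ρE).prod (Measure.pi fun _ : Fin n => ρE)))) := by
    have heq : (fun p : (Fin n → X) × (Fin n → W) × (Fin n → E) × (Fin n → E) =>
        ∏ l : Fin n,
          (φ (p.1 l, p.2.1 l) + γ (p.1 l, p.2.1 l, p.2.2.1 l)) *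
            (φ (p.1 (l + 1), p.2.1 l) + γ (p.1 (l + 1), p.2.1 l, p.2.2.2 l)))
        = fun p =>
          (∏ l, (φ (p.1 l, p.2.1 l) + γ (p.1 l, p.2.1 l, p.2.2.1 l))) *
            ∏ l, (φ (p.1 (l + 1), p.2.1 l) + γ (p.1 (l + 1), p.2.1 l, p.2.2.2 l)) := by
      funext p
      rw [← Finset.prod_mul_distrib]
    rw [heq]
    exact aux_L2mul memPA memPB
  rw [MeasureTheory.integral_prod _ hFint]
  -- a.e. goodness of slices
  have hgoodφ : ∀ᵐ a ∂ρX, MemLp (fun w => φ (a, w)) 2 ρW := by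
    have h1 := hφ.aestronglyMeasurable.prodMk_left
    have h2 := (hφ.integrable_sq).prod_right_ae
    filter_upwards [h1, h2] with a ha1 ha2
    exact (memLp_two_iff_integrable_sq ha1).mpr ha2
  have hgoodγ : ∀ᵐ a ∂ρX, MemLp (fun r : W × E => γ (a, r)) 2 (ρW.prod ρE) := by
    have h1 := hγ.aestronglyMeasurable.prodMk_left
    have h2 := (hγ.integrable_sq).prod_right_ae
    filter_upwards [h1, h2] with a ha1 ha2
    exact (memLp_two_iff_integrable_sq ha1).mpr ha2
  have hae : ∀ᵐ x ∂(Measure.pi fun _ : Fin n => ρX), ∀ l : Fin n,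
      MemLp (fun w => φ (x l, w)) 2 ρW ∧
        MemLp (fun r : W × E => γ (x l, r)) 2 (ρW.prod ρE) := by
    rw [MeasureTheory.ae_all_iff]
    intro l
    exact (Measure.tendsto_eval_ae_ae (μ := fun _ : Fin n => ρX) (i := l)).eventually (hgoodφ.and hgoodγ)
  refine integral_congr_ae ?_
  filter_upwards [hae] with x hx
  have key := aux_integral_pack3 (n := n) ρW ρE ρE
    (fun l (r : W × E × E) =>
      (φ (x l, r.1) + γ (x l, r.1, r.2.1)) * (φ (x (l + 1), r.1) + γ (x (l + 1), r.1, r.2.2)))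
  rw [key]
  refine Finset.prod_congr rfl fun l _ => ?_
  exact aux_factor ρW ρE (fun w => φ (x l, w)) (fun w => φ (x (l + 1), w))
    (fun r => γ (x l, r)) (fun r => γ (x (l + 1), r))
    (hx l).1 (hx (l + 1)).1 (hx l).2 (hx (l + 1)).2
    (fun w => hγmean (x l) w) (fun w => hγmean (x (l + 1)) w)
end
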